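/- arXiv:1606.04157 — 10 statements merged into one kernel-verified Lean document; each statement's English description precedes it below -/
import Mathlib

section
/- Let π be an optimal schedule for an instance of (1|pMA|Σ C_i) with Σ_{i=1}^{n} δ_i > ML0, and let k = k(π) be its separation index. Then the jobs scheduled before the separation job are in shortest-processing-time-first (SPT) order: p_{π_1} ≤ p_{π_2} ≤ … ≤ p_{π_{k−1}}. -/
/-- Completion time of the `i`-th scheduled job in the normalized form of
`(1 | pMA | Σ C_i)`: `C_i(π) = Σ_{j ≤ i} p_{π_j} + max(0, Σ_{j ≤ i} δ_{π_j} - ML0)`. -/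
def complTime {n : ℕ} (p δ : Fin n → ℝ) (ML0 : ℝ) (π : Equiv.Perm (Fin n)) (i : Fin n) : ℝ :=
  (∑ j ∈ Finset.Iic i, p (π j)) + max 0 ((∑ j ∈ Finset.Iic i, δ (π j)) - ML0)

/-- Total completion time `F(π) = Σ_i C_i(π)`. -/
def totalCompl {n : ℕ} (p δ : Fin n → ℝ) (ML0 : ℝ) (π : Equiv.Perm (Fin n)) : ℝ :=
  ∑ i : Fin n, complTime p δ ML0 π i

lemma sum_swap_Iic {n : ℕ} (f : Fin n → ℝ) (i j m : Fin n) (hij : i ≤ j) :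
    ∑ l ∈ Finset.Iic m, f (Equiv.swap i j l) =
      (∑ l ∈ Finset.Iic m, f l) + (if i ≤ m ∧ m < j then f j - f i else 0) := by
  by_cases hjm : j ≤ m
  · rw [if_neg (by simp [not_lt.mpr hjm]), add_zero]
    apply Equiv.Perm.sum_comp
    intro a ha
    simp only [Set.mem_setOf_eq] at ha
    have : a = i ∨ a = j := by
      by_contra hc
      push_neg at hc
      exact ha (Equiv.swap_apply_of_ne_of_ne hc.1 hc.2)
    rcases this with rfl | rfl
    · exact Finset.mem_Iic.mpr (le_trans hij hjm)
    · exact Finset.mem_Iic.mpr hjm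
  · push_neg at hjm
    by_cases him : m < i
    · rw [if_neg (by simp [not_le.mpr him]), add_zero]
      apply Finset.sum_congr rfl
      intro a ha
      rw [Finset.mem_Iic] at ha
      rw [Equiv.swap_apply_of_ne_of_ne (ne_of_lt (lt_of_le_of_lt ha him))
        (ne_of_lt (lt_of_le_of_lt ha (lt_of_lt_of_le him hij)))]
    · push_neg at him
      rw [if_pos ⟨him, hjm⟩]
      have hi : i ∈ Finset.Iic m := Finset.mem_Iic.mpr him
      rw [← Finset.add_sum_erase _ _ hi, ← Finset.add_sum_erase _ (f ·) hi]
      rw [Equiv.swap_apply_left]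
      have : ∑ l ∈ (Finset.Iic m).erase i, f (Equiv.swap i j l) =
          ∑ l ∈ (Finset.Iic m).erase i, f l := by
        apply Finset.sum_congr rfl
        intro a ha
        rw [Finset.mem_erase, Finset.mem_Iic] at ha
        exact congrArg f (Equiv.swap_apply_of_ne_of_ne ha.1
          (ne_of_lt (lt_of_le_of_lt ha.2 hjm)))
      rw [this]; ring

/-- in an optimal schedule `π`, the jobs scheduled before the separation
job `π_k` are in SPT (shortest processing time first) order. -/
theorem stmt0 (n : ℕ) (p δ : Fin n → ℝ) (ML0 : ℝ)
    (hp : ∀ i, 0 ≤ p i) (hδ : ∀ i, 0 ≤ δ i) (hML0 : 0 ≤ ML0)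
    (htot : ML0 < ∑ i, δ i)
    (π : Equiv.Perm (Fin n))
    (hopt : ∀ σ : Equiv.Perm (Fin n), totalCompl p δ ML0 π ≤ totalCompl p δ ML0 σ)
    (k : Fin n)
    (hk : ML0 < ∑ j ∈ Finset.Iic k, δ (π j))
    (hkmin : ∀ i : Fin n, i < k → (∑ j ∈ Finset.Iic i, δ (π j)) ≤ ML0) :
    ∀ i j : Fin n, i ≤ j → j < k → p (π i) ≤ p (π j) := by
  intro i j hij hjk
  rcases eq_or_lt_of_le hij with rfl | hij'
  · exact le_refl _
  set σ : Equiv.Perm (Fin n) := π * Equiv.swap i j with hσ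
  have key : ∀ m : Fin n, complTime p δ ML0 σ m =
      complTime p δ ML0 π m + (if i ≤ m ∧ m < j then p (π j) - p (π i) else 0) := by
    intro m
    have hps := sum_swap_Iic (fun l => p (π l)) i j m hij
    have hδs := sum_swap_Iic (fun l => δ (π l)) i j m hij
    simp only [complTime, hσ, Equiv.Perm.mul_apply]
    rw [hps, hδs]
    by_cases hm : i ≤ m ∧ m < j
    · simp only [if_pos hm]
      have hmk : m < k := lt_trans hm.2 hjk
      have hold : ∑ l ∈ Finset.Iic m, δ (π l) ≤ ML0 := hkmin m hmk
      have hnew : (∑ l ∈ Finset.Iic m, δ (π l)) + (δ (π j) - δ (π i)) ≤ ML0 := by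
        have hi : i ∈ Finset.Iic m := Finset.mem_Iic.mpr hm.1
        have hj : j ∈ Finset.Iic j := Finset.mem_Iic.mpr le_rfl
        have hsub : (Finset.Iic m).erase i ⊆ (Finset.Iic j).erase j := by
          intro a ha
          rw [Finset.mem_erase, Finset.mem_Iic] at *
          exact ⟨ne_of_lt (lt_of_le_of_lt ha.2 hm.2), le_of_lt (lt_of_le_of_lt ha.2 hm.2)⟩
        have h1 : ∑ l ∈ (Finset.Iic m).erase i, δ (π l) ≤
            ∑ l ∈ (Finset.Iic j).erase j, δ (π l) :=
          Finset.sum_le_sum_of_subset_of_nonneg hsub (fun a _ _ => hδ (π a))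
        have h2 : (∑ l ∈ Finset.Iic m, δ (π l)) - δ (π i) =
            ∑ l ∈ (Finset.Iic m).erase i, δ (π l) := by
          rw [← Finset.add_sum_erase _ _ hi]; ring
        have h3 : (∑ l ∈ (Finset.Iic j).erase j, δ (π l)) + δ (π j) =
            ∑ l ∈ Finset.Iic j, δ (π l) := by
          rw [← Finset.add_sum_erase _ _ hj]; ring
        have h4 : ∑ l ∈ Finset.Iic j, δ (π l) ≤ ML0 := hkmin j hjk
        linarith
      have e1 : (0:ℝ) ⊔ ((∑ l ∈ Finset.Iic m, δ (π l)) + (δ (π j) - δ (π i)) - ML0) = 0 :=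
        max_eq_left (by linarith)
      have e2 : (0:ℝ) ⊔ ((∑ l ∈ Finset.Iic m, δ (π l)) - ML0) = 0 :=
        max_eq_left (by linarith)
      rw [e1, e2]
      ring
    · simp only [if_neg hm]
      ring
  have htc : totalCompl p δ ML0 σ = totalCompl p δ ML0 π +
      ∑ m : Fin n, (if i ≤ m ∧ m < j then p (π j) - p (π i) else 0) := by
    simp only [totalCompl, key, Finset.sum_add_distrib]
  have hS : (0:ℝ) ≤ ∑ m : Fin n, (if i ≤ m ∧ m < j then p (π j) - p (π i) else 0) := by
    have := hopt σ
    linarith [htc ▸ this]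
  by_contra hcon
  push_neg at hcon
  have hile : ∀ m : Fin n, (if i ≤ m ∧ m < j then p (π j) - p (π i) else 0) ≤ 0 := by
    intro m; split
    · linarith
    · exact le_refl 0
  have hsingle := Finset.single_le_sum
    (f := fun m : Fin n => -(if i ≤ m ∧ m < j then p (π j) - p (π i) else 0))
    (fun m _ => by simpa using hile m) (Finset.mem_univ i)
  rw [if_pos (⟨le_rfl, hij'⟩ : i ≤ i ∧ i < j), Finset.sum_neg_distrib] at hsingle
  linarith
end

section
/- Let π be an optimal schedule for an instance of (1|pMA|Σ C_i) with Σ_{i=1}^{n} δ_i > ML0, and let k = k(π) be its separation index. Then the jobs scheduled after the separation job are in shortest sum-of-processing-time-and-deterioration first (SSF) order: p_{π_{k+1}} + δ_{π_{k+1}} ≤ p_{π_{k+2}} + δ_{π_{k+2}} ≤ … ≤ p_{π_n} + δ_{π_n}. -/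
/-- in an optimal schedule `π`, the jobs scheduled after the separation
job `π_k` are in SSF (shortest sum of processing time and deterioration first) order. -/
theorem stmt1 (n : ℕ) (p δ : Fin n → ℝ) (ML0 : ℝ)
    (hp : ∀ i, 0 ≤ p i) (hδ : ∀ i, 0 ≤ δ i) (hML0 : 0 ≤ ML0)
    (htot : ML0 < ∑ i, δ i)
    (π : Equiv.Perm (Fin n))
    (hopt : ∀ σ : Equiv.Perm (Fin n), totalCompl p δ ML0 π ≤ totalCompl p δ ML0 σ)
    (k : Fin n)
    (hk : ML0 < ∑ j ∈ Finset.Iic k, δ (π j))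
    (hkmin : ∀ i : Fin n, i < k → (∑ j ∈ Finset.Iic i, δ (π j)) ≤ ML0) :
    ∀ i j : Fin n, k < i → i ≤ j → p (π i) + δ (π i) ≤ p (π j) + δ (π j) := by
  set f : Fin n → ℝ := fun m => p (π m) + δ (π m) with hf
  have adj : ∀ a b : Fin n, k < a → (b : ℕ) = (a : ℕ) + 1 → f a ≤ f b := by
    intro a b hka hab
    have hab' : a < b := by rw [Fin.lt_def]; omega
    have hne : a ≠ b := ne_of_lt hab'
    set σ : Equiv.Perm (Fin n) := (Equiv.swap a b).trans π with hσ
    have hσapp : ∀ m, σ m = π (Equiv.swap a b m) := fun m => rfl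
    have hsum : ∀ (g : Fin n → ℝ) (m : Fin n), m ≠ a →
        ∑ j ∈ Finset.Iic m, g (σ j) = ∑ j ∈ Finset.Iic m, g (π j) := by
      intro g m hm
      refine (Finset.sum_equiv (Equiv.swap a b) ?_ ?_).symm
      · intro x
        have hma : (m : ℕ) ≠ (a : ℕ) := fun h => hm (Fin.ext h)
        simp only [Finset.mem_Iic]
        rcases eq_or_ne x a with rfl | hxa
        · rw [Equiv.swap_apply_left, Fin.le_def, Fin.le_def]; omega
        · rcases eq_or_ne x b with rfl | hxb
          · rw [Equiv.swap_apply_right, Fin.le_def, Fin.le_def]; omega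
          · rw [Equiv.swap_apply_of_ne_of_ne hxa hxb]
      · intro x _
        rw [hσapp, Equiv.swap_apply_self]
    have hnot : a ∉ Finset.Iio a := by simp
    have hIic : Finset.Iic a = insert a (Finset.Iio a) := (Finset.Iio_insert a).symm
    have hsσ : ∀ g : Fin n → ℝ, ∑ j ∈ Finset.Iic a, g (σ j)
        = g (π b) + ∑ j ∈ Finset.Iio a, g (π j) := by
      intro g
      rw [hIic, Finset.sum_insert hnot]
      congr 1
      · rw [hσapp, Equiv.swap_apply_left]
      · refine Finset.sum_congr rfl fun x hx => ?_
        rw [Finset.mem_Iio] at hx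
        rw [hσapp, Equiv.swap_apply_of_ne_of_ne (ne_of_lt hx) (ne_of_lt (hx.trans hab'))]
    have hsπ : ∀ g : Fin n → ℝ, ∑ j ∈ Finset.Iic a, g (π j)
        = g (π a) + ∑ j ∈ Finset.Iio a, g (π j) := by
      intro g
      rw [hIic, Finset.sum_insert hnot]
    have hδpos : ML0 ≤ ∑ j ∈ Finset.Iio a, δ (π j) := by
      have hsub : Finset.Iic k ⊆ Finset.Iio a := by
        intro x hx
        rw [Finset.mem_Iic] at hx
        rw [Finset.mem_Iio]
        exact lt_of_le_of_lt hx hka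
      calc ML0 ≤ ∑ j ∈ Finset.Iic k, δ (π j) := le_of_lt hk
        _ ≤ ∑ j ∈ Finset.Iio a, δ (π j) :=
          Finset.sum_le_sum_of_subset_of_nonneg hsub (fun i _ _ => hδ _)
    have h1 : (0 : ℝ) ≤ δ (π b) + ∑ j ∈ Finset.Iio a, δ (π j) - ML0 := by
      have := hδ (π b); linarith
    have h2 : (0 : ℝ) ≤ δ (π a) + ∑ j ∈ Finset.Iio a, δ (π j) - ML0 := by
      have := hδ (π a); linarith
    have hdiff : totalCompl p δ ML0 σ - totalCompl p δ ML0 π = f b - f a := by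
      unfold totalCompl
      rw [← Finset.sum_sub_distrib, Finset.sum_eq_single a]
      · unfold complTime
        rw [hsσ p, hsσ δ, hsπ p, hsπ δ]
        rw [max_eq_right (by linarith : (0:ℝ) ≤ δ (π b) + (∑ j ∈ Finset.Iio a, δ (π j)) - ML0),
            max_eq_right (by linarith : (0:ℝ) ≤ δ (π a) + (∑ j ∈ Finset.Iio a, δ (π j)) - ML0)]
        simp only [hf]
        ring
      · intro i _ hi
        unfold complTime
        rw [hsum p i hi, hsum δ i hi]
        ring
      · intro h
        exact absurd (Finset.mem_univ a) h
    have := hopt σ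
    have : 0 ≤ f b - f a := by linarith [hdiff]
    linarith
  have main : ∀ m : ℕ, ∀ i j : Fin n, k < i → (j : ℕ) = (i : ℕ) + m → f i ≤ f j := by
    intro m
    induction m with
    | zero =>
      intro i j _ h
      have : i = j := Fin.ext (by omega)
      rw [this]
    | succ m ih =>
      intro i j hki hval
      have hjn : (i : ℕ) + m < n := by omega
      set j' : Fin n := ⟨(i : ℕ) + m, by omega⟩ with hj'
      have h1 : f i ≤ f j' := ih i j' hki rfl
      have hkj' : k < j' := by
        rw [Fin.lt_def] at hki ⊢
        simp only [hj']
        omega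
      have h2 : f j' ≤ f j := adj j' j hkj' (by simp [hj']; omega)
      exact h1.trans h2
  intro i j hki hij
  exact main ((j : ℕ) - (i : ℕ)) i j hki (by rw [Fin.le_def] at hij; omega)
end

section
/- Let π be an optimal schedule for an instance of (1|pMA|Σ C_i) with Σ_{i=1}^{n} δ_i > ML0, let k = k(π) be its separation index, and let δ = ML0 − Σ_{j=1}^{k−1} δ_{π_j}. Then the jobs adjacent to the separation job satisfy: if k ≥ 2 then p_{π_{k−1}} + min(δ_{π_{k−1}}, δ_{π_k} − δ) ≤ p_{π_k} + (δ_{π_k} − δ), and if k ≤ n−1 then p_{π_k} + (δ_{π_k} − δ) ≤ p_{π_{k+1}} + max(0, δ_{π_{k+1}} − δ). -/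
open Finset

lemma sum_Iic_swap_ne {n : ℕ} (f : Fin n → ℝ) (π : Equiv.Perm (Fin n)) (a b j : Fin n)
    (hab : (a : ℕ) + 1 = b) (hj : j ≠ a) :
    ∑ m ∈ Iic j, f ((π * Equiv.swap a b) m) = ∑ m ∈ Iic j, f (π m) := by
  have hj' : (j : ℕ) ≠ a := fun h => hj (Fin.ext h)
  refine Finset.sum_equiv (Equiv.swap a b) (fun m => ?_) (fun m hm => ?_)
  · rcases eq_or_ne m a with rfl | hma
    · simp only [Equiv.swap_apply_left, mem_Iic, Fin.le_def]; omega
    rcases eq_or_ne m b with rfl | hmb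
    · simp only [Equiv.swap_apply_right, mem_Iic, Fin.le_def]; omega
    · rw [Equiv.swap_apply_of_ne_of_ne hma hmb]
  · simp [Equiv.Perm.mul_apply]

lemma sum_Iic_swap_eq {n : ℕ} (f : Fin n → ℝ) (π : Equiv.Perm (Fin n)) (a b : Fin n)
    (hab : (a : ℕ) + 1 = b) :
    ∑ m ∈ Iic a, f ((π * Equiv.swap a b) m)
      = (∑ m ∈ Iic a, f (π m)) - f (π a) + f (π b) := by
  have h1 : ∀ m ∈ Iio a, f ((π * Equiv.swap a b) m) = f (π m) := by
    intro m hm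
    rw [mem_Iio, Fin.lt_def] at hm
    have hma : m ≠ a := fun h => by omega
    have hmb : m ≠ b := fun h => by rw [h] at hm; omega
    simp [Equiv.Perm.mul_apply, Equiv.swap_apply_of_ne_of_ne hma hmb]
  have h2 : ((π * Equiv.swap a b) a) = π b := by
    simp [Equiv.Perm.mul_apply]
  have e1 := Finset.sum_erase_add (Iic a) (fun m => f ((π * Equiv.swap a b) m)) (mem_Iic.2 le_rfl)
  have e2 := Finset.sum_erase_add (Iic a) (fun m => f (π m)) (mem_Iic.2 le_rfl)
  rw [Finset.Iic_erase] at e1 e2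
  have h3 : ∑ m ∈ Iio a, f ((π * Equiv.swap a b) m) = ∑ m ∈ Iio a, f (π m) :=
    Finset.sum_congr rfl h1
  rw [← e1, ← e2]
  rw [h2, h3]; ring

/-- Key exchange inequality from optimality, for adjacent positions `a, a+1 = b`. -/
lemma key_ineq {n : ℕ} (p δ : Fin n → ℝ) (ML0 : ℝ) (π : Equiv.Perm (Fin n))
    (hopt : ∀ σ : Equiv.Perm (Fin n), totalCompl p δ ML0 π ≤ totalCompl p δ ML0 σ)
    (a b : Fin n) (hab : (a : ℕ) + 1 = b) :
    p (π a) + max 0 ((∑ j ∈ Iic a, δ (π j)) - ML0) ≤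
      p (π b) + max 0 ((∑ j ∈ Iic a, δ (π j)) - δ (π a) + δ (π b) - ML0) := by
  set σ := π * Equiv.swap a b with hσ
  have hdiff : totalCompl p δ ML0 σ - totalCompl p δ ML0 π
      = complTime p δ ML0 σ a - complTime p δ ML0 π a := by
    rw [totalCompl, totalCompl, ← Finset.sum_sub_distrib]
    refine Finset.sum_eq_single_of_mem a (Finset.mem_univ a) (fun j _ hja => ?_)
    have h1 := sum_Iic_swap_ne p π a b j hab hja
    have h2 := sum_Iic_swap_ne δ π a b j hab hja
    simp only [Equiv.Perm.mul_apply] at h1 h2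
    simp [complTime, hσ, Equiv.Perm.mul_apply, h1, h2]
  have hle := hopt σ
  have h0 : complTime p δ ML0 π a ≤ complTime p δ ML0 σ a := by linarith
  have hca : complTime p δ ML0 σ a
      = ((∑ j ∈ Iic a, p (π j)) - p (π a) + p (π b))
        + max 0 ((∑ j ∈ Iic a, δ (π j)) - δ (π a) + δ (π b) - ML0) := by
    rw [complTime, sum_Iic_swap_eq p π a b hab, sum_Iic_swap_eq δ π a b hab]
  rw [complTime, hca] at h0
  linarith

/-- in an optimal schedule `π` with separation index `k` and remaining
level `δrem = ML0 - Σ_{j<k} δ_{π_j}`, the jobs adjacent to the separation job satisfy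
`p_{π_{k-1}} + min(δ_{π_{k-1}}, δ_{π_k} - δrem) ≤ p_{π_k} + (δ_{π_k} - δrem)` (when a
predecessor exists) and
`p_{π_k} + (δ_{π_k} - δrem) ≤ p_{π_{k+1}} + max(0, δ_{π_{k+1}} - δrem)` (when a
successor exists). -/
theorem stmt2 (n : ℕ) (p δ : Fin n → ℝ) (ML0 : ℝ)
    (hp : ∀ i, 0 ≤ p i) (hδ : ∀ i, 0 ≤ δ i) (hML0 : 0 ≤ ML0)
    (htot : ML0 < ∑ i, δ i)
    (π : Equiv.Perm (Fin n))
    (hopt : ∀ σ : Equiv.Perm (Fin n), totalCompl p δ ML0 π ≤ totalCompl p δ ML0 σ)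
    (k : Fin n)
    (hk : ML0 < ∑ j ∈ Finset.Iic k, δ (π j))
    (hkmin : ∀ i : Fin n, i < k → (∑ j ∈ Finset.Iic i, δ (π j)) ≤ ML0)
    (δrem : ℝ) (hδrem : δrem = ML0 - ∑ j ∈ Finset.Iio k, δ (π j)) :
    (∀ i : Fin n, (i : ℕ) + 1 = (k : ℕ) →
      p (π i) + min (δ (π i)) (δ (π k) - δrem) ≤ p (π k) + (δ (π k) - δrem)) ∧
    (∀ i : Fin n, (i : ℕ) = (k : ℕ) + 1 →
      p (π k) + (δ (π k) - δrem) ≤ p (π i) + max 0 (δ (π i) - δrem)) := by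
  constructor
  · intro i hi
    have hik : i < k := by rw [Fin.lt_def]; omega
    have hS : (∑ j ∈ Iic i, δ (π j)) ≤ ML0 := hkmin i hik
    have hIio : Finset.Iio k = Finset.Iic i := by
      ext m; simp only [mem_Iio, mem_Iic, Fin.lt_def, Fin.le_def]; omega
    have hδrem' : δrem = ML0 - ∑ j ∈ Iic i, δ (π j) := by rw [hδrem, hIio]
    have hkey := key_ineq p δ ML0 π hopt i k hi
    rw [max_eq_left (by linarith)] at hkey
    have harg : (∑ j ∈ Iic i, δ (π j)) - δ (π i) + δ (π k) - ML0
        = (δ (π k) - δrem) - δ (π i) := by rw [hδrem']; ring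
    rw [harg] at hkey
    rcases le_total (δ (π i)) (δ (π k) - δrem) with h | h
    · rw [min_eq_left h]
      rw [max_eq_right (by linarith)] at hkey
      linarith
    · rw [min_eq_right h]
      rw [max_eq_left (by linarith)] at hkey
      linarith
  · intro i hi
    have hkey := key_ineq p δ ML0 π hopt k i (by omega)
    have hins := Finset.sum_erase_add (Iic k) (fun m => δ (π m)) (mem_Iic.2 (le_refl k))
    rw [Finset.Iic_erase] at hins
    have hB : (∑ j ∈ Iic k, δ (π j)) - ML0 = δ (π k) - δrem := by
      rw [hδrem, ← hins]; ring
    rw [max_eq_right (by linarith), hB] at hkey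
    have harg : (∑ j ∈ Iic k, δ (π j)) - δ (π k) + δ (π i) - ML0 = δ (π i) - δrem := by
      rw [hδrem, ← hins]; ring
    rw [harg] at hkey
    exact hkey
end

section
/- Let 1 ≤ i_1 < i_2 < … < i_m ≤ n, and starting from the initial schedule π^0, for ℓ = 1,…,m let π^ℓ be obtained from π^{ℓ−1} by exchanging the positions of the jobs J_{i_ℓ − 1} and J_{n+1+i_ℓ}. Then for each 1 ≤ ℓ ≤ m: (i) the first n+1 jobs of π^ℓ are in nondecreasing order of processing time and the last n+1 jobs of π^ℓ are in nondecreasing order of p+δ; (ii) the total deterioration of the first n+1 jobs of π^ℓ equals that of π^{ℓ−1} minus 2 x_{i_ℓ}; and (iii) G(π^ℓ) = G(π^{ℓ−1}) + x_{i_ℓ}. -/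
lemma sum_if_le_aux (N : ℕ) (c : Fin N) (v : ℤ) :
    (∑ i : Fin N, if c ≤ i then v else 0) = ((N - (c : ℕ) : ℕ) : ℤ) * v := by
  rw [Finset.sum_ite, Finset.sum_const, Finset.sum_const_zero, add_zero, nsmul_eq_mul]
  congr 2
  have h : Finset.univ.filter (fun i : Fin N => c ≤ i) = Finset.Ici c := by ext i; simp
  rw [h, Fin.card_Ici]

open Classical in
lemma invlemma_aux
    (n : ℕ)
    (m : ℕ) (idx : ℕ → ℕ)
    (hidxrange : ∀ ℓ, 1 ≤ ℓ → ℓ ≤ m → 1 ≤ idx ℓ ∧ idx ℓ ≤ n)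
    (hidxmono : ∀ a b, 1 ≤ a → a < b → b ≤ m → idx a < idx b)
    (sched : ℕ → Equiv.Perm (Fin (2 * n + 3)))
    (hsched0 : ∀ j : Fin (2 * n + 3), ((sched 0) j : ℕ) =
      if (j : ℕ) ≤ n then (j : ℕ)
      else if (j : ℕ) = n + 1 then 2 * n + 2
      else 3 * n + 3 - (j : ℕ))
    (hstep : ∀ ℓ, 1 ≤ ℓ → ℓ ≤ m → ∀ pos : Fin (2 * n + 3),
      ((sched ℓ) pos : ℕ) =
        if ((sched (ℓ - 1)) pos : ℕ) = idx ℓ - 1 then n + 1 + idx ℓ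
        else if ((sched (ℓ - 1)) pos : ℕ) = n + 1 + idx ℓ then idx ℓ - 1
        else ((sched (ℓ - 1)) pos : ℕ)) :
    ∀ ℓ, ℓ ≤ m → ∀ pos : Fin (2 * n + 3),
      ((sched ℓ) pos : ℕ) =
        if (pos : ℕ) ≤ n then
          (if ∃ a, 1 ≤ a ∧ a ≤ ℓ ∧ idx a = (pos : ℕ) + 1 then n + 2 + (pos : ℕ) else (pos : ℕ))
        else if (pos : ℕ) = n + 1 then 2 * n + 2
        else (if ∃ a, 1 ≤ a ∧ a ≤ ℓ ∧ idx a = 2 * n + 2 - (pos : ℕ)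
              then 2 * n + 1 - (pos : ℕ) else 3 * n + 3 - (pos : ℕ)) := by
  classical
  intro ℓ
  induction ℓ with
  | zero =>
    intro _ pos
    have h0 := hsched0 pos
    have hne1 : ¬ ∃ a, 1 ≤ a ∧ a ≤ 0 ∧ idx a = (pos : ℕ) + 1 := by
      rintro ⟨a, h1, h2, -⟩; omega
    have hne2 : ¬ ∃ a, 1 ≤ a ∧ a ≤ 0 ∧ idx a = 2 * n + 2 - (pos : ℕ) := by
      rintro ⟨a, h1, h2, -⟩; omega
    rw [if_neg hne1, if_neg hne2] at *
    exact h0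
  | succ t ih =>
    intro hm pos
    have ht : t ≤ m := by omega
    have ihp := ih ht pos
    have hk := hidxrange (t + 1) (by omega) hm
    have hlt : ∀ a, 1 ≤ a → a ≤ t → idx a < idx (t + 1) := fun a h1 h2 =>
      hidxmono a (t + 1) h1 (by omega) hm
    have hs := hstep (t + 1) (by omega) hm pos
    simp only [Nat.add_sub_cancel] at hs
    have hposlt : (pos : ℕ) < 2 * n + 3 := pos.isLt
    by_cases hc1 : (pos : ℕ) ≤ n
    · rw [if_pos hc1] at ihp ⊢
      by_cases hex : ∃ a, 1 ≤ a ∧ a ≤ t ∧ idx a = (pos : ℕ) + 1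
      · rw [if_pos hex] at ihp
        obtain ⟨a, ha1, ha2, ha3⟩ := hex
        have hia := hlt a ha1 ha2
        rw [ihp] at hs
        rw [if_neg (by omega), if_neg (by omega)] at hs
        rw [hs, if_pos ⟨a, ha1, by omega, ha3⟩]
      · rw [if_neg hex] at ihp
        rw [ihp] at hs
        by_cases hpq : (pos : ℕ) = idx (t + 1) - 1
        · rw [if_pos (by omega)] at hs
          rw [hs, if_pos ⟨t + 1, by omega, le_rfl, by omega⟩]
          omega
        · rw [if_neg (by omega), if_neg (by omega)] at hs
          rw [hs, if_neg ?_]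
          rintro ⟨a, ha1, ha2, ha3⟩
          rcases Nat.lt_succ_iff_lt_or_eq.mp (Nat.lt_succ_of_le ha2) with h | h
          · exact hex ⟨a, ha1, by omega, ha3⟩
          · subst h; omega
    · rw [if_neg hc1] at ihp ⊢
      by_cases hc2 : (pos : ℕ) = n + 1
      · rw [if_pos hc2] at ihp ⊢
        rw [ihp] at hs
        rw [if_neg (by omega), if_neg (by omega)] at hs
        exact hs
      · rw [if_neg hc2] at ihp ⊢
        by_cases hex : ∃ a, 1 ≤ a ∧ a ≤ t ∧ idx a = 2 * n + 2 - (pos : ℕ)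
        · rw [if_pos hex] at ihp
          obtain ⟨a, ha1, ha2, ha3⟩ := hex
          have hia := hlt a ha1 ha2
          have hra := hidxrange a ha1 (by omega)
          rw [ihp] at hs
          rw [if_neg (by omega), if_neg (by omega)] at hs
          rw [hs, if_pos ⟨a, ha1, by omega, ha3⟩]
        · rw [if_neg hex] at ihp
          rw [ihp] at hs
          by_cases hpr : (pos : ℕ) = 2 * n + 2 - idx (t + 1)
          · rw [if_neg (by omega), if_pos (by omega)] at hs
            rw [hs, if_pos ⟨t + 1, by omega, le_rfl, by omega⟩]
            omega
          · rw [if_neg (by omega), if_neg (by omega)] at hs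
            rw [hs, if_neg ?_]
            rintro ⟨a, ha1, ha2, ha3⟩
            rcases Nat.lt_succ_iff_lt_or_eq.mp (Nat.lt_succ_of_le ha2) with h | h
            · exact hex ⟨a, ha1, by omega, ha3⟩
            · subst h; omega



/-- Total deterioration of the jobs in the first `n+1` (0-based positions `0..n`)
of a schedule of the `2n+3` jobs. -/
def detSum (n : ℕ) (δ : ℕ → ℤ) (π : Equiv.Perm (Fin (2 * n + 3))) : ℤ :=
  ∑ j ∈ Finset.univ.filter (fun j : Fin (2 * n + 3) => (j : ℕ) ≤ n), δ ((π j : ℕ))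

/-- Center-convention total completion time `G(π)` for a schedule of the `2n+3` jobs:
the first maintenance activity (of duration `Σ_{j=0}^{n} δ_{π_j} - ML0`) immediately
precedes the job at the center position `n+1` (0-based), and a maintenance activity of
duration `δ_{π_j}` immediately precedes each subsequent job. -/
def gObj (n : ℕ) (p δ : ℕ → ℤ) (ML0 : ℤ) (π : Equiv.Perm (Fin (2 * n + 3))) : ℤ :=
  ∑ i : Fin (2 * n + 3),
    ((∑ j ∈ Finset.Iic i, p ((π j : ℕ))) +
      (if (i : ℕ) ≤ n then 0
       else (detSum n δ π - ML0) +
         (∑ j ∈ Finset.univ.filter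
             (fun j : Fin (2 * n + 3) => n + 2 ≤ (j : ℕ) ∧ j ≤ i), δ ((π j : ℕ)))))

/-- let `1 ≤ i_1 < … < i_m ≤ n` and, starting from the initial schedule
`π⁰ = (J_0,…,J_n, J_{2n+2}, J_{2n+1},…,J_{n+1})`, let `π^ℓ` be obtained from `π^{ℓ-1}`
by exchanging the positions of the jobs `J_{i_ℓ - 1}` and `J_{n+1+i_ℓ}`. Then for each
`1 ≤ ℓ ≤ m`: (i) the first `n+1` jobs of `π^ℓ` are in nondecreasing order of `p` and
the last `n+1` jobs are in nondecreasing order of `p + δ`; (ii) the total deterioration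
of the first `n+1` jobs decreases by `2 x_{i_ℓ}`; (iii) `G(π^ℓ) = G(π^{ℓ-1}) + x_{i_ℓ}`. -/
theorem stmt3
    (n : ℕ) (x : ℕ → ℤ) (B M : ℤ)
    (hx : ∀ i, 1 ≤ i → i ≤ n → 0 < x i)
    (hB : ∑ i ∈ Finset.Icc 1 n, x i = 2 * B)
    (hM : (4 * (n : ℤ) + 8) * B < M)
    (p δ : ℕ → ℤ)
    (hp : ∀ i ≤ n, p i = ∑ j ∈ Finset.Icc 1 i, x j)
    (hp' : ∀ i ≤ n, p (n + 1 + i) = p i)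
    (hplast : p (2 * n + 2) = M - 2 * B)
    (hδ : ∀ i ≤ n, δ i = M - 2 * p i)
    (hδ' : ∀ i ≤ n, δ (n + 1 + i) = δ i)
    (hδlast : δ (2 * n + 2) = 0)
    (ML0 : ℤ) (hML0 : ML0 = (∑ i ∈ Finset.range (n + 1), δ i) - 2 * B)
    (Q0 : ℤ)
    (hQ0 : Q0 = (∑ j ∈ Finset.range (n + 1), ((n : ℤ) - (j : ℤ) + 1) * p j)
      + ((n : ℤ) + 2) * ((∑ j ∈ Finset.range (n + 1), p j) + 2 * B + p (2 * n + 2))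
      + (∑ j ∈ Finset.range (n + 1), ((j : ℤ) + 1) * (p j + δ j)))
    (m : ℕ) (idx : ℕ → ℕ)
    (hidxrange : ∀ ℓ, 1 ≤ ℓ → ℓ ≤ m → 1 ≤ idx ℓ ∧ idx ℓ ≤ n)
    (hidxmono : ∀ a b, 1 ≤ a → a < b → b ≤ m → idx a < idx b)
    (sched : ℕ → Equiv.Perm (Fin (2 * n + 3)))
    (hsched0 : ∀ j : Fin (2 * n + 3), ((sched 0) j : ℕ) =
      if (j : ℕ) ≤ n then (j : ℕ)
      else if (j : ℕ) = n + 1 then 2 * n + 2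
      else 3 * n + 3 - (j : ℕ))
    (hstep : ∀ ℓ, 1 ≤ ℓ → ℓ ≤ m → ∀ pos : Fin (2 * n + 3),
      ((sched ℓ) pos : ℕ) =
        if ((sched (ℓ - 1)) pos : ℕ) = idx ℓ - 1 then n + 1 + idx ℓ
        else if ((sched (ℓ - 1)) pos : ℕ) = n + 1 + idx ℓ then idx ℓ - 1
        else ((sched (ℓ - 1)) pos : ℕ)) :
    ∀ ℓ, 1 ≤ ℓ → ℓ ≤ m →
      (∀ a b : Fin (2 * n + 3), a ≤ b → (b : ℕ) ≤ n →
        p (((sched ℓ) a : ℕ)) ≤ p (((sched ℓ) b : ℕ))) ∧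
      (∀ a b : Fin (2 * n + 3), n + 2 ≤ (a : ℕ) → a ≤ b →
        p (((sched ℓ) a : ℕ)) + δ (((sched ℓ) a : ℕ)) ≤
          p (((sched ℓ) b : ℕ)) + δ (((sched ℓ) b : ℕ))) ∧
      detSum n δ (sched ℓ) = detSum n δ (sched (ℓ - 1)) - 2 * x (idx ℓ) ∧
      gObj n p δ ML0 (sched ℓ) = gObj n p δ ML0 (sched (ℓ - 1)) + x (idx ℓ) := by
  classical
  have inv := invlemma_aux n m idx hidxrange hidxmono sched hsched0 hstep
  have hpmono : ∀ i j : ℕ, i ≤ j → j ≤ n → p i ≤ p j := by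
    intro i j hij hjn
    rw [hp i (le_trans hij hjn), hp j hjn]
    apply Finset.sum_le_sum_of_subset_of_nonneg (Finset.Icc_subset_Icc le_rfl hij)
    intro a ha _
    have ha' := Finset.mem_Icc.mp (by exact ha)
    exact le_of_lt (hx a ha'.1 (le_trans ha'.2 hjn))
  have hpx : ∀ kk, 1 ≤ kk → kk ≤ n → p kk = p (kk - 1) + x kk := by
    intro kk h1 h2
    obtain ⟨t, rfl⟩ : ∃ t, kk = t + 1 := ⟨kk - 1, by omega⟩
    rw [hp (t + 1) h2]
    simp only [Nat.add_sub_cancel]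
    rw [hp t (by omega)]
    exact Finset.sum_Icc_succ_top (by omega) x
  intro ℓ hℓ1 hℓm
  obtain ⟨hk1, hkn⟩ := hidxrange ℓ hℓ1 hℓm
  set k := idx ℓ with hkdef
  have hidxprev : ∀ a, 1 ≤ a → a ≤ ℓ - 1 → idx a < k := fun a h1 h2 =>
    hidxmono a ℓ h1 (by omega) hℓm
  obtain ⟨q, hqval⟩ : ∃ q : Fin (2 * n + 3), (q : ℕ) = k - 1 := ⟨⟨k - 1, by omega⟩, rfl⟩
  obtain ⟨r, hrval⟩ : ∃ r : Fin (2 * n + 3), (r : ℕ) = 2 * n + 2 - k := ⟨⟨2 * n + 2 - k, by omega⟩, rfl⟩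
  -- where the two swapped jobs sit before and after the swap
  have hq1 : ((sched (ℓ - 1)) q : ℕ) = k - 1 := by
    have h := inv (ℓ - 1) (by omega) q
    rw [hqval] at h
    have hne : ¬ ∃ a, 1 ≤ a ∧ a ≤ ℓ - 1 ∧ idx a = (k - 1) + 1 := by
      rintro ⟨a, ha1, ha2, ha3⟩; have := hidxprev a ha1 ha2; omega
    rw [if_pos (by omega), if_neg hne] at h
    exact h
  have hr1 : ((sched (ℓ - 1)) r : ℕ) = n + 1 + k := by
    have h := inv (ℓ - 1) (by omega) r
    rw [hrval] at h
    have hne : ¬ ∃ a, 1 ≤ a ∧ a ≤ ℓ - 1 ∧ idx a = 2 * n + 2 - (2 * n + 2 - k) := by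
      rintro ⟨a, ha1, ha2, ha3⟩; have := hidxprev a ha1 ha2; omega
    rw [if_neg (by omega), if_neg (by omega), if_neg hne] at h
    rw [h]; omega
  have hq2 : ((sched ℓ) q : ℕ) = n + 1 + k := by
    have hs := hstep ℓ hℓ1 hℓm q
    rw [hq1, if_pos rfl] at hs
    exact hs
  have hr2 : ((sched ℓ) r : ℕ) = k - 1 := by
    have hs := hstep ℓ hℓ1 hℓm r
    rw [hr1, if_neg (by omega), if_pos rfl] at hs
    exact hs
  have hother : ∀ pos : Fin (2 * n + 3), pos ≠ q → pos ≠ r →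
      ((sched ℓ) pos : ℕ) = ((sched (ℓ - 1)) pos : ℕ) := by
    intro pos hnq hnr
    have hs := hstep ℓ hℓ1 hℓm pos
    have e1 : ((sched (ℓ - 1)) pos : ℕ) ≠ k - 1 := fun h =>
      hnq ((sched (ℓ - 1)).injective (Fin.val_injective (h.trans hq1.symm)))
    have e2 : ((sched (ℓ - 1)) pos : ℕ) ≠ n + 1 + k := fun h =>
      hnr ((sched (ℓ - 1)).injective (Fin.val_injective (h.trans hr1.symm)))
    rw [if_neg e1, if_neg e2] at hs
    exact hs
  have hqr : q ≠ r := by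
    intro h
    have := congrArg Fin.val h
    rw [hqval, hrval] at this
    omega
  have hpq1 : p (n + 1 + k) = p k := hp' k hkn
  have hδq1 : δ (n + 1 + k) = δ k := hδ' k hkn
  have hpk : p k = p (k - 1) + x k := hpx k hk1 hkn
  have hδk : δ k = M - 2 * p k := hδ k hkn
  have hδk1 : δ (k - 1) = M - 2 * p (k - 1) := hδ (k - 1) (by omega)
  have hdp : ∀ j : Fin (2 * n + 3),
      p (((sched ℓ) j : ℕ)) - p (((sched (ℓ - 1)) j : ℕ))
        = (if j = q then x k else 0) + (if j = r then - x k else 0) := by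
    intro j
    by_cases hjq : j = q
    · subst hjq
      rw [hq2, hq1, if_pos rfl, if_neg hqr, hpq1, hpk]; ring
    · by_cases hjr : j = r
      · subst hjr
        rw [hr2, hr1, if_neg (Ne.symm (Ne.symm hjq)), if_pos rfl, hpq1, hpk]; ring
      · rw [hother j hjq hjr, if_neg hjq, if_neg hjr]; ring
  have hdd : ∀ j : Fin (2 * n + 3),
      δ (((sched ℓ) j : ℕ)) - δ (((sched (ℓ - 1)) j : ℕ))
        = (if j = q then -2 * x k else 0) + (if j = r then 2 * x k else 0) := by
    intro j
    by_cases hjq : j = q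
    · subst hjq
      rw [hq2, hq1, if_pos rfl, if_neg hqr, hδq1, hδk, hδk1, hpk]; ring
    · by_cases hjr : j = r
      · subst hjr
        rw [hr2, hr1, if_neg hjq, if_pos rfl, hδq1, hδk, hδk1, hpk]; ring
      · rw [hother j hjq hjr, if_neg hjq, if_neg hjr]; ring
  have hdet : detSum n δ (sched ℓ) = detSum n δ (sched (ℓ - 1)) - 2 * x k := by
    have h : detSum n δ (sched ℓ) - detSum n δ (sched (ℓ - 1)) = -2 * x k := by
      unfold detSum
      rw [← Finset.sum_sub_distrib, Finset.sum_congr rfl (fun j _ => hdd j),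
        Finset.sum_add_distrib]
      simp only [Finset.sum_ite_eq']
      have hqmem : q ∈ Finset.univ.filter (fun j : Fin (2 * n + 3) => (j : ℕ) ≤ n) := by
        simp only [Finset.mem_filter, Finset.mem_univ, true_and, hqval]; omega
      have hrmem : r ∉ Finset.univ.filter (fun j : Fin (2 * n + 3) => (j : ℕ) ≤ n) := by
        simp only [Finset.mem_filter, Finset.mem_univ, true_and, hrval]; omega
      rw [if_pos hqmem, if_neg hrmem]
      ring
    linarith
  -- part (i) first half
  have key1 : ∀ po : Fin (2 * n + 3), (po : ℕ) ≤ n →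
      ((sched ℓ) po : ℕ) = (po : ℕ) ∨
      (((sched ℓ) po : ℕ) = n + 2 + (po : ℕ) ∧ (po : ℕ) + 1 ≤ n) := by
    intro po hpo
    have h := inv ℓ (by omega) po
    rw [if_pos hpo] at h
    by_cases hex : ∃ a, 1 ≤ a ∧ a ≤ ℓ ∧ idx a = (po : ℕ) + 1
    · right
      obtain ⟨a, ha1, ha2, ha3⟩ := hex
      have hra := hidxrange a ha1 (le_trans ha2 hℓm)
      exact ⟨by rw [h, if_pos ⟨a, ha1, ha2, ha3⟩], by omega⟩
    · left; rw [h, if_neg hex]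
  have part1 : ∀ a b : Fin (2 * n + 3), a ≤ b → (b : ℕ) ≤ n →
      p (((sched ℓ) a : ℕ)) ≤ p (((sched ℓ) b : ℕ)) := by
    intro a b hab hbn
    have habn : (a : ℕ) ≤ (b : ℕ) := hab
    by_cases heq : a = b
    · subst heq; exact le_rfl
    · have hlt : (a : ℕ) + 1 ≤ (b : ℕ) := by
        have : (a : ℕ) ≠ (b : ℕ) := fun h => heq (Fin.val_injective h)
        omega
      have step1 : p (((sched ℓ) a : ℕ)) ≤ p ((a : ℕ) + 1) := by
        rcases key1 a (by omega) with h1 | h1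
        · rw [h1]; exact hpmono _ _ (by omega) (by omega)
        · rw [h1.1]
          have e : n + 2 + (a : ℕ) = n + 1 + ((a : ℕ) + 1) := by ring
          rw [e, hp' _ h1.2]
      have step3 : p ((b : ℕ)) ≤ p (((sched ℓ) b : ℕ)) := by
        rcases key1 b hbn with h2 | h2
        · rw [h2]
        · rw [h2.1]
          have e : n + 2 + (b : ℕ) = n + 1 + ((b : ℕ) + 1) := by ring
          rw [e, hp' _ h2.2]
          exact hpmono _ _ (by omega) h2.2
      exact le_trans step1 (le_trans (hpmono _ _ hlt hbn) step3)
  -- part (i) second half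
  have key2 : ∀ po : Fin (2 * n + 3), n + 2 ≤ (po : ℕ) →
      ∃ jj, jj ≤ n ∧ 2 * n + 1 ≤ (po : ℕ) + jj ∧ (po : ℕ) + jj ≤ 2 * n + 2 ∧
        p (((sched ℓ) po : ℕ)) + δ (((sched ℓ) po : ℕ)) = M - p jj := by
    intro po hpo
    have hpolt : (po : ℕ) < 2 * n + 3 := po.isLt
    have hv := inv ℓ (by omega) po
    rw [if_neg (by omega), if_neg (by omega)] at hv
    by_cases hex : ∃ a, 1 ≤ a ∧ a ≤ ℓ ∧ idx a = 2 * n + 2 - (po : ℕ)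
    · obtain ⟨a, ha1, ha2, ha3⟩ := hex
      have hra := hidxrange a ha1 (le_trans ha2 hℓm)
      refine ⟨2 * n + 1 - (po : ℕ), by omega, by omega, by omega, ?_⟩
      rw [hv, if_pos ⟨a, ha1, ha2, ha3⟩, hδ _ (by omega)]
      ring
    · refine ⟨2 * n + 2 - (po : ℕ), by omega, by omega, by omega, ?_⟩
      rw [hv, if_neg hex]
      have h1 : 3 * n + 3 - (po : ℕ) = n + 1 + (2 * n + 2 - (po : ℕ)) := by omega
      rw [h1, hp' _ (by omega), hδ' _ (by omega), hδ _ (by omega)]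
      ring
  have part2 : ∀ a b : Fin (2 * n + 3), n + 2 ≤ (a : ℕ) → a ≤ b →
      p (((sched ℓ) a : ℕ)) + δ (((sched ℓ) a : ℕ)) ≤
        p (((sched ℓ) b : ℕ)) + δ (((sched ℓ) b : ℕ)) := by
    intro a b ha hab
    by_cases heq : a = b
    · subst heq; exact le_rfl
    · have habn : (a : ℕ) ≤ (b : ℕ) := hab
      have hlt : (a : ℕ) + 1 ≤ (b : ℕ) := by
        have : (a : ℕ) ≠ (b : ℕ) := fun h => heq (Fin.val_injective h)
        omega
      obtain ⟨ja, hja1, hja2, hja3, hja4⟩ := key2 a ha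
      obtain ⟨jb, hjb1, hjb2, hjb3, hjb4⟩ := key2 b (by omega)
      rw [hja4, hjb4]
      have : p jb ≤ p ja := hpmono _ _ (by omega) hja1
      linarith
  -- part (iii)
  have hGdiff : gObj n p δ ML0 (sched ℓ) - gObj n p δ ML0 (sched (ℓ - 1)) = x k := by
    unfold gObj
    rw [← Finset.sum_sub_distrib]
    have hA : ∀ i : Fin (2 * n + 3),
        (∑ j ∈ Finset.Iic i, p (((sched ℓ) j : ℕ)))
          - (∑ j ∈ Finset.Iic i, p (((sched (ℓ - 1)) j : ℕ)))
          = (if q ≤ i then x k else 0) + (if r ≤ i then - x k else 0) := by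
      intro i
      rw [← Finset.sum_sub_distrib, Finset.sum_congr rfl (fun j _ => hdp j),
        Finset.sum_add_distrib]
      simp only [Finset.sum_ite_eq', Finset.mem_Iic]
    have hB : ∀ i : Fin (2 * n + 3),
        (if (i : ℕ) ≤ n then 0
          else (detSum n δ (sched ℓ) - ML0) +
            (∑ j ∈ Finset.univ.filter
              (fun j : Fin (2 * n + 3) => n + 2 ≤ (j : ℕ) ∧ j ≤ i), δ (((sched ℓ) j : ℕ))))
        - (if (i : ℕ) ≤ n then 0
          else (detSum n δ (sched (ℓ - 1)) - ML0) +
            (∑ j ∈ Finset.univ.filter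
              (fun j : Fin (2 * n + 3) => n + 2 ≤ (j : ℕ) ∧ j ≤ i), δ (((sched (ℓ - 1)) j : ℕ))))
        = (if (i : ℕ) ≤ n then 0 else -2 * x k) + (if r ≤ i then 2 * x k else 0) := by
      intro i
      have hSd : (∑ j ∈ Finset.univ.filter
              (fun j : Fin (2 * n + 3) => n + 2 ≤ (j : ℕ) ∧ j ≤ i), δ (((sched ℓ) j : ℕ)))
          - (∑ j ∈ Finset.univ.filter
              (fun j : Fin (2 * n + 3) => n + 2 ≤ (j : ℕ) ∧ j ≤ i), δ (((sched (ℓ - 1)) j : ℕ)))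
          = (if r ≤ i then 2 * x k else 0) := by
        rw [← Finset.sum_sub_distrib, Finset.sum_congr rfl (fun j _ => hdd j),
          Finset.sum_add_distrib]
        simp only [Finset.sum_ite_eq']
        have hqT : q ∉ Finset.univ.filter
            (fun j : Fin (2 * n + 3) => n + 2 ≤ (j : ℕ) ∧ j ≤ i) := by
          simp only [Finset.mem_filter, Finset.mem_univ, true_and, hqval, not_and]
          intro h; omega
        have hrT : (r ∈ Finset.univ.filter
            (fun j : Fin (2 * n + 3) => n + 2 ≤ (j : ℕ) ∧ j ≤ i)) ↔ r ≤ i := by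
          simp only [Finset.mem_filter, Finset.mem_univ, true_and, hrval]
          constructor
          · exact fun h => h.2
          · exact fun h => ⟨by omega, h⟩
        rw [if_neg hqT]
        by_cases hri : r ≤ i
        · rw [if_pos (hrT.mpr hri), if_pos hri]; ring
        · rw [if_neg (fun h => hri (hrT.mp h)), if_neg hri]; ring
      by_cases hin : (i : ℕ) ≤ n
      · have hri : ¬ r ≤ i := by
          intro h
          rw [Fin.le_def, hrval] at h
          omega
        rw [if_pos hin, if_pos hin, if_pos hin, if_neg hri]
        ring
      · rw [if_neg hin, if_neg hin, if_neg hin, hdet]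
        linarith [hSd]
    have hterm : ∀ i ∈ (Finset.univ : Finset (Fin (2 * n + 3))),
        ((∑ j ∈ Finset.Iic i, p (((sched ℓ) j : ℕ))) +
          (if (i : ℕ) ≤ n then 0
           else (detSum n δ (sched ℓ) - ML0) +
             (∑ j ∈ Finset.univ.filter
                 (fun j : Fin (2 * n + 3) => n + 2 ≤ (j : ℕ) ∧ j ≤ i), δ (((sched ℓ) j : ℕ)))))
        - ((∑ j ∈ Finset.Iic i, p (((sched (ℓ - 1)) j : ℕ))) +
          (if (i : ℕ) ≤ n then 0
           else (detSum n δ (sched (ℓ - 1)) - ML0) +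
             (∑ j ∈ Finset.univ.filter
                 (fun j : Fin (2 * n + 3) => n + 2 ≤ (j : ℕ) ∧ j ≤ i), δ (((sched (ℓ - 1)) j : ℕ)))))
        = ((if q ≤ i then x k else 0) + (if r ≤ i then - x k else 0))
          + ((if (i : ℕ) ≤ n then 0 else -2 * x k) + (if r ≤ i then 2 * x k else 0)) := by
      intro i _
      have := hA i
      have := hB i
      linarith
    rw [Finset.sum_congr rfl hterm, Finset.sum_add_distrib, Finset.sum_add_distrib,
      Finset.sum_add_distrib]
    obtain ⟨w, hwval⟩ : ∃ w : Fin (2 * n + 3), (w : ℕ) = n + 1 := ⟨⟨n + 1, by omega⟩, rfl⟩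
    have hconv : ∀ i : Fin (2 * n + 3),
        (if (i : ℕ) ≤ n then (0 : ℤ) else -2 * x k) = (if w ≤ i then -2 * x k else 0) := by
      intro i
      by_cases h : (i : ℕ) ≤ n
      · rw [if_pos h, if_neg (by rw [Fin.le_def, hwval]; omega)]
      · rw [if_neg h, if_pos (by rw [Fin.le_def, hwval]; omega)]
    rw [Finset.sum_congr rfl (fun i _ => hconv i)]
    rw [sum_if_le_aux, sum_if_le_aux, sum_if_le_aux, sum_if_le_aux]
    rw [hqval, hrval, hwval]
    have e1 : ((2 * n + 3 - (k - 1) : ℕ) : ℤ) = 2 * (n : ℤ) + 4 - (k : ℤ) := by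
      have h : (2 * n + 3 - (k - 1) : ℕ) = 2 * n + 4 - k := by omega
      rw [h, Nat.cast_sub (by omega)]
      push_cast; ring
    have e2 : ((2 * n + 3 - (2 * n + 2 - k) : ℕ) : ℤ) = (k : ℤ) + 1 := by
      have h : (2 * n + 3 - (2 * n + 2 - k) : ℕ) = k + 1 := by omega
      rw [h]; push_cast; ring
    have e3 : ((2 * n + 3 - (n + 1) : ℕ) : ℤ) = (n : ℤ) + 2 := by
      have h : (2 * n + 3 - (n + 1) : ℕ) = n + 2 := by omega
      rw [h]; push_cast; ring
    rw [e1, e2, e3]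
    ring
  refine ⟨part1, part2, hdet, by linarith⟩
end

section
/- For every permutation π of the 2n+3 jobs of instance I, letting k(π) be the smallest index i with Σ_{j=1}^{i} δ_{π_j} > ML0, the number of jobs other than J_{2n+2} scheduled in positions 1,…,k(π)−1 (i.e., before the first maintenance activity) is at least n and at most n+1. -/
set_option maxHeartbeats 1000000 in
/-- for every schedule `π` of the jobs of instance `I`, if `k` is the
separation index (0-based: the first position where the cumulative deterioration
exceeds `ML0`, i.e. where the first maintenance activity occurs), then the number of
jobs other than `J_{2n+2}` scheduled before position `k` is at least `n` and at most
`n+1`. -/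
theorem stmt5
    (n : ℕ) (x : ℕ → ℤ) (B M : ℤ)
    (hx : ∀ i, 1 ≤ i → i ≤ n → 0 < x i)
    (hB : ∑ i ∈ Finset.Icc 1 n, x i = 2 * B)
    (hM : (4 * (n : ℤ) + 8) * B < M)
    (p δ : ℕ → ℤ)
    (hp : ∀ i ≤ n, p i = ∑ j ∈ Finset.Icc 1 i, x j)
    (hp' : ∀ i ≤ n, p (n + 1 + i) = p i)
    (hplast : p (2 * n + 2) = M - 2 * B)
    (hδ : ∀ i ≤ n, δ i = M - 2 * p i)
    (hδ' : ∀ i ≤ n, δ (n + 1 + i) = δ i)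
    (hδlast : δ (2 * n + 2) = 0)
    (ML0 : ℤ) (hML0 : ML0 = (∑ i ∈ Finset.range (n + 1), δ i) - 2 * B)
    (Q0 : ℤ)
    (hQ0 : Q0 = (∑ j ∈ Finset.range (n + 1), ((n : ℤ) - (j : ℤ) + 1) * p j)
      + ((n : ℤ) + 2) * ((∑ j ∈ Finset.range (n + 1), p j) + 2 * B + p (2 * n + 2))
      + (∑ j ∈ Finset.range (n + 1), ((j : ℤ) + 1) * (p j + δ j)))
    (π : Equiv.Perm (Fin (2 * n + 3)))
    (k : Fin (2 * n + 3))
    (hk : ML0 < ∑ j ∈ Finset.Iic k, δ ((π j : ℕ)))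
    (hkmin : ∀ i : Fin (2 * n + 3), i < k → (∑ j ∈ Finset.Iic i, δ ((π j : ℕ))) ≤ ML0) :
    n ≤ (Finset.univ.filter
          (fun j : Fin (2 * n + 3) => j < k ∧ (π j : ℕ) ≠ 2 * n + 2)).card ∧
    (Finset.univ.filter
          (fun j : Fin (2 * n + 3) => j < k ∧ (π j : ℕ) ≠ 2 * n + 2)).card ≤ n + 1 := by

  classical
  have hB0 : 0 ≤ B := by
    have h : (0:ℤ) ≤ ∑ i ∈ Finset.Icc 1 n, x i :=
      Finset.sum_nonneg fun i hi =>
        le_of_lt (hx i (Finset.mem_Icc.mp hi).1 (Finset.mem_Icc.mp hi).2)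
    rw [hB] at h; linarith
  have hMpos : 0 < M := by nlinarith
  have hpnn : ∀ i ≤ n, 0 ≤ p i := by
    intro i hi; rw [hp i hi]
    exact Finset.sum_nonneg fun j hj =>
      le_of_lt (hx j (Finset.mem_Icc.mp hj).1 (le_trans (Finset.mem_Icc.mp hj).2 hi))
  have hpub : ∀ i ≤ n, p i ≤ 2 * B := by
    intro i hi; rw [hp i hi, ← hB]
    apply Finset.sum_le_sum_of_subset_of_nonneg (Finset.Icc_subset_Icc_right hi)
    intro j hj _
    exact le_of_lt (hx j (Finset.mem_Icc.mp hj).1 (Finset.mem_Icc.mp hj).2)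
  have hδb : ∀ t, t ≤ 2 * n + 1 → M - 4 * B ≤ δ t ∧ δ t ≤ M := by
    intro t ht
    by_cases h : t ≤ n
    · rw [hδ t h]
      exact ⟨by have := hpub t h; linarith, by have := hpnn t h; linarith⟩
    · have hi : t - (n + 1) ≤ n := by omega
      have hteq : t = n + 1 + (t - (n + 1)) := by omega
      rw [hteq, hδ' _ hi, hδ _ hi]
      exact ⟨by have := hpub _ hi; linarith, by have := hpnn _ hi; linarith⟩
  -- ML0 bounds
  have hsumδ : ∑ i ∈ Finset.range (n + 1), δ i
      = ((n : ℤ) + 1) * M - 2 * ∑ i ∈ Finset.range (n + 1), p i := by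
    have h1 : ∀ i ∈ Finset.range (n + 1), δ i = M - 2 * p i := by
      intro i hi
      exact hδ i (by have := Finset.mem_range.mp hi; omega)
    rw [Finset.sum_congr rfl h1, Finset.sum_sub_distrib, Finset.sum_const,
      Finset.card_range, ← Finset.mul_sum]
    push_cast; ring
  have hsump_nn : (0:ℤ) ≤ ∑ i ∈ Finset.range (n + 1), p i :=
    Finset.sum_nonneg fun i hi => hpnn i (by have := Finset.mem_range.mp hi; omega)
  have hsump_ub : ∑ i ∈ Finset.range (n + 1), p i ≤ ((n : ℤ) + 1) * (2 * B) := by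
    calc ∑ i ∈ Finset.range (n + 1), p i
        ≤ ∑ _i ∈ Finset.range (n + 1), (2 * B) :=
          Finset.sum_le_sum fun i hi => hpub i (by have := Finset.mem_range.mp hi; omega)
      _ = ((n : ℤ) + 1) * (2 * B) := by
          rw [Finset.sum_const, Finset.card_range]; push_cast; ring
  have hML0lb : ((n : ℤ) + 1) * M - (4 * (n : ℤ) + 6) * B ≤ ML0 := by
    rw [hML0, hsumδ]; nlinarith
  have hML0ub : ML0 ≤ ((n : ℤ) + 1) * M := by
    rw [hML0, hsumδ]; nlinarith
  -- sets
  set P : Fin (2 * n + 3) → Prop := fun j => (π j : ℕ) ≠ 2 * n + 2 with hP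
  set S : Finset (Fin (2 * n + 3)) :=
    Finset.univ.filter (fun j : Fin (2 * n + 3) => j < k ∧ (π j : ℕ) ≠ 2 * n + 2) with hS
  set T : Finset (Fin (2 * n + 3)) := (Finset.Iio k).filter P with hT
  set T' : Finset (Fin (2 * n + 3)) := (Finset.Iic k).filter P with hT'
  have hST : S = T := by
    ext j
    simp [hS, hT, hP, Finset.mem_filter, Finset.mem_Iio, and_comm]
  have hδpb : ∀ j : Fin (2 * n + 3), P j → M - 4 * B ≤ δ (π j : ℕ) ∧ δ (π j : ℕ) ≤ M := by
    intro j hj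
    apply hδb
    have h1 : (π j : ℕ) < 2 * n + 3 := (π j).isLt
    have h2 : (π j : ℕ) ≠ 2 * n + 2 := hj
    omega
  have hδM : ∀ j : Fin (2 * n + 3), δ (π j : ℕ) ≤ M := by
    intro j
    by_cases hj : P j
    · exact (hδpb j hj).2
    · have : (π j : ℕ) = 2 * n + 2 := by
        simpa [hP] using hj
      rw [this, hδlast]; linarith
  have hsum_Iio : ∑ j ∈ Finset.Iio k, δ (π j : ℕ) = ∑ j ∈ T, δ (π j : ℕ) := by
    rw [hT]
    exact (Finset.sum_filter_of_ne (fun j _ hne => by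
      intro hcon
      apply hne
      rw [hcon, hδlast])).symm
  have hsum_Iic : ∑ j ∈ Finset.Iic k, δ (π j : ℕ) = ∑ j ∈ T', δ (π j : ℕ) := by
    rw [hT']
    exact (Finset.sum_filter_of_ne (fun j _ hne => by
      intro hcon
      apply hne
      rw [hcon, hδlast])).symm
  have hT'card : T'.card ≤ T.card + 1 := by
    have hsub : T' ⊆ insert k T := by
      intro j hj
      rw [hT', Finset.mem_filter, Finset.mem_Iic] at hj
      rcases eq_or_lt_of_le hj.1 with h | h
      · exact Finset.mem_insert.mpr (Or.inl h)
      · exact Finset.mem_insert.mpr (Or.inr (by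
          rw [hT, Finset.mem_filter, Finset.mem_Iio]; exact ⟨h, hj.2⟩))
    calc T'.card ≤ (insert k T).card := Finset.card_le_card hsub
      _ ≤ T.card + 1 := Finset.card_insert_le _ _
  -- upper bound on sum over Iic
  have hsum_ub : ∑ j ∈ Finset.Iic k, δ (π j : ℕ) ≤ ((T.card : ℤ) + 1) * M := by
    rw [hsum_Iic]
    calc ∑ j ∈ T', δ (π j : ℕ) ≤ ∑ _j ∈ T', M :=
          Finset.sum_le_sum fun j _ => hδM j
      _ = (T'.card : ℤ) * M := by rw [Finset.sum_const]; push_cast [nsmul_eq_mul]; ring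
      _ ≤ ((T.card : ℤ) + 1) * M := by
          apply mul_le_mul_of_nonneg_right _ (le_of_lt hMpos)
          exact_mod_cast hT'card
  -- lower bound: n ≤ T.card
  have hlow : n ≤ T.card := by
    by_contra hcon
    push_neg at hcon
    have h1 : ((T.card : ℤ) + 1) ≤ (n : ℤ) := by exact_mod_cast hcon
    have h2 : ML0 < ((T.card : ℤ) + 1) * M := lt_of_lt_of_le hk hsum_ub
    have h3 : ((T.card : ℤ) + 1) * M ≤ (n : ℤ) * M :=
      mul_le_mul_of_nonneg_right h1 (le_of_lt hMpos)
    nlinarith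
  -- upper bound: T.card ≤ n + 1
  have hhigh : T.card ≤ n + 1 := by
    by_cases hk0 : (k : ℕ) = 0
    · have hempty : T = ∅ := by
        rw [hT]
        apply Finset.filter_eq_empty_iff.mpr
        intro j hj
        exfalso
        rw [Finset.mem_Iio, Fin.lt_def, hk0] at hj
        omega
      rw [hempty]; simp
    · have hklt : (k : ℕ) - 1 < 2 * n + 3 := by have := k.isLt; omega
      set i : Fin (2 * n + 3) := ⟨(k : ℕ) - 1, hklt⟩ with hi
      have hik : i < k := by rw [Fin.lt_def]; show (k : ℕ) - 1 < (k : ℕ); omega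
      have hIio : Finset.Iio k = Finset.Iic i := by
        ext j
        rw [Finset.mem_Iio, Finset.mem_Iic, Fin.lt_def, Fin.le_def]
        simp [hi]; omega
      have hsle : ∑ j ∈ Finset.Iio k, δ (π j : ℕ) ≤ ML0 := by
        rw [hIio]; exact hkmin i hik
      by_contra hcon
      push_neg at hcon
      have h1 : ((n : ℤ) + 2) ≤ (T.card : ℤ) := by exact_mod_cast hcon
      have hMB : 0 ≤ M - 4 * B := by nlinarith
      have h2 : (T.card : ℤ) * (M - 4 * B) ≤ ∑ j ∈ T, δ (π j : ℕ) := by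
        calc (T.card : ℤ) * (M - 4 * B) = ∑ _j ∈ T, (M - 4 * B) := by
              rw [Finset.sum_const]; push_cast [nsmul_eq_mul]; ring
          _ ≤ ∑ j ∈ T, δ (π j : ℕ) := Finset.sum_le_sum fun j hj =>
              (hδpb j (Finset.mem_filter.mp hj).2).1
      have h3 : ((n : ℤ) + 2) * (M - 4 * B) ≤ (T.card : ℤ) * (M - 4 * B) :=
        mul_le_mul_of_nonneg_right h1 hMB
      nlinarith [hsum_Iio, hsle, h2, h3]
  rw [hST]
  exact ⟨hlow, hhigh⟩
end

section
/- Let R = {r_1 < r_2 < … < r_m} and L = {ℓ_1 < ℓ_2 < … < ℓ_m} be disjoint subsets of {0,1,…,n}. Starting from the initial schedule π^0, for j = 1,…,m let π^j be obtained from π^{j−1} by exchanging the jobs J_{ℓ_j} and J_{n+1+r_j}, then re-sorting the first n+1 positions in nondecreasing order of processing time and the last n+1 positions in nondecreasing order of p+δ (keeping J_{2n+2} at position n+2). Fix j with 1 ≤ j ≤ m and suppose ℓ_{j'} < r_{j'} for every j' ≤ j. Then: (i) the total deterioration of the first n+1 jobs of π^j equals that of π^{j−1} minus δ_{ℓ_j}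 − δ_{r_j} = 2 Σ_{k=ℓ_j+1}^{r_j} x_k; and (ii) G(π^j) ≥ G(π^{j−1}) + Σ_{k=ℓ_j+1}^{r_j} x_k, with equality if and only if ℓ_j > r_{j−1} (where r_0 = −1, so equality always holds for j = 1). -/
open Finset

lemma sum_attachFin_val {N : ℕ} (s : Finset ℕ) (h : ∀ m ∈ s, m < N) (F : ℕ → ℤ) :
    ∑ t ∈ s.attachFin h, F (t : ℕ) = ∑ i ∈ s, F i := by
  apply Finset.sum_bij (fun (t : Fin N) _ => (t : ℕ))
  · intro a ha; exact (Finset.mem_attachFin h).1 ha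
  · intro a _ b _ hab; exact Fin.ext hab
  · intro b hb; exact ⟨⟨b, h b hb⟩, (Finset.mem_attachFin h).2 hb, rfl⟩
  · intros; rfl

lemma sum_insert_erase {α : Type*} [DecidableEq α] (S : Finset α) (l r : α) (hl : l ∈ S)
    (hr : r ∉ S) (f : α → ℤ) :
    ∑ v ∈ insert r (S.erase l), f v = ∑ v ∈ S, f v + f r - f l := by
  rw [Finset.sum_insert (fun h => hr (Finset.mem_of_mem_erase h)),
    ← Finset.sum_erase_add S f hl]
  ring

lemma prodsum_swap {α : Type*} [DecidableEq α] (S : Finset α) (l r : α) (hl : l ∈ S)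
    (hr : r ∉ S) (q : α → α → ℤ) (hq : ∀ a b, q a b = q b a) :
    ∑ x ∈ (insert r (S.erase l)) ×ˢ (insert r (S.erase l)), q x.1 x.2
      = ∑ x ∈ S ×ˢ S, q x.1 x.2
        + 2 * ∑ v ∈ S.erase l, (q v r - q v l) + (q r r - q l l) := by
  have hrT : r ∉ S.erase l := fun h => hr (Finset.mem_of_mem_erase h)
  have hlT : l ∉ S.erase l := Finset.notMem_erase l S
  have hS : S = insert l (S.erase l) := (Finset.insert_erase hl).symm
  have expand : ∀ (c : α), c ∉ S.erase l →
      ∑ x ∈ (insert c (S.erase l)) ×ˢ (insert c (S.erase l)), q x.1 x.2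
        = q c c + 2 * ∑ v ∈ S.erase l, q v c
          + ∑ x ∈ (S.erase l) ×ˢ (S.erase l), q x.1 x.2 := by
    intro c hc
    rw [Finset.sum_product, Finset.sum_insert hc, Finset.sum_insert hc]
    have h1 : ∑ a ∈ S.erase l, ∑ b ∈ insert c (S.erase l), q a b
        = ∑ a ∈ S.erase l, (q a c + ∑ b ∈ S.erase l, q a b) :=
      Finset.sum_congr rfl (fun a _ => by rw [Finset.sum_insert hc])
    have h2 : ∑ b ∈ S.erase l, q c b = ∑ b ∈ S.erase l, q b c :=
      Finset.sum_congr rfl (fun b _ => hq c b)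
    rw [h1, Finset.sum_add_distrib, h2, Finset.sum_product]
    ring
  have e2 : ∑ x ∈ S ×ˢ S, q x.1 x.2
      = q l l + 2 * ∑ v ∈ S.erase l, q v l + ∑ x ∈ (S.erase l) ×ˢ (S.erase l), q x.1 x.2 := by
    conv_lhs => rw [hS]
    exact expand l hlT
  rw [expand r hrT, e2, Finset.sum_sub_distrib]
  ring

lemma pairmax {α : Type*} [LinearOrder α] (A : Finset α) (f : α → ℤ)
    (hf : ∀ a ∈ A, ∀ b ∈ A, a ≤ b → f a ≤ f b) :
    ∑ x ∈ A ×ˢ A, max (f x.1) (f x.2)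
      = 2 * ∑ a ∈ A, ((A.filter (fun b => b < a)).card : ℤ) * f a + ∑ a ∈ A, f a := by
  classical
  rw [Finset.sum_product]
  have key : ∀ a ∈ A, ∑ b ∈ A, max (f a) (f b)
      = ((A.filter (fun b => b < a)).card : ℤ) * f a
        + ∑ b ∈ A.filter (fun b => a ≤ b), f b := by
    intro a ha
    rw [← Finset.sum_filter_add_sum_filter_not A (fun b => b < a)]
    congr 1
    · rw [Finset.sum_congr rfl (fun b hb => ?_), Finset.sum_const, nsmul_eq_mul]
      have hb' := Finset.mem_filter.1 hb
      exact max_eq_left (hf b hb'.1 a ha (le_of_lt hb'.2))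
    · rw [show (A.filter (fun b => ¬ b < a)) = (A.filter (fun b => a ≤ b)) from
        Finset.filter_congr (fun b _ => by simp [not_lt])]
      exact Finset.sum_congr rfl (fun b hb => by
        have hb' := Finset.mem_filter.1 hb
        exact max_eq_right (hf a ha b hb'.1 hb'.2))
  rw [Finset.sum_congr rfl key, Finset.sum_add_distrib]
  have swap : ∑ a ∈ A, ∑ b ∈ A.filter (fun b => a ≤ b), f b
      = ∑ b ∈ A, (((A.filter (fun a => a < b)).card : ℤ) * f b + f b) := by
    have e1 : ∀ a ∈ A, ∑ b ∈ A.filter (fun b => a ≤ b), f b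
        = ∑ b ∈ A, if a ≤ b then f b else 0 := fun a _ => Finset.sum_filter _ _
    rw [Finset.sum_congr rfl e1, Finset.sum_comm]
    apply Finset.sum_congr rfl
    intro b hb
    rw [← Finset.sum_filter]
    have : A.filter (fun a => a ≤ b) = insert b (A.filter (fun a => a < b)) := by
      ext c
      simp only [Finset.mem_filter, Finset.mem_insert]
      constructor
      · rintro ⟨hc, hcb⟩
        rcases lt_or_eq_of_le hcb with h | h
        · exact Or.inr ⟨hc, h⟩
        · exact Or.inl h
      · rintro (rfl | ⟨hc, hcb⟩)
        · exact ⟨hb, le_refl _⟩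
        · exact ⟨hc, le_of_lt hcb⟩
    rw [this, Finset.sum_insert (by simp), Finset.sum_const, nsmul_eq_mul]
    ring
  rw [swap, Finset.sum_add_distrib]
  ring


def fhPos (n : ℕ) : Finset (Fin (2*n+3)) := Finset.univ.filter (fun a => (a:ℕ) ≤ n)
def shPos (n : ℕ) : Finset (Fin (2*n+3)) := Finset.univ.filter (fun a => n+2 ≤ (a:ℕ))
def cpos (n : ℕ) : Fin (2*n+3) := ⟨n+1, by omega⟩
def fhS (n : ℕ) (π : Equiv.Perm (Fin (2*n+3))) : Finset (Fin (2*n+3)) := (fhPos n).image π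
def shS (n : ℕ) (π : Equiv.Perm (Fin (2*n+3))) : Finset (Fin (2*n+3)) := (shPos n).image π

lemma detSum_eq (n : ℕ) (δ : ℕ → ℤ) (π : Equiv.Perm (Fin (2*n+3))) :
    detSum n δ π = ∑ t ∈ fhS n π, δ (t : ℕ) := by
  rw [detSum, fhS, Finset.sum_image (fun a _ b _ h => π.injective h)]
  rfl

-- step 1: positional weighted form
lemma gObj_eq_weighted (n : ℕ) (p δ : ℕ → ℤ) (ML0 : ℤ) (π : Equiv.Perm (Fin (2*n+3))) :
    gObj n p δ ML0 π
      = (∑ a : Fin (2*n+3), ((2*n+3 : ℤ) - (a:ℕ)) * p ((π a : ℕ)))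
        + ((n:ℤ)+2) * (detSum n δ π - ML0)
        + ∑ a ∈ shPos n, ((2*n+3 : ℤ) - (a:ℕ)) * δ ((π a : ℕ)) := by
  have cast23 : ∀ j : Fin (2*n+3), ((2*n+3 - (j:ℕ) : ℕ) : ℤ) = (2*n+3 : ℤ) - (j:ℕ) := by
    intro j
    have := j.isLt
    push_cast [Nat.cast_sub (le_of_lt j.isLt)]
    ring
  have P1 : (∑ i : Fin (2*n+3), ∑ j ∈ Finset.Iic i, p ((π j : ℕ)))
      = ∑ a : Fin (2*n+3), ((2*n+3 : ℤ) - (a:ℕ)) * p ((π a : ℕ)) := by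
    have e1 : ∀ i : Fin (2*n+3), ∑ j ∈ Finset.Iic i, p ((π j : ℕ))
        = ∑ j : Fin (2*n+3), if j ≤ i then p ((π j : ℕ)) else 0 := by
      intro i
      rw [← Finset.sum_filter]
      apply Finset.sum_congr _ (fun _ _ => rfl)
      ext j; simp [Finset.mem_Iic]
    rw [Finset.sum_congr rfl (fun i _ => e1 i), Finset.sum_comm]
    apply Finset.sum_congr rfl
    intro j _
    rw [← Finset.sum_filter]
    have : (Finset.univ.filter (fun i : Fin (2*n+3) => j ≤ i)) = Finset.Ici j := by
      ext i; simp [Finset.mem_Ici]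
    rw [this, Finset.sum_const, Fin.card_Ici, nsmul_eq_mul, cast23]
  have P2 : (∑ i : Fin (2*n+3),
        (if (i : ℕ) ≤ n then 0
         else (detSum n δ π - ML0) +
           (∑ j ∈ Finset.univ.filter
               (fun j : Fin (2*n+3) => n + 2 ≤ (j : ℕ) ∧ j ≤ i), δ ((π j : ℕ)))))
      = ((n:ℤ)+2) * (detSum n δ π - ML0)
        + ∑ a ∈ shPos n, ((2*n+3 : ℤ) - (a:ℕ)) * δ ((π a : ℕ)) := by
    have flip : ∀ i : Fin (2*n+3),
        (if (i : ℕ) ≤ n then 0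
         else (detSum n δ π - ML0) +
           (∑ j ∈ Finset.univ.filter
               (fun j : Fin (2*n+3) => n + 2 ≤ (j : ℕ) ∧ j ≤ i), δ ((π j : ℕ))))
        = (if ¬ (i : ℕ) ≤ n then (detSum n δ π - ML0) else 0)
          + ∑ j : Fin (2*n+3), (if n + 2 ≤ (j : ℕ) ∧ j ≤ i then δ ((π j : ℕ)) else 0) := by
      intro i
      rw [← Finset.sum_filter]
      by_cases h : (i : ℕ) ≤ n
      · rw [if_pos h, if_neg (by simpa using h)]
        have : (Finset.univ.filter (fun j : Fin (2*n+3) => n + 2 ≤ (j : ℕ) ∧ j ≤ i)) = ∅ := by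
          ext j
          simp only [Finset.mem_filter, Finset.mem_univ, true_and, Finset.notMem_empty,
            iff_false, not_and]
          intro hj hji
          have := Fin.le_def.1 hji
          omega
        rw [this, Finset.sum_empty]
        ring
      · rw [if_neg h, if_pos (by simpa using h)]
    rw [Finset.sum_congr rfl (fun i _ => flip i), Finset.sum_add_distrib]
    congr 1
    · rw [← Finset.sum_filter]
      have : (Finset.univ.filter (fun i : Fin (2*n+3) => ¬ (i : ℕ) ≤ n))
          = Finset.Ici (cpos n) := by
        ext i
        simp only [Finset.mem_filter, Finset.mem_univ, true_and, Finset.mem_Ici, not_le]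
        rw [Fin.le_def]
        show n < (i:ℕ) ↔ ((cpos n : Fin (2*n+3)) : ℕ) ≤ (i:ℕ)
        simp only [cpos]
        omega
      rw [this, Finset.sum_const, Fin.card_Ici, nsmul_eq_mul]
      have : ((2*n+3 - ((cpos n):ℕ) : ℕ) : ℤ) = ((n:ℤ)+2) := by
        show ((2*n+3 - (n+1) : ℕ) : ℤ) = ((n:ℤ)+2)
        have : 2*n+3 - (n+1) = n + 2 := by omega
        rw [this]; push_cast; ring
      rw [this]
    · rw [Finset.sum_comm]
      have e2 : ∀ j : Fin (2*n+3),
          (∑ i : Fin (2*n+3), if n + 2 ≤ (j : ℕ) ∧ j ≤ i then δ ((π j : ℕ)) else 0)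
          = if n + 2 ≤ (j:ℕ) then ((2*n+3 : ℤ) - (j:ℕ)) * δ ((π j : ℕ)) else 0 := by
        intro j
        by_cases hj : n + 2 ≤ (j:ℕ)
        · rw [if_pos hj]
          have : ∀ i : Fin (2*n+3), (if n + 2 ≤ (j : ℕ) ∧ j ≤ i then δ ((π j : ℕ)) else 0)
              = (if j ≤ i then δ ((π j : ℕ)) else 0) := by
            intro i
            by_cases h2 : j ≤ i
            · rw [if_pos ⟨hj, h2⟩, if_pos h2]
            · rw [if_neg (fun hcon => h2 hcon.2), if_neg h2]
          rw [Finset.sum_congr rfl (fun i _ => this i), ← Finset.sum_filter]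
          have : (Finset.univ.filter (fun i : Fin (2*n+3) => j ≤ i)) = Finset.Ici j := by
            ext i; simp [Finset.mem_Ici]
          rw [this, Finset.sum_const, Fin.card_Ici, nsmul_eq_mul, cast23]
        · rw [if_neg hj]
          apply Finset.sum_eq_zero
          intro i _
          rw [if_neg (fun hcon => hj hcon.1)]
      rw [Finset.sum_congr rfl (fun j _ => e2 j), ← Finset.sum_filter]
      rfl
  rw [gObj, Finset.sum_add_distrib, P1, P2]
  ring

lemma sum_image_perm {n : ℕ} (A : Finset (Fin (2*n+3))) (π : Equiv.Perm (Fin (2*n+3)))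
    (F : Fin (2*n+3) → ℤ) : ∑ t ∈ A.image π, F t = ∑ a ∈ A, F (π a) :=
  Finset.sum_image (fun a _ b _ h => π.injective h)

lemma sum_prod_image_perm {n : ℕ} (A : Finset (Fin (2*n+3))) (π : Equiv.Perm (Fin (2*n+3)))
    (q : Fin (2*n+3) → Fin (2*n+3) → ℤ) :
    ∑ y ∈ (A.image π) ×ˢ (A.image π), q y.1 y.2 = ∑ x ∈ A ×ˢ A, q (π x.1) (π x.2) := by
  apply Finset.sum_nbij' (i := fun y => ((π.symm y.1 : Fin (2*n+3)), π.symm y.2))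
    (j := fun x => ((π x.1 : Fin (2*n+3)), π x.2))
  · rintro ⟨y1, y2⟩ hy
    rw [Finset.mem_product] at hy ⊢
    obtain ⟨h1, h2⟩ := hy
    obtain ⟨a1, ha1, rfl⟩ := Finset.mem_image.1 h1
    obtain ⟨a2, ha2, rfl⟩ := Finset.mem_image.1 h2
    simpa using ⟨ha1, ha2⟩
  · rintro ⟨x1, x2⟩ hx
    rw [Finset.mem_product] at hx ⊢
    exact ⟨Finset.mem_image_of_mem _ hx.1, Finset.mem_image_of_mem _ hx.2⟩
  · rintro ⟨y1, y2⟩ _; simp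
  · rintro ⟨x1, x2⟩ _; simp
  · rintro ⟨y1, y2⟩ _; simp

lemma weighted_fh (n : ℕ) (p : ℕ → ℤ) (π : Equiv.Perm (Fin (2*n+3)))
    (hsp : ∀ a b : Fin (2*n+3), a ≤ b → (b:ℕ) ≤ n → p ((π a : ℕ)) ≤ p ((π b : ℕ))) :
    2 * ∑ a ∈ fhPos n, ((2*n+3:ℤ) - (a:ℕ)) * p ((π a : ℕ))
      = 2*(2*n+3:ℤ) * (∑ t ∈ fhS n π, p (t:ℕ)) + ∑ t ∈ fhS n π, p (t:ℕ)
        - ∑ y ∈ fhS n π ×ˢ fhS n π, max (p (y.1:ℕ)) (p (y.2:ℕ)) := by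
  have hmono : ∀ a ∈ fhPos n, ∀ b ∈ fhPos n, a ≤ b → p ((π a : ℕ)) ≤ p ((π b : ℕ)) := by
    intro a ha b hb hab
    exact hsp a b hab (by simpa [fhPos] using hb)
  have pm := pairmax (fhPos n) (fun a => p ((π a : ℕ))) hmono
  have cardeq : ∀ a ∈ fhPos n, (((fhPos n).filter (fun b => b < a)).card : ℤ) = ((a:ℕ) : ℤ) := by
    intro a ha
    have han : (a:ℕ) ≤ n := by simpa [fhPos] using ha
    have : (fhPos n).filter (fun b => b < a) = Finset.Iio a := by
      ext b
      simp only [fhPos, Finset.mem_filter, Finset.mem_univ, true_and, Finset.mem_Iio]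
      constructor
      · exact fun h => h.2
      · intro h
        exact ⟨by have := Fin.lt_def.1 h; omega, h⟩
    rw [this, Fin.card_Iio]
  have expand : ∑ a ∈ fhPos n, ((2*n+3:ℤ) - (a:ℕ)) * p ((π a : ℕ))
      = (2*n+3:ℤ) * (∑ a ∈ fhPos n, p ((π a : ℕ)))
        - ∑ a ∈ fhPos n, (((fhPos n).filter (fun b => b < a)).card : ℤ) * p ((π a : ℕ)) := by
    rw [Finset.mul_sum, ← Finset.sum_sub_distrib]
    apply Finset.sum_congr rfl
    intro a ha
    rw [cardeq a ha]
    ring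
  have im1 : ∑ t ∈ fhS n π, p (t:ℕ) = ∑ a ∈ fhPos n, p ((π a : ℕ)) := sum_image_perm _ _ _
  have im2 : ∑ y ∈ fhS n π ×ˢ fhS n π, max (p (y.1:ℕ)) (p (y.2:ℕ))
      = ∑ x ∈ fhPos n ×ˢ fhPos n, max (p ((π x.1 : ℕ))) (p ((π x.2 : ℕ))) := by
    rw [fhS]; exact sum_prod_image_perm (fhPos n) π (fun u v => max (p (u:ℕ)) (p (v:ℕ)))
  rw [expand, im1, im2]
  rw [pm]
  ring

lemma weighted_sh (n : ℕ) (q : ℕ → ℤ) (π : Equiv.Perm (Fin (2*n+3)))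
    (hss : ∀ a b : Fin (2*n+3), n + 2 ≤ (a:ℕ) → a ≤ b → q ((π a : ℕ)) ≤ q ((π b : ℕ))) :
    2 * ∑ a ∈ shPos n, ((2*n+3:ℤ) - (a:ℕ)) * q ((π a : ℕ))
      = 2*((n:ℤ)+1) * (∑ t ∈ shS n π, q (t:ℕ)) + ∑ t ∈ shS n π, q (t:ℕ)
        - ∑ y ∈ shS n π ×ˢ shS n π, max (q (y.1:ℕ)) (q (y.2:ℕ)) := by
  have hmono : ∀ a ∈ shPos n, ∀ b ∈ shPos n, a ≤ b → q ((π a : ℕ)) ≤ q ((π b : ℕ)) := by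
    intro a ha b hb hab
    exact hss a b (by simpa [shPos] using ha) hab
  have pm := pairmax (shPos n) (fun a => q ((π a : ℕ))) hmono
  have cardeq : ∀ a ∈ shPos n, (((shPos n).filter (fun b => b < a)).card : ℤ)
      = ((a:ℕ) : ℤ) - ((n:ℤ)+2) := by
    intro a ha
    have han : n + 2 ≤ (a:ℕ) := by simpa [shPos] using ha
    have : (shPos n).filter (fun b => b < a) = Finset.Ico (⟨n+2, by omega⟩ : Fin (2*n+3)) a := by
      ext b
      simp only [shPos, Finset.mem_filter, Finset.mem_univ, true_and, Finset.mem_Ico]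
      constructor
      · intro h
        exact ⟨by rw [Fin.le_def]; exact h.1, h.2⟩
      · intro h
        exact ⟨by have := Fin.le_def.1 h.1; exact this, h.2⟩
    rw [this, Fin.card_Ico]
    show (((a:ℕ) - (n+2) : ℕ) : ℤ) = _
    rw [Nat.cast_sub han]
    push_cast
    ring
  have expand : ∑ a ∈ shPos n, ((2*n+3:ℤ) - (a:ℕ)) * q ((π a : ℕ))
      = ((n:ℤ)+1) * (∑ a ∈ shPos n, q ((π a : ℕ)))
        - ∑ a ∈ shPos n, (((shPos n).filter (fun b => b < a)).card : ℤ) * q ((π a : ℕ)) := by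
    rw [Finset.mul_sum, ← Finset.sum_sub_distrib]
    apply Finset.sum_congr rfl
    intro a ha
    rw [cardeq a ha]
    have han : n + 2 ≤ (a:ℕ) := by simpa [shPos] using ha
    ring
  have im1 : ∑ t ∈ shS n π, q (t:ℕ) = ∑ a ∈ shPos n, q ((π a : ℕ)) := sum_image_perm _ _ _
  have im2 : ∑ y ∈ shS n π ×ˢ shS n π, max (q (y.1:ℕ)) (q (y.2:ℕ))
      = ∑ x ∈ shPos n ×ˢ shPos n, max (q ((π x.1 : ℕ))) (q ((π x.2 : ℕ))) := by
    rw [shS]; exact sum_prod_image_perm (shPos n) π (fun u v => max (q (u:ℕ)) (q (v:ℕ)))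
  rw [expand, im1, im2]
  rw [pm]
  ring

lemma univ_split (n : ℕ) (F : Fin (2*n+3) → ℤ) :
    ∑ a : Fin (2*n+3), F a = (∑ a ∈ fhPos n, F a) + F (cpos n) + ∑ a ∈ shPos n, F a := by
  rw [← Finset.sum_filter_add_sum_filter_not Finset.univ (fun a : Fin (2*n+3) => (a:ℕ) ≤ n)]
  have h1 : Finset.univ.filter (fun a : Fin (2*n+3) => ¬ (a:ℕ) ≤ n)
      = insert (cpos n) (shPos n) := by
    ext a
    simp only [Finset.mem_filter, Finset.mem_univ, true_and, Finset.mem_insert, shPos, not_le]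
    constructor
    · intro h
      rcases Nat.lt_or_ge (a:ℕ) (n+2) with h2 | h2
      · left; apply Fin.ext; show (a:ℕ) = n+1; omega
      · right; exact h2
    · rintro (rfl | h)
      · show n < n + 1; omega
      · omega
  have h2 : cpos n ∉ shPos n := by
    simp only [shPos, Finset.mem_filter, Finset.mem_univ, true_and, cpos]
    omega
  rw [h1, Finset.sum_insert h2, fhPos]
  ring

lemma gObj_setform (n : ℕ) (p δ : ℕ → ℤ) (ML0 : ℤ) (π : Equiv.Perm (Fin (2*n+3)))
    (hc : ((π (cpos n) : Fin (2*n+3)) : ℕ) = 2*n+2)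
    (hsp : ∀ a b : Fin (2*n+3), a ≤ b → (b:ℕ) ≤ n → p ((π a : ℕ)) ≤ p ((π b : ℕ)))
    (hss : ∀ a b : Fin (2*n+3), n + 2 ≤ (a:ℕ) → a ≤ b →
      p ((π a : ℕ)) + δ ((π a : ℕ)) ≤ p ((π b : ℕ)) + δ ((π b : ℕ))) :
    2 * gObj n p δ ML0 π
      = (2*(2*n+3:ℤ) * (∑ t ∈ fhS n π, p (t:ℕ)) + ∑ t ∈ fhS n π, p (t:ℕ)
          - ∑ y ∈ fhS n π ×ˢ fhS n π, max (p (y.1:ℕ)) (p (y.2:ℕ)))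
        + (2*((n:ℤ)+1) * (∑ t ∈ shS n π, (p (t:ℕ) + δ (t:ℕ)))
            + ∑ t ∈ shS n π, (p (t:ℕ) + δ (t:ℕ))
            - ∑ y ∈ shS n π ×ˢ shS n π,
                max (p (y.1:ℕ) + δ (y.1:ℕ)) (p (y.2:ℕ) + δ (y.2:ℕ)))
        + 2*((n:ℤ)+2) * (p (2*n+2) + (∑ t ∈ fhS n π, δ (t:ℕ)) - ML0) := by
  rw [gObj_eq_weighted]
  rw [detSum_eq]
  have split := univ_split n (fun a => ((2*n+3 : ℤ) - (a:ℕ)) * p ((π a : ℕ)))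
  rw [split]
  have hcenter : ((2*n+3 : ℤ) - ((cpos n : Fin (2*n+3)):ℕ)) * p ((π (cpos n) : ℕ))
      = ((n:ℤ)+2) * p (2*n+2) := by
    rw [hc]
    show ((2*n+3 : ℤ) - ((n+1 : ℕ):ℤ)) * _ = _
    push_cast
    ring
  rw [hcenter]
  have merge : ∑ a ∈ shPos n, ((2*n+3 : ℤ) - (a:ℕ)) * p ((π a : ℕ))
      + ∑ a ∈ shPos n, ((2*n+3 : ℤ) - (a:ℕ)) * δ ((π a : ℕ))
      = ∑ a ∈ shPos n, ((2*n+3 : ℤ) - (a:ℕ)) * (p ((π a : ℕ)) + δ ((π a : ℕ))) := by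
    rw [← Finset.sum_add_distrib]
    apply Finset.sum_congr rfl
    intro a _
    ring
  have wfh := weighted_fh n p π hsp
  have wsh := weighted_sh n (fun t => p t + δ t) π hss
  linarith [wfh, wsh, merge]

lemma mem_fhS_iff (n : ℕ) (π : Equiv.Perm (Fin (2*n+3))) (t : Fin (2*n+3)) :
    t ∈ fhS n π ↔ ∃ a : Fin (2*n+3), (a:ℕ) ≤ n ∧ π a = t := by
  simp only [fhS, fhPos, Finset.mem_image, Finset.mem_filter, Finset.mem_univ, true_and]

lemma mem_shS_iff (n : ℕ) (π : Equiv.Perm (Fin (2*n+3))) (t : Fin (2*n+3)) :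
    t ∈ shS n π ↔ (t ≠ π (cpos n) ∧ t ∉ fhS n π) := by
  simp only [shS, shPos, Finset.mem_image, Finset.mem_filter, Finset.mem_univ, true_and,
    mem_fhS_iff]
  constructor
  · rintro ⟨a, ha, rfl⟩
    constructor
    · intro h
      have := π.injective h
      rw [this] at ha
      simp only [cpos] at ha
      omega
    · rintro ⟨b, hb, hba⟩
      have := π.injective hba
      omega
  · rintro ⟨h1, h2⟩
    refine ⟨π.symm t, ?_, by simp⟩
    by_contra hcon
    push_neg at hcon
    rcases Nat.lt_or_ge ((π.symm t : Fin (2*n+3)):ℕ) (n+1) with h3 | h3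
    · exact h2 ⟨π.symm t, by omega, by simp⟩
    · apply h1
      have : π.symm t = cpos n := by
        apply Fin.ext
        simp only [cpos]
        omega
      rw [← this, Equiv.apply_symm_apply]

lemma char_fhS (n m : ℕ) (l r : ℕ → ℕ)
    (hln : ∀ j, 1 ≤ j → j ≤ m → l j ≤ n)
    (hrn : ∀ j, 1 ≤ j → j ≤ m → r j ≤ n)
    (sched : ℕ → Equiv.Perm (Fin (2 * n + 3)))
    (hsched0 : ∀ j : Fin (2 * n + 3), ((sched 0) j : ℕ) =
      if (j : ℕ) ≤ n then (j : ℕ)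
      else if (j : ℕ) = n + 1 then 2 * n + 2
      else 3 * n + 3 - (j : ℕ))
    (hset : ∀ j, 1 ≤ j → j ≤ m → ∀ t : Fin (2 * n + 3),
      ((∃ a : Fin (2 * n + 3), (a : ℕ) ≤ n ∧ (sched j) a = t) ↔
        (((∃ a : Fin (2 * n + 3), (a : ℕ) ≤ n ∧ (sched (j - 1)) a = t) ∧
            (t : ℕ) ≠ l j) ∨ (t : ℕ) = n + 1 + r j))) :
    ∀ j', j' ≤ m → ∀ t : Fin (2*n+3),
      (t ∈ fhS n (sched j') ↔
        (((t:ℕ) ≤ n ∧ ∀ k, 1 ≤ k → k ≤ j' → (t:ℕ) ≠ l k)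
          ∨ ∃ k, 1 ≤ k ∧ k ≤ j' ∧ (t:ℕ) = n+1+r k)) := by
  intro j'
  induction j' with
  | zero =>
    intro _ t
    rw [mem_fhS_iff]
    constructor
    · rintro ⟨a, ha, rfl⟩
      left
      refine ⟨?_, by omega⟩
      rw [hsched0 a, if_pos ha]
      exact ha
    · rintro (⟨ht, -⟩ | ⟨k, hk1, hk0, -⟩)
      · refine ⟨t, ht, ?_⟩
        apply Fin.ext
        rw [hsched0 t, if_pos ht]
      · omega
  | succ j' ih =>
    intro hj'm t
    have ihm := ih (by omega) t
    rw [mem_fhS_iff] at ihm ⊢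
    have hs := hset (j'+1) (by omega) hj'm t
    simp only [Nat.add_sub_cancel] at hs
    rw [hs, ihm]
    have hl1 : l (j'+1) ≤ n := hln (j'+1) (by omega) hj'm
    constructor
    · rintro (⟨(⟨ht, hall⟩ | ⟨k, hk1, hk2, hkt⟩), hne⟩ | heq)
      · left
        refine ⟨ht, fun k hk1 hk2 => ?_⟩
        rcases Nat.lt_or_ge k (j'+1) with h | h
        · exact hall k hk1 (by omega)
        · have : k = j'+1 := by omega
          rw [this]; exact hne
      · right; exact ⟨k, hk1, by omega, hkt⟩
      · right; exact ⟨j'+1, by omega, by omega, heq⟩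
    · rintro (⟨ht, hall⟩ | ⟨k, hk1, hk2, hkt⟩)
      · left
        exact ⟨Or.inl ⟨ht, fun k h1 h2 => hall k h1 (by omega)⟩, hall (j'+1) (by omega) (by omega)⟩
      · rcases Nat.lt_or_ge k (j'+1) with h | h
        · left
          refine ⟨Or.inr ⟨k, hk1, by omega, hkt⟩, ?_⟩
          rw [hkt]
          omega
        · have : k = j'+1 := by omega
          right; rw [← this]; exact hkt

lemma prodmax_swap {α : Type*} [DecidableEq α] (S : Finset α) (l r : α) (hl : l ∈ S)
    (hr : r ∉ S) (f : α → ℤ) :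
    ∑ x ∈ (insert r (S.erase l)) ×ˢ (insert r (S.erase l)), max (f x.1) (f x.2)
      = ∑ x ∈ S ×ˢ S, max (f x.1) (f x.2)
        + 2 * ∑ v ∈ S.erase l, (max (f v) (f r) - max (f v) (f l))
        + (max (f r) (f r) - max (f l) (f l)) :=
  prodsum_swap S l r hl hr (fun a b => max (f a) (f b)) (fun a b => max_comm _ _)

lemma sched0_sorted_p (n : ℕ) (p : ℕ → ℤ)
    (hmono : ∀ a b : ℕ, a ≤ b → b ≤ n → p a ≤ p b)
    (sched0 : Equiv.Perm (Fin (2*n+3)))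
    (h0 : ∀ j : Fin (2 * n + 3), ((sched0) j : ℕ) =
      if (j : ℕ) ≤ n then (j : ℕ) else if (j : ℕ) = n + 1 then 2 * n + 2
      else 3 * n + 3 - (j : ℕ)) :
    ∀ a b : Fin (2*n+3), a ≤ b → (b:ℕ) ≤ n → p ((sched0 a : ℕ)) ≤ p ((sched0 b : ℕ)) := by
  intro a b hab hbn
  have hab' : (a:ℕ) ≤ (b:ℕ) := hab
  rw [h0 a, h0 b, if_pos hbn, if_pos (by omega)]
  exact hmono _ _ hab' hbn

lemma sched0_sorted_s (n : ℕ) (M : ℤ) (p δ : ℕ → ℤ)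
    (hmono : ∀ a b : ℕ, a ≤ b → b ≤ n → p a ≤ p b)
    (hp' : ∀ i ≤ n, p (n + 1 + i) = p i)
    (hδ : ∀ i ≤ n, δ i = M - 2 * p i)
    (hδ' : ∀ i ≤ n, δ (n + 1 + i) = δ i)
    (sched0 : Equiv.Perm (Fin (2*n+3)))
    (h0 : ∀ j : Fin (2 * n + 3), ((sched0) j : ℕ) =
      if (j : ℕ) ≤ n then (j : ℕ) else if (j : ℕ) = n + 1 then 2 * n + 2
      else 3 * n + 3 - (j : ℕ)) :
    ∀ a b : Fin (2*n+3), n + 2 ≤ (a:ℕ) → a ≤ b →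
      p ((sched0 a : ℕ)) + δ ((sched0 a : ℕ)) ≤ p ((sched0 b : ℕ)) + δ ((sched0 b : ℕ)) := by
  intro a b ha hab
  have hab' : (a:ℕ) ≤ (b:ℕ) := hab
  have hb2 : (b:ℕ) < 2*n+3 := b.isLt
  have hval : ∀ c : Fin (2*n+3), n+2 ≤ (c:ℕ) → ((sched0 c : ℕ)) = n+1+(2*n+2-(c:ℕ)) := by
    intro c hc
    rw [h0 c, if_neg (by omega), if_neg (by omega)]
    omega
  rw [hval a ha, hval b (by omega)]
  have e : ∀ k, k ≤ n → p (n+1+k) + δ (n+1+k) = M - p k := by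
    intro k hk
    rw [hp' k hk, hδ' k hk, hδ k hk]; ring
  rw [e _ (by omega), e _ (by omega)]
  have := hmono (2*n+2-(b:ℕ)) (2*n+2-(a:ℕ)) (by omega) (by omega)
  linarith


/-- let `R = {r_1 < … < r_m}` and `L = {ℓ_1 < … < ℓ_m}` be disjoint
subsets of `{0,…,n}`. Starting from the initial schedule `π⁰`, the `j`-th step
exchanges jobs `J_{ℓ_j}` and `J_{n+1+r_j}` and re-sorts the first `n+1` positions in
nondecreasing `p` and the last `n+1` positions in nondecreasing `p + δ`, keeping
`J_{2n+2}` at the center position. Fix `j ∈ [1,m]` with `ℓ_{j'} < r_{j'}` for all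
`j' ≤ j`. Then (i) the total deterioration of the first `n+1` jobs decreases by
`δ_{ℓ_j} - δ_{r_j} = 2 Σ_{k=ℓ_j+1}^{r_j} x_k`, and (ii)
`G(π^j) ≥ G(π^{j-1}) + Σ_{k=ℓ_j+1}^{r_j} x_k`, with equality iff `j = 1` or
`r_{j-1} < ℓ_j`. -/
theorem stmt8
    (n : ℕ) (x : ℕ → ℤ) (B M : ℤ)
    (hx : ∀ i, 1 ≤ i → i ≤ n → 0 < x i)
    (hB : ∑ i ∈ Finset.Icc 1 n, x i = 2 * B)
    (hM : (4 * (n : ℤ) + 8) * B < M)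
    (p δ : ℕ → ℤ)
    (hp : ∀ i ≤ n, p i = ∑ j ∈ Finset.Icc 1 i, x j)
    (hp' : ∀ i ≤ n, p (n + 1 + i) = p i)
    (hplast : p (2 * n + 2) = M - 2 * B)
    (hδ : ∀ i ≤ n, δ i = M - 2 * p i)
    (hδ' : ∀ i ≤ n, δ (n + 1 + i) = δ i)
    (hδlast : δ (2 * n + 2) = 0)
    (ML0 : ℤ) (hML0 : ML0 = (∑ i ∈ Finset.range (n + 1), δ i) - 2 * B)
    (Q0 : ℤ)
    (hQ0 : Q0 = (∑ j ∈ Finset.range (n + 1), ((n : ℤ) - (j : ℤ) + 1) * p j)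
      + ((n : ℤ) + 2) * ((∑ j ∈ Finset.range (n + 1), p j) + 2 * B + p (2 * n + 2))
      + (∑ j ∈ Finset.range (n + 1), ((j : ℤ) + 1) * (p j + δ j)))
    (m : ℕ) (l r : ℕ → ℕ)
    (hln : ∀ j, 1 ≤ j → j ≤ m → l j ≤ n)
    (hrn : ∀ j, 1 ≤ j → j ≤ m → r j ≤ n)
    (hlmono : ∀ a b, 1 ≤ a → a < b → b ≤ m → l a < l b)
    (hrmono : ∀ a b, 1 ≤ a → a < b → b ≤ m → r a < r b)
    (hdisj : ∀ a b, 1 ≤ a → a ≤ m → 1 ≤ b → b ≤ m → l a ≠ r b)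
    (sched : ℕ → Equiv.Perm (Fin (2 * n + 3)))
    (hsched0 : ∀ j : Fin (2 * n + 3), ((sched 0) j : ℕ) =
      if (j : ℕ) ≤ n then (j : ℕ)
      else if (j : ℕ) = n + 1 then 2 * n + 2
      else 3 * n + 3 - (j : ℕ))
    (hcenter : ∀ j, 1 ≤ j → j ≤ m → ∀ pos : Fin (2 * n + 3),
      (pos : ℕ) = n + 1 → (((sched j) pos : ℕ)) = 2 * n + 2)
    (hset : ∀ j, 1 ≤ j → j ≤ m → ∀ t : Fin (2 * n + 3),
      ((∃ a : Fin (2 * n + 3), (a : ℕ) ≤ n ∧ (sched j) a = t) ↔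
        (((∃ a : Fin (2 * n + 3), (a : ℕ) ≤ n ∧ (sched (j - 1)) a = t) ∧
            (t : ℕ) ≠ l j) ∨ (t : ℕ) = n + 1 + r j)))
    (hsortp : ∀ j, 1 ≤ j → j ≤ m → ∀ a b : Fin (2 * n + 3), a ≤ b → (b : ℕ) ≤ n →
      p (((sched j) a : ℕ)) ≤ p (((sched j) b : ℕ)))
    (hsorts : ∀ j, 1 ≤ j → j ≤ m → ∀ a b : Fin (2 * n + 3), n + 2 ≤ (a : ℕ) → a ≤ b →
      p (((sched j) a : ℕ)) + δ (((sched j) a : ℕ)) ≤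
        p (((sched j) b : ℕ)) + δ (((sched j) b : ℕ)))
    (j : ℕ) (hj1 : 1 ≤ j) (hjm : j ≤ m)
    (hcross : ∀ j', 1 ≤ j' → j' ≤ j → l j' < r j') :
    detSum n δ (sched j) = detSum n δ (sched (j - 1)) - (δ (l j) - δ (r j)) ∧
    δ (l j) - δ (r j) = 2 * ∑ k ∈ Finset.Icc (l j + 1) (r j), x k ∧
    gObj n p δ ML0 (sched (j - 1)) + (∑ k ∈ Finset.Icc (l j + 1) (r j), x k) ≤
      gObj n p δ ML0 (sched j) ∧
    (gObj n p δ ML0 (sched j) =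
        gObj n p δ ML0 (sched (j - 1)) + (∑ k ∈ Finset.Icc (l j + 1) (r j), x k) ↔
      (j = 1 ∨ r (j - 1) < l j)) := by
  classical
  have hlj : l j ≤ n := hln j hj1 hjm
  have hrj : r j ≤ n := hrn j hj1 hjm
  have hlrj : l j < r j := hcross j hj1 le_rfl
  -- monotonicity of p on [0,n]
  have hsplit : ∀ a b : ℕ, a ≤ b →
      Finset.Icc 1 b = Finset.Icc 1 a ∪ Finset.Ioc a b := by
    intro a b hab
    ext k
    simp only [Finset.mem_Icc, Finset.mem_union, Finset.mem_Ioc]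
    omega
  have hdisjIcc : ∀ a b : ℕ, Disjoint (Finset.Icc 1 a) (Finset.Ioc a b) := by
    intro a b
    rw [Finset.disjoint_left]
    intro k h1 h2
    simp only [Finset.mem_Icc] at h1
    simp only [Finset.mem_Ioc] at h2
    omega
  have hdiffp : ∀ a b : ℕ, a ≤ b → b ≤ n → p b - p a = ∑ k ∈ Finset.Ioc a b, x k := by
    intro a b hab hbn
    rw [hp a (by omega), hp b hbn, hsplit a b hab, Finset.sum_union (hdisjIcc a b)]
    ring
  have hmono : ∀ a b : ℕ, a ≤ b → b ≤ n → p a ≤ p b := by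
    intro a b hab hbn
    have h1 := hdiffp a b hab hbn
    have h2 : 0 ≤ ∑ k ∈ Finset.Ioc a b, x k := Finset.sum_nonneg (fun k hk => by
      rw [Finset.mem_Ioc] at hk
      exact le_of_lt (hx k (by omega) (by omega)))
    linarith
  have pstrict : ∀ a b : ℕ, a < b → b ≤ n → p a < p b := by
    intro a b hab hbn
    have h1 := hdiffp a b (le_of_lt hab) hbn
    have h2 : 0 < ∑ k ∈ Finset.Ioc a b, x k :=
      Finset.sum_pos (fun k hk => by
        rw [Finset.mem_Ioc] at hk
        exact hx k (by omega) (by omega)) (Finset.nonempty_Ioc.2 hab)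
    linarith
  have hPdiff : p (r j) - p (l j) = ∑ k ∈ Finset.Icc (l j + 1) (r j), x k := by
    rw [hdiffp (l j) (r j) (le_of_lt hlrj) hrj]
    apply Finset.sum_congr _ (fun _ _ => rfl)
    ext k
    simp only [Finset.mem_Ioc, Finset.mem_Icc]
    omega
  have hPlPr : p (l j) ≤ p (r j) := le_of_lt (pstrict _ _ hlrj hrj)
  -- the two special jobs
  obtain ⟨jl, hjlv⟩ : ∃ t : Fin (2*n+3), (t:ℕ) = l j := ⟨⟨l j, by omega⟩, rfl⟩
  obtain ⟨jr, hjrv⟩ : ∃ t : Fin (2*n+3), (t:ℕ) = n+1+r j := ⟨⟨n+1+r j, by omega⟩, rfl⟩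
  have hjljr : jl ≠ jr := by
    intro h
    rw [h, hjrv] at hjlv
    omega
  -- characterization of first-half job sets
  have memS := char_fhS n m l r hln hrn sched hsched0 hset (j-1) (by omega)
  have hjlS : jl ∈ fhS n (sched (j-1)) := by
    refine (memS jl).2 (Or.inl ⟨by rw [hjlv]; exact hlj, ?_⟩)
    intro k hk1 hk2
    rw [hjlv]
    exact (hlmono k j hk1 (by omega) hjm).ne'
  have hjrS : jr ∉ fhS n (sched (j-1)) := by
    intro h
    rcases (memS jr).1 h with ⟨h1, -⟩ | ⟨k, hk1, hk2, hke⟩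
    · rw [hjrv] at h1; omega
    · rw [hjrv] at hke
      have := hrmono k j hk1 (by omega) hjm
      omega
  have hSstep : fhS n (sched j) = insert jr ((fhS n (sched (j-1))).erase jl) := by
    ext t
    rw [Finset.mem_insert, Finset.mem_erase, mem_fhS_iff, mem_fhS_iff,
      hset j hj1 hjm t]
    constructor
    · rintro (⟨hmem, hne⟩ | heq)
      · right
        exact ⟨fun hc => hne (by rw [hc, hjlv]), hmem⟩
      · left
        apply Fin.ext
        rw [hjrv]; exact heq
    · rintro (rfl | ⟨hne, hmem⟩)
      · right; exact hjrv
      · left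
        exact ⟨hmem, fun hc => hne (Fin.ext (by rw [hjlv]; exact hc))⟩
  -- centers
  have hcpv : ((cpos n : Fin (2*n+3)) : ℕ) = n+1 := rfl
  have hcj : ((sched j) (cpos n) : ℕ) = 2*n+2 := hcenter j hj1 hjm (cpos n) hcpv
  have hcj1 : ((sched (j-1)) (cpos n) : ℕ) = 2*n+2 := by
    rcases Nat.lt_or_ge 1 j with h | h
    · exact hcenter (j-1) (by omega) (by omega) (cpos n) hcpv
    · have hj1e : j - 1 = 0 := by omega
      rw [hj1e, hsched0 (cpos n), hcpv]
      rw [if_neg (by omega), if_pos rfl]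
  -- second half sets
  have hjrU : jr ∈ shS n (sched (j-1)) := by
    rw [mem_shS_iff]
    refine ⟨?_, hjrS⟩
    intro hc
    rw [hc] at hjrv
    rw [hcj1] at hjrv
    omega
  have hjlU : jl ∉ shS n (sched (j-1)) := by
    rw [mem_shS_iff]
    rintro ⟨-, h2⟩
    exact h2 hjlS
  have hUstep : shS n (sched j) = insert jl ((shS n (sched (j-1))).erase jr) := by
    ext t
    rw [Finset.mem_insert, Finset.mem_erase, mem_shS_iff, mem_shS_iff, hSstep,
      Finset.mem_insert, Finset.mem_erase]
    have e1 : (t = (sched j) (cpos n)) ↔ (t:ℕ) = 2*n+2 := by rw [Fin.ext_iff, hcj]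
    have e2 : (t = (sched (j-1)) (cpos n)) ↔ (t:ℕ) = 2*n+2 := by rw [Fin.ext_iff, hcj1]
    simp only [Ne, e1, e2]
    have hjl2 : ¬ ((jl:ℕ) = 2*n+2) := by rw [hjlv]; omega
    have hjr2 : ¬ ((jr:ℕ) = 2*n+2) := by rw [hjrv]; omega
    constructor
    · rintro ⟨ht2, hnot⟩
      by_cases hjlc : t = jl
      · exact Or.inl hjlc
      · right
        refine ⟨fun hc => hnot (Or.inl hc), ht2, fun hS => hnot (Or.inr ⟨hjlc, hS⟩)⟩
    · rintro (rfl | ⟨hne, ht2, hnS⟩)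
      · refine ⟨hjl2, ?_⟩
        rintro (heq | ⟨hne', -⟩)
        · exact hjljr heq
        · exact hne' rfl
      · refine ⟨ht2, ?_⟩
        rintro (heq | ⟨-, hS⟩)
        · exact hne heq
        · exact hnS hS
  -- injectivity of l and r on the index interval
  have hlinj : ∀ k1 ∈ Finset.Icc 1 (j-1), ∀ k2 ∈ Finset.Icc 1 (j-1), l k1 = l k2 → k1 = k2 := by
    intro k1 h1 k2 h2 he
    rw [Finset.mem_Icc] at h1 h2
    by_contra hne
    rcases Nat.lt_or_ge k1 k2 with h | h
    · exact absurd he (Nat.ne_of_lt (hlmono k1 k2 h1.1 h (by omega)))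
    · exact absurd he.symm (Nat.ne_of_lt (hlmono k2 k1 h2.1 (by omega) (by omega)))
  have hrinj : ∀ k1 ∈ Finset.Icc 1 (j-1), ∀ k2 ∈ Finset.Icc 1 (j-1),
      n+1+r k1 = n+1+r k2 → k1 = k2 := by
    intro k1 h1 k2 h2 he
    rw [Finset.mem_Icc] at h1 h2
    by_contra hne
    rcases Nat.lt_or_ge k1 k2 with h | h
    · have := hrmono k1 k2 h1.1 h (by omega); omega
    · have := hrmono k2 k1 h2.1 (by omega) (by omega); omega
  -- explicit description of the first-half set
  have hbndS : ∀ i ∈ ((Finset.range (n+1)) \ ((Finset.Icc 1 (j-1)).image l))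
      ∪ ((Finset.Icc 1 (j-1)).image (fun k => n+1+r k)), i < 2*n+3 := by
    intro i hi
    rcases Finset.mem_union.1 hi with h | h
    · have := (Finset.mem_sdiff.1 h).1
      rw [Finset.mem_range] at this
      omega
    · obtain ⟨k, hk, rfl⟩ := Finset.mem_image.1 h
      rw [Finset.mem_Icc] at hk
      have := hrn k hk.1 (by omega)
      omega
  have hSeq : fhS n (sched (j-1)) = Finset.attachFin _ hbndS := by
    ext t
    rw [memS t, Finset.mem_attachFin, Finset.mem_union, Finset.mem_sdiff, Finset.mem_range]
    constructor
    · rintro (⟨ht, hall⟩ | ⟨k, h1, h2, ht⟩)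
      · left
        refine ⟨by omega, ?_⟩
        rintro hmem
        obtain ⟨k, hk, hlk⟩ := Finset.mem_image.1 hmem
        rw [Finset.mem_Icc] at hk
        exact hall k hk.1 hk.2 hlk.symm
      · right
        exact Finset.mem_image.2 ⟨k, Finset.mem_Icc.2 ⟨h1, h2⟩, ht.symm⟩
    · rintro (⟨ht, hnmem⟩ | hmem)
      · left
        refine ⟨by omega, fun k hk1 hk2 he => ?_⟩
        exact hnmem (Finset.mem_image.2 ⟨k, Finset.mem_Icc.2 ⟨hk1, hk2⟩, he.symm⟩)
      · obtain ⟨k, hk, hke⟩ := Finset.mem_image.1 hmem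
        rw [Finset.mem_Icc] at hk
        right
        exact ⟨k, hk.1, hk.2, hke.symm⟩
  have hsubL : (Finset.Icc 1 (j-1)).image l ⊆ Finset.range (n+1) := by
    intro i hi
    obtain ⟨k, hk, rfl⟩ := Finset.mem_image.1 hi
    rw [Finset.mem_Icc] at hk
    rw [Finset.mem_range]
    have := hln k hk.1 (by omega)
    omega
  have hdSN : Disjoint ((Finset.range (n+1)) \ ((Finset.Icc 1 (j-1)).image l))
      ((Finset.Icc 1 (j-1)).image (fun k => n+1+r k)) := by
    rw [Finset.disjoint_left]
    intro i h1 h2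
    have := (Finset.mem_sdiff.1 h1).1
    rw [Finset.mem_range] at this
    obtain ⟨k, hk, hke⟩ := Finset.mem_image.1 h2
    omega
  have sumS : ∀ F : ℕ → ℤ, ∑ t ∈ fhS n (sched (j-1)), F (t:ℕ)
      = (∑ i ∈ Finset.range (n+1), F i) - (∑ k ∈ Finset.Icc 1 (j-1), F (l k))
        + ∑ k ∈ Finset.Icc 1 (j-1), F (n+1+r k) := by
    intro F
    rw [hSeq, sum_attachFin_val, Finset.sum_union hdSN, Finset.sum_sdiff_eq_sub hsubL,
      Finset.sum_image hlinj, Finset.sum_image hrinj]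
  -- explicit description of the second-half set
  have hbndU : ∀ i ∈ (((Finset.range (n+1)).image (fun i => n+1+i))
        \ ((Finset.Icc 1 (j-1)).image (fun k => n+1+r k)))
      ∪ ((Finset.Icc 1 (j-1)).image l), i < 2*n+3 := by
    intro i hi
    rcases Finset.mem_union.1 hi with h | h
    · obtain ⟨i', hi', rfl⟩ := Finset.mem_image.1 (Finset.mem_sdiff.1 h).1
      rw [Finset.mem_range] at hi'
      omega
    · obtain ⟨k, hk, rfl⟩ := Finset.mem_image.1 h
      rw [Finset.mem_Icc] at hk
      have := hln k hk.1 (by omega)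
      omega
  have hUeq : shS n (sched (j-1)) = Finset.attachFin _ hbndU := by
    ext t
    rw [mem_shS_iff, Finset.mem_attachFin, Finset.mem_union, Finset.mem_sdiff]
    have e2 : (t = (sched (j-1)) (cpos n)) ↔ (t:ℕ) = 2*n+2 := by rw [Fin.ext_iff, hcj1]
    rw [Ne, e2]
    constructor
    · rintro ⟨ht2, htS⟩
      have hnc : ¬ ((((t:ℕ) ≤ n ∧ ∀ k, 1 ≤ k → k ≤ j-1 → (t:ℕ) ≠ l k)
          ∨ ∃ k, 1 ≤ k ∧ k ≤ j-1 ∧ (t:ℕ) = n+1+r k)) := fun hch => htS ((memS t).2 hch)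
      push_neg at hnc
      obtain ⟨hA, hB⟩ := hnc
      rcases le_or_gt ((t:ℕ)) n with hle | hgt
      · right
        obtain ⟨k, hk1, hk2, hke⟩ := hA hle
        exact Finset.mem_image.2 ⟨k, Finset.mem_Icc.2 ⟨hk1, hk2⟩, hke.symm⟩
      · left
        have hlt : (t:ℕ) < 2*n+3 := t.isLt
        constructor
        · exact Finset.mem_image.2 ⟨(t:ℕ) - (n+1), Finset.mem_range.2 (by omega), by omega⟩
        · intro hmem
          obtain ⟨k, hk, hke⟩ := Finset.mem_image.1 hmem
          rw [Finset.mem_Icc] at hk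
          exact hB k hk.1 hk.2 hke.symm
    · rintro (⟨hmem, hnmem⟩ | hmem)
      · obtain ⟨i', hi', hie⟩ := Finset.mem_image.1 hmem
        rw [Finset.mem_range] at hi'
        refine ⟨by omega, fun htS => ?_⟩
        rcases (memS t).1 htS with ⟨h1, -⟩ | ⟨k, hk1, hk2, hke⟩
        · omega
        · exact hnmem (Finset.mem_image.2 ⟨k, Finset.mem_Icc.2 ⟨hk1, hk2⟩, hke.symm⟩)
      · obtain ⟨k, hk, hke⟩ := Finset.mem_image.1 hmem
        rw [Finset.mem_Icc] at hk
        have hlkn := hln k hk.1 (by omega)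
        refine ⟨by omega, fun htS => ?_⟩
        rcases (memS t).1 htS with ⟨-, hall⟩ | ⟨k', hk1', hk2', hke'⟩
        · exact hall k hk.1 hk.2 hke.symm
        · omega
  have haddinj : ∀ k1 ∈ Finset.range (n+1), ∀ k2 ∈ Finset.range (n+1),
      n+1+k1 = n+1+k2 → k1 = k2 := by
    intro k1 _ k2 _ h
    omega
  have hsubR : (Finset.Icc 1 (j-1)).image (fun k => n+1+r k)
      ⊆ (Finset.range (n+1)).image (fun i => n+1+i) := by
    intro i hi
    obtain ⟨k, hk, rfl⟩ := Finset.mem_image.1 hi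
    rw [Finset.mem_Icc] at hk
    exact Finset.mem_image.2 ⟨r k, Finset.mem_range.2 (by
      have := hrn k hk.1 (by omega); omega), rfl⟩
  have hdUN : Disjoint (((Finset.range (n+1)).image (fun i => n+1+i))
        \ ((Finset.Icc 1 (j-1)).image (fun k => n+1+r k)))
      ((Finset.Icc 1 (j-1)).image l) := by
    rw [Finset.disjoint_left]
    intro i h1 h2
    obtain ⟨i', hi', rfl⟩ := Finset.mem_image.1 (Finset.mem_sdiff.1 h1).1
    obtain ⟨k, hk, hke⟩ := Finset.mem_image.1 h2
    rw [Finset.mem_Icc] at hk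
    have := hln k hk.1 (by omega)
    omega
  have sumU : ∀ F : ℕ → ℤ, ∑ t ∈ shS n (sched (j-1)), F (t:ℕ)
      = (∑ i ∈ Finset.range (n+1), F (n+1+i)) - (∑ k ∈ Finset.Icc 1 (j-1), F (n+1+r k))
        + ∑ k ∈ Finset.Icc 1 (j-1), F (l k) := by
    intro F
    rw [hUeq, sum_attachFin_val, Finset.sum_union hdUN, Finset.sum_sdiff_eq_sub hsubR,
      Finset.sum_image haddinj, Finset.sum_image hrinj, Finset.sum_image hlinj]
  -- sortedness hypotheses for sched (j-1)
  have hsp1 : ∀ a b : Fin (2*n+3), a ≤ b → (b:ℕ) ≤ n →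
      p (((sched (j-1)) a : ℕ)) ≤ p (((sched (j-1)) b : ℕ)) := by
    rcases Nat.lt_or_ge 1 j with h | h
    · exact hsortp (j-1) (by omega) (by omega)
    · have hj1e : j - 1 = 0 := by omega
      rw [hj1e]
      exact sched0_sorted_p n p hmono (sched 0) hsched0
  have hss1 : ∀ a b : Fin (2*n+3), n + 2 ≤ (a:ℕ) → a ≤ b →
      p (((sched (j-1)) a : ℕ)) + δ (((sched (j-1)) a : ℕ))
        ≤ p (((sched (j-1)) b : ℕ)) + δ (((sched (j-1)) b : ℕ)) := by
    rcases Nat.lt_or_ge 1 j with h | h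
    · exact hsorts (j-1) (by omega) (by omega)
    · have hj1e : j - 1 = 0 := by omega
      rw [hj1e]
      exact sched0_sorted_s n M p δ hmono hp' hδ hδ' (sched 0) hsched0
  have form1 := gObj_setform n p δ ML0 (sched (j-1)) hcj1 hsp1 hss1
  have form2 := gObj_setform n p δ ML0 (sched j) hcj (hsortp j hj1 hjm) (hsorts j hj1 hjm)
  rw [hSstep, hUstep] at form2
  rw [sum_insert_erase _ jl jr hjlS hjrS (fun t : Fin (2*n+3) => p ((t:ℕ)))] at form2
  rw [sum_insert_erase _ jl jr hjlS hjrS (fun t : Fin (2*n+3) => δ ((t:ℕ)))] at form2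
  rw [sum_insert_erase _ jr jl hjrU hjlU
    (fun t : Fin (2*n+3) => p ((t:ℕ)) + δ ((t:ℕ)))] at form2
  rw [prodmax_swap _ jl jr hjlS hjrS (fun t : Fin (2*n+3) => p ((t:ℕ)))] at form2
  rw [prodmax_swap _ jr jl hjrU hjlU
    (fun t : Fin (2*n+3) => p ((t:ℕ)) + δ ((t:ℕ)))] at form2
  simp only [hjlv, hjrv, hp' (r j) hrj, hδ' (r j) hrj, max_self] at form2
  -- abbreviations (statement level only)
  have hcard : (((Finset.Icc 1 (j-1)).card : ℕ) : ℤ) = ((j-1 : ℕ) : ℤ) := by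
    rw [Nat.card_Icc]
    have e : j - 1 + 1 - 1 = j - 1 := by omega
    rw [e]
  have hkIcc : ∀ k ∈ Finset.Icc 1 (j-1), 1 ≤ k ∧ k ≤ j - 1 := fun k hk =>
    Finset.mem_Icc.1 hk
  have hptw : ∀ v : ℤ, max v (p (r j)) - max v (p (l j))
      = (p (r j) - p (l j)) - (min v (p (r j)) - min v (p (l j))) := by
    intro v
    have e1 := max_add_min v (p (r j))
    have e2 := max_add_min v (p (l j))
    linarith
  -- evaluation of the first-half exchange sum
  have hE1f : ∑ v ∈ (fhS n (sched (j-1))).erase jl,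
        (max (p (v:ℕ)) (p (r j)) - max (p (v:ℕ)) (p (l j)))
      = (n:ℤ) * (p (r j) - p (l j))
        - (∑ i ∈ Finset.range (n+1), (min (p i) (p (r j)) - min (p i) (p (l j))))
        - (∑ k ∈ Finset.Icc 1 (j-1),
            (min (p (r k)) (p (r j)) - min (p (r k)) (p (l j)))) := by
    have h1 := Finset.sum_erase_add (fhS n (sched (j-1)))
      (fun v : Fin (2*n+3) => max (p (v:ℕ)) (p (r j)) - max (p (v:ℕ)) (p (l j))) hjlS
    have h2 := sumS (fun i => max (p i) (p (r j)) - max (p i) (p (l j)))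
    beta_reduce at h1 h2
    rw [hjlv, max_self, max_eq_right hPlPr] at h1
    have hGl_sum : ∑ k ∈ Finset.Icc 1 (j-1), (max (p (l k)) (p (r j)) - max (p (l k)) (p (l j)))
        = (((Finset.Icc 1 (j-1)).card : ℕ) : ℤ) * (p (r j) - p (l j)) := by
      have hterm : ∀ k ∈ Finset.Icc 1 (j-1),
          max (p (l k)) (p (r j)) - max (p (l k)) (p (l j)) = p (r j) - p (l j) := by
        intro k hk
        obtain ⟨hk1, hk2⟩ := hkIcc k hk
        have hplk : p (l k) ≤ p (l j) :=
          hmono _ _ (le_of_lt (hlmono k j hk1 (by omega) hjm)) hlj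
        rw [max_eq_right (le_trans hplk hPlPr), max_eq_right hplk]
      rw [Finset.sum_congr rfl hterm, Finset.sum_const, nsmul_eq_mul]
    have hGr_sum : ∑ k ∈ Finset.Icc 1 (j-1),
          (max (p (n+1+r k)) (p (r j)) - max (p (n+1+r k)) (p (l j)))
        = (((Finset.Icc 1 (j-1)).card : ℕ) : ℤ) * (p (r j) - p (l j))
          - ∑ k ∈ Finset.Icc 1 (j-1),
              (min (p (r k)) (p (r j)) - min (p (r k)) (p (l j))) := by
      have hterm : ∀ k ∈ Finset.Icc 1 (j-1),
          max (p (n+1+r k)) (p (r j)) - max (p (n+1+r k)) (p (l j))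
            = (p (r j) - p (l j)) - (min (p (r k)) (p (r j)) - min (p (r k)) (p (l j))) := by
        intro k hk
        obtain ⟨hk1, hk2⟩ := hkIcc k hk
        rw [hp' (r k) (hrn k hk1 (by omega))]
        exact hptw (p (r k))
      rw [Finset.sum_congr rfl hterm, Finset.sum_sub_distrib, Finset.sum_const, nsmul_eq_mul]
    have hrangesum : ∑ i ∈ Finset.range (n+1),
          (max (p i) (p (r j)) - max (p i) (p (l j)))
        = ((n:ℤ)+1) * (p (r j) - p (l j))
          - ∑ i ∈ Finset.range (n+1), (min (p i) (p (r j)) - min (p i) (p (l j))) := by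
      have hterm : ∀ i ∈ Finset.range (n+1),
          max (p i) (p (r j)) - max (p i) (p (l j))
            = (p (r j) - p (l j)) - (min (p i) (p (r j)) - min (p i) (p (l j))) :=
        fun i _ => hptw (p i)
      rw [Finset.sum_congr rfl hterm, Finset.sum_sub_distrib, Finset.sum_const,
        Finset.card_range, nsmul_eq_mul]
      push_cast
      ring
    rw [hGl_sum, hGr_sum, hrangesum, hcard] at h2
    linarith [h1, h2]
  -- second-half helpers
  have hsval : ∀ i : ℕ, i ≤ n → p i + δ i = M - p i := by
    intro i hi
    rw [hδ i hi]
    ring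
  have hmaxflip : ∀ u v : ℤ, max (M - u) (M - v) = M - min u v := fun u v =>
    max_sub_sub_left M u v
  have hHtw : ∀ i : ℕ, i ≤ n →
      max (p i + δ i) (p (l j) + δ (l j)) - max (p i + δ i) (p (r j) + δ (r j))
        = min (p i) (p (r j)) - min (p i) (p (l j)) := by
    intro i hi
    rw [hsval i hi, hsval (l j) hlj, hsval (r j) hrj, hmaxflip, hmaxflip]
    ring
  -- evaluation of the second-half exchange sum
  have hE2f : ∑ v ∈ (shS n (sched (j-1))).erase jr,
        (max (p (v:ℕ) + δ (v:ℕ)) (p (l j) + δ (l j))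
          - max (p (v:ℕ) + δ (v:ℕ)) (p (r j) + δ (r j)))
      = (∑ i ∈ Finset.range (n+1), (min (p i) (p (r j)) - min (p i) (p (l j))))
        - (∑ k ∈ Finset.Icc 1 (j-1),
            (min (p (r k)) (p (r j)) - min (p (r k)) (p (l j))))
        - (p (r j) - p (l j)) := by
    have h1 := Finset.sum_erase_add (shS n (sched (j-1)))
      (fun v : Fin (2*n+3) => max (p (v:ℕ) + δ (v:ℕ)) (p (l j) + δ (l j))
        - max (p (v:ℕ) + δ (v:ℕ)) (p (r j) + δ (r j))) hjrU
    have h2 := sumU (fun i => max (p i + δ i) (p (l j) + δ (l j))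
      - max (p i + δ i) (p (r j) + δ (r j)))
    beta_reduce at h1 h2
    rw [hjrv, hp' (r j) hrj, hδ' (r j) hrj] at h1
    have hfjr : max (p (r j) + δ (r j)) (p (l j) + δ (l j))
        - max (p (r j) + δ (r j)) (p (r j) + δ (r j)) = p (r j) - p (l j) := by
      rw [max_self, hsval (l j) hlj, hsval (r j) hrj, hmaxflip, min_eq_right hPlPr]
      ring
    rw [hfjr] at h1
    have e_mid : ∑ i ∈ Finset.range (n+1),
          (max (p (n+1+i) + δ (n+1+i)) (p (l j) + δ (l j))
            - max (p (n+1+i) + δ (n+1+i)) (p (r j) + δ (r j)))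
        = ∑ i ∈ Finset.range (n+1), (min (p i) (p (r j)) - min (p i) (p (l j))) :=
      Finset.sum_congr rfl (fun i hi => by
        rw [Finset.mem_range] at hi
        rw [hp' i (by omega), hδ' i (by omega)]
        exact hHtw i (by omega))
    have e_rk : ∑ k ∈ Finset.Icc 1 (j-1),
          (max (p (n+1+r k) + δ (n+1+r k)) (p (l j) + δ (l j))
            - max (p (n+1+r k) + δ (n+1+r k)) (p (r j) + δ (r j)))
        = ∑ k ∈ Finset.Icc 1 (j-1),
            (min (p (r k)) (p (r j)) - min (p (r k)) (p (l j))) :=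
      Finset.sum_congr rfl (fun k hk => by
        obtain ⟨hk1, hk2⟩ := hkIcc k hk
        have hrkn := hrn k hk1 (by omega)
        rw [hp' (r k) hrkn, hδ' (r k) hrkn]
        exact hHtw (r k) hrkn)
    have e_lk : ∑ k ∈ Finset.Icc 1 (j-1),
          (max (p (l k) + δ (l k)) (p (l j) + δ (l j))
            - max (p (l k) + δ (l k)) (p (r j) + δ (r j))) = 0 :=
      Finset.sum_eq_zero (fun k hk => by
        obtain ⟨hk1, hk2⟩ := hkIcc k hk
        have hlkn : l k ≤ n := hln k hk1 (by omega)
        have hplk : p (l k) ≤ p (l j) :=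
          hmono _ _ (le_of_lt (hlmono k j hk1 (by omega) hjm)) hlj
        rw [hHtw (l k) hlkn, min_eq_left (le_trans hplk hPlPr), min_eq_left hplk]
        ring)
    rw [e_mid, e_rk, e_lk] at h2
    linarith [h1, h2]
  -- the key exchange identity
  have key2 : 2 * gObj n p δ ML0 (sched j)
      = 2 * gObj n p δ ML0 (sched (j-1)) + 2*(p (r j) - p (l j))
        + 4 * ∑ k ∈ Finset.Icc 1 (j-1),
            (min (p (r k)) (p (r j)) - min (p (r k)) (p (l j))) := by
    rw [hE1f, hE2f, hδ (l j) hlj, hδ (r j) hrj] at form2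
    linear_combination form2 - form1
  have key : gObj n p δ ML0 (sched j)
      = gObj n p δ ML0 (sched (j-1)) + (p (r j) - p (l j))
        + 2 * ∑ k ∈ Finset.Icc 1 (j-1),
            (min (p (r k)) (p (r j)) - min (p (r k)) (p (l j))) := by
    linarith [key2]
  have hCnn : ∀ k ∈ Finset.Icc 1 (j-1),
      0 ≤ min (p (r k)) (p (r j)) - min (p (r k)) (p (l j)) := by
    intro k hk
    have := min_le_min (le_refl (p (r k))) hPlPr
    linarith
  have hCsum_nn : 0 ≤ ∑ k ∈ Finset.Icc 1 (j-1),
      (min (p (r k)) (p (r j)) - min (p (r k)) (p (l j))) := Finset.sum_nonneg hCnn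
  refine ⟨?_, ?_, ?_, ?_⟩
  · -- (i) change of deterioration sum
    rw [detSum_eq, detSum_eq, hSstep,
      sum_insert_erase _ jl jr hjlS hjrS (fun t : Fin (2*n+3) => δ ((t:ℕ)))]
    rw [hjlv, hjrv, hδ' (r j) hrj]
    ring
  · -- (ii)
    rw [hδ (l j) hlj, hδ (r j) hrj]
    linarith [hPdiff]
  · -- (iii)
    linarith [key, hPdiff, hCsum_nn]
  · -- (iv)
    constructor
    · intro heq
      have hC0 : ∑ k ∈ Finset.Icc 1 (j-1),
          (min (p (r k)) (p (r j)) - min (p (r k)) (p (l j))) = 0 := by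
        linarith [key, hPdiff]
      by_cases hj1e : j = 1
      · exact Or.inl hj1e
      · right
        have hmem : j - 1 ∈ Finset.Icc 1 (j-1) := Finset.mem_Icc.2 ⟨by omega, le_rfl⟩
        have hterm0 := (Finset.sum_eq_zero_iff_of_nonneg hCnn).1 hC0 (j-1) hmem
        by_contra hcon
        push_neg at hcon
        have hne : l j ≠ r (j-1) := hdisj j (j-1) hj1 hjm (by omega) (by omega)
        have hlt : l j < r (j-1) := by omega
        have h1 : p (l j) < p (r (j-1)) := pstrict _ _ hlt (hrn (j-1) (by omega) (by omega))
        have h2 : p (l j) < p (r j) := pstrict _ _ hlrj hrj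
        have h3 : min (p (r (j-1))) (p (l j)) = p (l j) := min_eq_right (le_of_lt h1)
        have h4 : p (l j) < min (p (r (j-1))) (p (r j)) := lt_min h1 h2
        rw [h3] at hterm0
        linarith [hterm0]
    · intro h
      have hC0 : ∑ k ∈ Finset.Icc 1 (j-1),
          (min (p (r k)) (p (r j)) - min (p (r k)) (p (l j))) = 0 :=
        Finset.sum_eq_zero (fun k hk => by
          obtain ⟨hk1, hk2⟩ := hkIcc k hk
          have hrkl : r k < l j := by
            rcases h with hj1e | hrl
            · omega
            · have : r k ≤ r (j-1) := by
                rcases Nat.eq_or_lt_of_le hk2 with he | hlt2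
                · exact le_of_eq (congrArg r he)
                · exact le_of_lt (hrmono k (j-1) hk1 hlt2 (by omega))
              omega
          have hprk : p (r k) ≤ p (l j) := hmono _ _ (le_of_lt hrkl) hlj
          rw [min_eq_left (le_trans hprk hPlPr), min_eq_left hprk]
          ring)
      rw [hC0] at key
      linarith [key, hPdiff]
end

section
/- Let R = {r_1 < r_2 < … < r_m} and L = {ℓ_1 < ℓ_2 < … < ℓ_m} be disjoint subsets of {0,1,…,n}. Starting from the initial schedule π^0, for j = 1,…,m let π^j be obtained from π^{j−1} by exchanging the jobs J_{ℓ_j} and J_{n+1+r_j}, then re-sorting the first n+1 positions in nondecreasing order of processing time and the last n+1 positions in nondecreasing order of p+δ (keeping J_{2n+2} at position n+2). Fix j with 1 ≤ j ≤ m and suppose ℓ_j > r_j. Then: (i) the total deterioration of the first n+1 jobs of π^j equals that of π^{j−1} plus δ_{r_j} − δ_{ℓ_j} = 2 Σ_{k=r_j+1}^{ℓ_j} x_k; and (ii) G(π^j) ≥ G(π^{j−1}) + Σ_{k=r_j+1}^{ℓ_j} x_k. -/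
open Finset

lemma auxSumInsertErase {α : Type*} [DecidableEq α] (S : Finset α) (e e' : α)
    (he : e ∈ S) (he' : e' ∉ S) (v : α → ℤ) :
    ∑ t ∈ insert e' (S.erase e), v t = ∑ t ∈ S, v t + v e' - v e := by
  rw [Finset.sum_insert (fun h => he' (Finset.mem_of_mem_erase h)),
    Finset.sum_erase_eq_sub he]
  ring

lemma auxDoubleMinChange {α : Type*} [DecidableEq α] (S : Finset α) (e e' : α)
    (he : e ∈ S) (he' : e' ∉ S) (v : α → ℤ) :
    (∑ t ∈ insert e' (S.erase e), ∑ u ∈ insert e' (S.erase e), min (v t) (v u))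
      = (∑ t ∈ S, ∑ u ∈ S, min (v t) (v u))
        + 2 * (∑ t ∈ S.erase e, (min (v t) (v e') - min (v t) (v e)))
        + (v e' - v e) := by
  have hT' : e' ∉ S.erase e := fun h => he' (Finset.mem_of_mem_erase h)
  have hT : e ∉ S.erase e := Finset.notMem_erase e S
  have expand : ∀ w : α, w ∉ S.erase e →
      (∑ t ∈ insert w (S.erase e), ∑ u ∈ insert w (S.erase e), min (v t) (v u))
      = v w + 2 * ∑ t ∈ S.erase e, min (v t) (v w)
        + ∑ t ∈ S.erase e, ∑ u ∈ S.erase e, min (v t) (v u) := by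
    intro w hw
    rw [Finset.sum_insert hw, Finset.sum_insert hw,
      Finset.sum_congr rfl (fun t _ => Finset.sum_insert hw), Finset.sum_add_distrib]
    have hc : ∑ t ∈ S.erase e, min (v w) (v t) = ∑ t ∈ S.erase e, min (v t) (v w) :=
      Finset.sum_congr rfl (fun t _ => min_comm _ _)
    simp only [min_self]
    linarith
  have h1 := expand e' hT'
  have h2 := expand e hT
  rw [Finset.insert_erase he] at h2
  rw [h1, h2, Finset.sum_sub_distrib]
  ring

lemma auxSorted {N : ℕ} (H : Finset (Fin N)) (f : Fin N → ℤ)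
    (hs : ∀ a ∈ H, ∀ b ∈ H, a ≤ b → f a ≤ f b) :
    (∑ a ∈ H, ∑ b ∈ H, min (f a) (f b))
      = 2 * (∑ a ∈ H, ((H.filter (fun b => a < b)).card : ℤ) * f a) + ∑ a ∈ H, f a := by
  have key : ∀ a ∈ H, ∑ b ∈ H, min (f a) (f b)
      = ((H.filter (fun b => a < b)).card : ℤ) * f a
        + ∑ b ∈ H.filter (fun b => ¬ a < b), f b := by
    intro a ha
    rw [← Finset.sum_filter_add_sum_filter_not H (fun b => a < b)]
    congr 1
    · rw [Finset.sum_congr rfl (fun b hb => ?_), Finset.sum_const, nsmul_eq_mul, mul_comm]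
      · rw [Finset.mem_filter] at hb
        exact min_eq_left (hs a ha b hb.1 (le_of_lt hb.2))
    · refine Finset.sum_congr rfl (fun b hb => ?_)
      rw [Finset.mem_filter] at hb
      exact min_eq_right (hs b hb.1 a ha (not_lt.mp hb.2))
  rw [Finset.sum_congr rfl key, Finset.sum_add_distrib]
  have swap : ∑ a ∈ H, ∑ b ∈ H.filter (fun b => ¬ a < b), f b
      = ∑ b ∈ H, ∑ a ∈ H.filter (fun a => b ≤ a), f b := by
    refine Finset.sum_comm' ?_
    intro a b
    simp only [Finset.mem_filter, not_lt]
    tauto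
  rw [swap]
  have hcard : ∀ b ∈ H, (H.filter (fun a => b ≤ a)).card
      = (H.filter (fun a => b < a)).card + 1 := by
    intro b hb
    have : H.filter (fun a => b ≤ a) = insert b (H.filter (fun a => b < a)) := by
      ext c
      simp only [Finset.mem_filter, Finset.mem_insert]
      constructor
      · rintro ⟨hc, hbc⟩
        rcases eq_or_lt_of_le hbc with h | h
        · exact Or.inl h.symm
        · exact Or.inr ⟨hc, h⟩
      · rintro (rfl | ⟨hc, hbc⟩)
        · exact ⟨hb, le_refl _⟩
        · exact ⟨hc, le_of_lt hbc⟩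
    rw [this, Finset.card_insert_of_notMem (by simp)]
  have heq : ∑ b ∈ H, ∑ a ∈ H.filter (fun a => b ≤ a), f b
      = ∑ b ∈ H, (((H.filter (fun a => b < a)).card : ℤ) * f b + f b) := by
    refine Finset.sum_congr rfl (fun b hb => ?_)
    rw [Finset.sum_const, nsmul_eq_mul, hcard b hb]
    push_cast
    ring
  rw [heq, Finset.sum_add_distrib]
  ring

lemma auxMinBeta (z a b M' : ℤ) :
    min (M' - z) (M' - a) - min (M' - z) (M' - b) = (b - a) - (min z b - min z a) := by
  rw [min_sub_sub_left, min_sub_sub_left]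
  have h1 : max z a + min z a = z + a := max_add_min z a
  have h2 : max z b + min z b = z + b := max_add_min z b
  linarith

set_option maxHeartbeats 2000000 in
/-- let `R = {r_1 < … < r_m}` and `L = {ℓ_1 < … < ℓ_m}` be disjoint
subsets of `{0,…,n}`. Starting from the initial schedule `π⁰`, the `j`-th step
exchanges jobs `J_{ℓ_j}` and `J_{n+1+r_j}` and re-sorts the first `n+1` positions in
nondecreasing `p` and the last `n+1` positions in nondecreasing `p + δ`, keeping
`J_{2n+2}` at the center position. Fix `j ∈ [1,m]` with `ℓ_j > r_j`. Then (i) the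
total deterioration of the first `n+1` jobs increases by
`δ_{r_j} - δ_{ℓ_j} = 2 Σ_{k=r_j+1}^{ℓ_j} x_k`, and (ii)
`G(π^j) ≥ G(π^{j-1}) + Σ_{k=r_j+1}^{ℓ_j} x_k`. -/
theorem stmt9
    (n : ℕ) (x : ℕ → ℤ) (B M : ℤ)
    (hx : ∀ i, 1 ≤ i → i ≤ n → 0 < x i)
    (hB : ∑ i ∈ Finset.Icc 1 n, x i = 2 * B)
    (hM : (4 * (n : ℤ) + 8) * B < M)
    (p δ : ℕ → ℤ)
    (hp : ∀ i ≤ n, p i = ∑ j ∈ Finset.Icc 1 i, x j)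
    (hp' : ∀ i ≤ n, p (n + 1 + i) = p i)
    (hplast : p (2 * n + 2) = M - 2 * B)
    (hδ : ∀ i ≤ n, δ i = M - 2 * p i)
    (hδ' : ∀ i ≤ n, δ (n + 1 + i) = δ i)
    (hδlast : δ (2 * n + 2) = 0)
    (ML0 : ℤ) (hML0 : ML0 = (∑ i ∈ Finset.range (n + 1), δ i) - 2 * B)
    (Q0 : ℤ)
    (hQ0 : Q0 = (∑ j ∈ Finset.range (n + 1), ((n : ℤ) - (j : ℤ) + 1) * p j)
      + ((n : ℤ) + 2) * ((∑ j ∈ Finset.range (n + 1), p j) + 2 * B + p (2 * n + 2))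
      + (∑ j ∈ Finset.range (n + 1), ((j : ℤ) + 1) * (p j + δ j)))
    (m : ℕ) (l r : ℕ → ℕ)
    (hln : ∀ j, 1 ≤ j → j ≤ m → l j ≤ n)
    (hrn : ∀ j, 1 ≤ j → j ≤ m → r j ≤ n)
    (hlmono : ∀ a b, 1 ≤ a → a < b → b ≤ m → l a < l b)
    (hrmono : ∀ a b, 1 ≤ a → a < b → b ≤ m → r a < r b)
    (hdisj : ∀ a b, 1 ≤ a → a ≤ m → 1 ≤ b → b ≤ m → l a ≠ r b)
    (sched : ℕ → Equiv.Perm (Fin (2 * n + 3)))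
    (hsched0 : ∀ j : Fin (2 * n + 3), ((sched 0) j : ℕ) =
      if (j : ℕ) ≤ n then (j : ℕ)
      else if (j : ℕ) = n + 1 then 2 * n + 2
      else 3 * n + 3 - (j : ℕ))
    (hcenter : ∀ j, 1 ≤ j → j ≤ m → ∀ pos : Fin (2 * n + 3),
      (pos : ℕ) = n + 1 → (((sched j) pos : ℕ)) = 2 * n + 2)
    (hset : ∀ j, 1 ≤ j → j ≤ m → ∀ t : Fin (2 * n + 3),
      ((∃ a : Fin (2 * n + 3), (a : ℕ) ≤ n ∧ (sched j) a = t) ↔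
        (((∃ a : Fin (2 * n + 3), (a : ℕ) ≤ n ∧ (sched (j - 1)) a = t) ∧
            (t : ℕ) ≠ l j) ∨ (t : ℕ) = n + 1 + r j)))
    (hsortp : ∀ j, 1 ≤ j → j ≤ m → ∀ a b : Fin (2 * n + 3), a ≤ b → (b : ℕ) ≤ n →
      p (((sched j) a : ℕ)) ≤ p (((sched j) b : ℕ)))
    (hsorts : ∀ j, 1 ≤ j → j ≤ m → ∀ a b : Fin (2 * n + 3), n + 2 ≤ (a : ℕ) → a ≤ b →
      p (((sched j) a : ℕ)) + δ (((sched j) a : ℕ)) ≤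
        p (((sched j) b : ℕ)) + δ (((sched j) b : ℕ)))
    (j : ℕ) (hj1 : 1 ≤ j) (hjm : j ≤ m)
    (hgt : r j < l j) :
    detSum n δ (sched j) = detSum n δ (sched (j - 1)) + (δ (r j) - δ (l j)) ∧
    δ (r j) - δ (l j) = 2 * ∑ k ∈ Finset.Icc (r j + 1) (l j), x k ∧
    gObj n p δ ML0 (sched (j - 1)) + (∑ k ∈ Finset.Icc (r j + 1) (l j), x k) ≤
      gObj n p δ ML0 (sched j) := by
  clear hM hplast hδlast hML0 hQ0 hB
  -- basic Fin constructor
  have hNlt : ∀ k : ℕ, k % (2 * n + 3) < 2 * n + 3 := fun k => Nat.mod_lt _ (by omega)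
  set fj : ℕ → Fin (2 * n + 3) := fun k => ⟨k % (2 * n + 3), hNlt k⟩ with hfjdef
  have fjv : ∀ k, k ≤ 2 * n + 2 → ((fj k : Fin (2 * n + 3)) : ℕ) = k :=
    fun k hk => Nat.mod_eq_of_lt (by omega)
  have fne : ∀ k k', k ≤ 2 * n + 2 → k' ≤ 2 * n + 2 → k ≠ k' → fj k ≠ fj k' := by
    intro k k' hk hk' hkk he
    exact hkk (by rw [← fjv k hk, ← fjv k' hk', he])
  set PH1 : Finset (Fin (2 * n + 3)) :=
    Finset.univ.filter (fun a : Fin (2 * n + 3) => (a : ℕ) ≤ n) with hPH1def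
  set PH2 : Finset (Fin (2 * n + 3)) :=
    Finset.univ.filter (fun a : Fin (2 * n + 3) => n + 2 ≤ (a : ℕ)) with hPH2def
  have memS1 : ∀ (t : ℕ) (e : Fin (2 * n + 3)),
      e ∈ PH1.image (sched t) ↔ ∃ a : Fin (2 * n + 3), (a : ℕ) ≤ n ∧ sched t a = e := by
    intro t e
    simp [hPH1def, Finset.mem_image, Finset.mem_filter]
  have pmono : ∀ a b : ℕ, a ≤ b → b ≤ n → p a ≤ p b := by
    intro a b hab hbn
    rw [hp a (by omega), hp b hbn]
    apply Finset.sum_le_sum_of_subset_of_nonneg (Finset.Icc_subset_Icc_right hab)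
    intro i hi _
    rw [Finset.mem_Icc] at hi
    exact le_of_lt (hx i hi.1 (by omega))
  -- characterization of first-half job set
  have charS1 : ∀ t, t ≤ m → ∀ e : Fin (2 * n + 3),
      (e ∈ PH1.image (sched t) ↔
        (((e : ℕ) ≤ n ∧ ∀ i, 1 ≤ i → i ≤ t → (e : ℕ) ≠ l i)
          ∨ ∃ i, 1 ≤ i ∧ i ≤ t ∧ (e : ℕ) = n + 1 + r i)) := by
    intro t
    induction t with
    | zero =>
      intro _ e
      rw [memS1]
      constructor
      · rintro ⟨a, ha, rfl⟩
        left
        constructor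
        · rw [hsched0 a, if_pos ha]; exact ha
        · intro i h1 h0; omega
      · rintro (⟨he, -⟩ | ⟨i, h1, h0, -⟩)
        · refine ⟨e, he, ?_⟩
          apply Fin.ext
          rw [hsched0 e, if_pos he]
        · omega
    | succ t ih =>
      intro ht e
      have ih' := ih (by omega) e
      have hs := hset (t + 1) (by omega) ht e
      simp only [Nat.add_sub_cancel] at hs
      rw [memS1, hs, ← memS1, ih']
      constructor
      · rintro (⟨(⟨hen, hne⟩ | ⟨i, h1, hit, hei⟩), hnl⟩ | he)
        · left
          refine ⟨hen, fun i h1 hit => ?_⟩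
          rcases Nat.lt_or_ge i (t + 1) with h | h
          · exact hne i h1 (by omega)
          · have : i = t + 1 := by omega
            rw [this]; exact hnl
        · exact Or.inr ⟨i, h1, by omega, hei⟩
        · exact Or.inr ⟨t + 1, by omega, le_refl _, he⟩
      · rintro (⟨hen, hne⟩ | ⟨i, h1, hit, hei⟩)
        · exact Or.inl ⟨Or.inl ⟨hen, fun i h1 hit => hne i h1 (by omega)⟩,
            hne (t + 1) (by omega) (le_refl _)⟩
        · rcases Nat.lt_or_ge i (t + 1) with h | h
          · refine Or.inl ⟨Or.inr ⟨i, h1, by omega, hei⟩, ?_⟩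
            have := hln (t + 1) (by omega) ht
            omega
          · have : i = t + 1 := by omega
            subst this
            exact Or.inr hei
  -- membership facts for each step
  have haveL : ∀ t, 1 ≤ t → t ≤ m → fj (l t) ∈ PH1.image (sched (t - 1)) := by
    intro t h1 hm
    rw [charS1 (t - 1) (by omega)]
    have hltn := hln t h1 hm
    left
    rw [fjv (l t) (by omega)]
    refine ⟨hltn, fun i hi1 hit => ?_⟩
    exact (hlmono i t hi1 (by omega) hm).ne'

  have haveE : ∀ t, 1 ≤ t → t ≤ m → fj (n + 1 + r t) ∉ PH1.image (sched (t - 1)) := by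
    intro t h1 hm h
    rw [charS1 (t - 1) (by omega)] at h
    have hrtn := hrn t h1 hm
    rw [fjv (n + 1 + r t) (by omega)] at h
    rcases h with ⟨h, -⟩ | ⟨i, hi1, hit, hei⟩
    · omega
    · have := hrmono i t hi1 (by omega) hm
      omega

  -- step relation for first-half sets
  have setRel : ∀ t, 1 ≤ t → t ≤ m →
      PH1.image (sched t)
        = insert (fj (n + 1 + r t)) ((PH1.image (sched (t - 1))).erase (fj (l t))) := by
    intro t h1 hm
    have hltn := hln t h1 hm
    have hrtn := hrn t h1 hm
    have hlv := fjv (l t) (by omega)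
    have hev := fjv (n + 1 + r t) (by omega)
    ext e
    have hs := hset t h1 hm e
    rw [Finset.mem_insert, Finset.mem_erase, memS1, hs, ← memS1]
    constructor
    · rintro (⟨hmem, hne⟩ | he)
      · right
        refine ⟨fun h => hne ?_, hmem⟩
        rw [h, hlv]
      · left
        apply Fin.ext
        rw [hev]; exact he
    · rintro (rfl | ⟨hne, hmem⟩)
      · right; rw [hev]
      · left
        refine ⟨hmem, fun h => hne ?_⟩
        apply Fin.ext
        rw [hlv]; exact h

  -- generic sum over first-half set
  have SUM1 : ∀ t, t ≤ m → ∀ f : ℕ → ℤ,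
      (∑ e ∈ PH1.image (sched t), f (e : ℕ))
        = (∑ k ∈ Finset.range (n + 1), f k)
          + ∑ i ∈ Finset.Icc 1 t, (f (n + 1 + r i) - f (l i)) := by
    intro t
    induction t with
    | zero =>
      intro _ f
      simp only [show Finset.Icc 1 0 = (∅ : Finset ℕ) from rfl, Finset.sum_empty, add_zero]
      rw [Finset.sum_image (fun a _ b _ h => (sched 0).injective h)]
      have step1 : ∑ a ∈ PH1, f ((sched 0 a : ℕ)) = ∑ a ∈ PH1, f (a : ℕ) := by
        refine Finset.sum_congr rfl (fun a ha => ?_)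
        rw [hPH1def, Finset.mem_filter] at ha
        rw [hsched0 a, if_pos ha.2]
      rw [step1, hPH1def, Finset.sum_filter,
        Fin.sum_univ_eq_sum_range (fun k => if k ≤ n then f k else 0) (2 * n + 3),
        ← Finset.sum_filter]
      congr 1
      ext k
      simp only [Finset.mem_filter, Finset.mem_range]
      omega
    | succ t ih =>
      intro ht f
      rw [setRel (t + 1) (by omega) ht]
      simp only [Nat.add_sub_cancel]
      have hL := haveL (t + 1) (by omega) ht
      have hE := haveE (t + 1) (by omega) ht
      simp only [Nat.add_sub_cancel] at hL hE
      rw [auxSumInsertErase _ _ _ hL hE (fun e => f (e : ℕ))]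
      rw [ih (by omega) f, Finset.sum_Icc_succ_top (by omega)]
      have h1 := fjv (l (t + 1)) (by have := hln (t + 1) (by omega) ht; omega)
      have h2 := fjv (n + 1 + r (t + 1)) (by have := hrn (t + 1) (by omega) ht; omega)
      rw [h1, h2]
      ring

  -- center facts
  have hcent' : ∀ t, t ≤ m → ((sched t) (fj (n + 1)) : ℕ) = 2 * n + 2 := by
    intro t ht
    have hv := fjv (n + 1) (by omega)
    rcases Nat.eq_zero_or_pos t with rfl | h1
    · rw [hsched0 (fj (n + 1)), hv, if_neg (by omega), if_pos rfl]
    · exact hcenter t h1 ht (fj (n + 1)) hv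

  -- complement description of second-half set
  have compS2 : ∀ t, t ≤ m →
      PH2.image (sched t)
        = ((Finset.univ \ PH1.image (sched t))).erase (fj (2 * n + 2)) := by
    intro t ht
    have hcc : sched t (fj (n + 1)) = fj (2 * n + 2) := by
      apply Fin.ext
      rw [hcent' t ht, fjv (2 * n + 2) (by omega)]
    have memS2 : ∀ e : Fin (2 * n + 3),
        e ∈ PH2.image (sched t) ↔ ∃ a : Fin (2 * n + 3), n + 2 ≤ (a : ℕ) ∧ sched t a = e := by
      intro e
      simp [hPH2def, Finset.mem_image, Finset.mem_filter]
    ext e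
    rw [memS2 e, Finset.mem_erase, Finset.mem_sdiff]
    simp only [Finset.mem_univ, true_and]
    rw [memS1 t e]
    constructor
    · rintro ⟨a, ha, rfl⟩
      constructor
      · intro h
        rw [← hcc] at h
        have := (sched t).injective h
        rw [this, fjv (n + 1) (by omega)] at ha
        omega
      · rintro ⟨b, hb, heq⟩
        have := (sched t).injective heq
        rw [this] at hb
        omega
    · rintro ⟨hne, hnotin⟩
      refine ⟨(sched t).symm e, ?_, (sched t).apply_symm_apply e⟩
      have hae : sched t ((sched t).symm e) = e := (sched t).apply_symm_apply e
      by_contra hcon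
      push_neg at hcon
      rcases Nat.lt_or_ge (((sched t).symm e : Fin (2 * n + 3)) : ℕ) (n + 1) with h' | h'
      · exact hnotin ⟨(sched t).symm e, by omega, hae⟩
      · have heq : (sched t).symm e = fj (n + 1) := by
          apply Fin.ext
          rw [fjv (n + 1) (by omega)]
          omega
        rw [heq, hcc] at hae
        exact hne hae.symm

  
  -- cardinalities / weights
  have wPH1 : ∀ a ∈ PH1, ((Finset.Ici a).card : ℤ)
      = ((n : ℤ) + 3) + ((PH1.filter (fun b => a < b)).card : ℤ) := by
    intro a ha
    rw [hPH1def, Finset.mem_filter] at ha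
    have h1 : PH1.filter (fun b => a < b) = Finset.Ioc a (fj n) := by
      ext b
      simp only [hPH1def, Finset.mem_filter, Finset.mem_Ioc, Finset.mem_univ, true_and]
      rw [Fin.le_def, fjv n (by omega)]
      tauto
    rw [h1, Fin.card_Ioc, Fin.card_Ici, fjv n (by omega)]
    have := ha.2
    omega
  have wPH2 : ∀ a ∈ PH2, ((Finset.Ici a).card : ℤ)
      = 1 + ((PH2.filter (fun b => a < b)).card : ℤ) := by
    intro a ha
    rw [hPH2def, Finset.mem_filter] at ha
    have ha2 := ha.2
    have h1 : PH2.filter (fun b => a < b) = Finset.Ioc a (fj (2 * n + 2)) := by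
      ext b
      simp only [hPH2def, Finset.mem_filter, Finset.mem_Ioc, Finset.mem_univ, true_and]
      rw [Fin.le_def, fjv (2 * n + 2) (by omega)]
      have hb3 := b.isLt
      constructor
      · rintro ⟨h1, h2⟩; exact ⟨h2, by omega⟩
      · rintro ⟨h2, h1⟩
        have h2' := h2
        rw [Fin.lt_def] at h2'
        exact ⟨by omega, h2⟩
    rw [h1, Fin.card_Ioc, Fin.card_Ici, fjv (2 * n + 2) (by omega)]
    have ha3 := a.isLt
    omega
  -- the main rewriting of 2 * gObj for a sorted, centered schedule
  have h2G : ∀ π : Equiv.Perm (Fin (2 * n + 3)),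
      ((π (fj (n + 1)) : ℕ) = 2 * n + 2) →
      (∀ a b : Fin (2 * n + 3), a ≤ b → (b : ℕ) ≤ n → p ((π a : ℕ)) ≤ p ((π b : ℕ))) →
      (∀ a b : Fin (2 * n + 3), n + 2 ≤ (a : ℕ) → a ≤ b →
        p ((π a : ℕ)) + δ ((π a : ℕ)) ≤ p ((π b : ℕ)) + δ ((π b : ℕ))) →
      2 * gObj n p δ ML0 π
        = (2 * (n : ℤ) + 5) * (∑ t ∈ PH1.image π, p (t : ℕ))
          + (∑ t ∈ PH1.image π, ∑ u ∈ PH1.image π, min (p (t : ℕ)) (p (u : ℕ)))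
          + (∑ t ∈ PH2.image π, (p (t : ℕ) + δ (t : ℕ)))
          + (∑ t ∈ PH2.image π, ∑ u ∈ PH2.image π,
              min (p (t : ℕ) + δ (t : ℕ)) (p (u : ℕ) + δ (u : ℕ)))
          + 2 * ((n : ℤ) + 2) * p (2 * n + 2)
          + 2 * ((n : ℤ) + 2) * ((∑ t ∈ PH1.image π, δ (t : ℕ)) - ML0) := by
    intro π hc hs1 hs2
    have hinj : ∀ x ∈ PH1, ∀ y ∈ PH1, π x = π y → x = y := fun x _ y _ h => π.injective h
    have hinj2 : ∀ x ∈ PH2, ∀ y ∈ PH2, π x = π y → x = y := fun x _ y _ h => π.injective h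
    have hdet : detSum n δ π = ∑ t ∈ PH1.image π, δ (t : ℕ) := by
      rw [show detSum n δ π = ∑ a ∈ PH1, δ ((π a : ℕ)) from by rw [hPH1def]; rfl,
        Finset.sum_image hinj]
    -- positional form
    have e1 : gObj n p δ ML0 π
        = (∑ a : Fin (2 * n + 3), ((Finset.Ici a).card : ℤ) * p ((π a : ℕ)))
          + ((n : ℤ) + 2) * (detSum n δ π - ML0)
          + ∑ a ∈ PH2, ((Finset.Ici a).card : ℤ) * δ ((π a : ℕ)) := by
      have hfirst : (∑ i : Fin (2 * n + 3), ∑ jj ∈ Finset.Iic i, p ((π jj : ℕ)))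
          = ∑ a : Fin (2 * n + 3), ((Finset.Ici a).card : ℤ) * p ((π a : ℕ)) := by
        rw [Finset.sum_comm' (t' := (Finset.univ : Finset (Fin (2 * n + 3))))
          (s' := fun jj => Finset.Ici jj)
          (fun i jj => by simp [Finset.mem_Iic, Finset.mem_Ici, and_comm])]
        exact Finset.sum_congr rfl fun a _ => by rw [Finset.sum_const, nsmul_eq_mul]
      have hsecond : (∑ i : Fin (2 * n + 3),
            (if (i : ℕ) ≤ n then (0 : ℤ) else (detSum n δ π - ML0)
              + ∑ jj ∈ Finset.univ.filter
                  (fun jj : Fin (2 * n + 3) => n + 2 ≤ (jj : ℕ) ∧ jj ≤ i), δ ((π jj : ℕ))))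
          = ((n : ℤ) + 2) * (detSum n δ π - ML0)
            + ∑ a ∈ PH2, ((Finset.Ici a).card : ℤ) * δ ((π a : ℕ)) := by
        have flip : ∀ i : Fin (2 * n + 3),
            (if (i : ℕ) ≤ n then (0 : ℤ) else (detSum n δ π - ML0)
              + ∑ jj ∈ Finset.univ.filter
                  (fun jj : Fin (2 * n + 3) => n + 2 ≤ (jj : ℕ) ∧ jj ≤ i), δ ((π jj : ℕ)))
            = (if ¬ (i : ℕ) ≤ n then (detSum n δ π - ML0)
              + ∑ jj ∈ Finset.univ.filter
                  (fun jj : Fin (2 * n + 3) => n + 2 ≤ (jj : ℕ) ∧ jj ≤ i), δ ((π jj : ℕ))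
              else 0) := by
          intro i
          by_cases h : (i : ℕ) ≤ n <;> simp [h]
        rw [Finset.sum_congr rfl (fun i _ => flip i), ← Finset.sum_filter,
          Finset.sum_add_distrib, Finset.sum_const, nsmul_eq_mul]
        have hcardNot : (((Finset.univ.filter
            (fun i : Fin (2 * n + 3) => ¬ (i : ℕ) ≤ n)).card : ℤ)) = (n : ℤ) + 2 := by
          have h1 : Finset.univ.filter (fun i : Fin (2 * n + 3) => ¬ (i : ℕ) ≤ n)
              = Finset.Ici (fj (n + 1)) := by
            ext a
            simp only [Finset.mem_filter, Finset.mem_univ, true_and, Finset.mem_Ici]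
            rw [Fin.le_def, fjv (n + 1) (by omega)]
            omega
          rw [h1, Fin.card_Ici, fjv (n + 1) (by omega)]
          omega
        rw [hcardNot]
        congr 1
        rw [Finset.sum_comm' (t' := PH2) (s' := fun jj => Finset.Ici jj) ?hcond]
        case hcond =>
          intro i jj
          simp only [Finset.mem_filter, Finset.mem_univ, true_and, Finset.mem_Ici,
            hPH2def]
          constructor
          · rintro ⟨h1, h2, h3⟩; exact ⟨h3, h2⟩
          · rintro ⟨h3, h2⟩
            have h3' := h3
            rw [Fin.le_def] at h3'
            exact ⟨by omega, h2, h3⟩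
        exact Finset.sum_congr rfl fun a _ => by rw [Finset.sum_const, nsmul_eq_mul]
      calc gObj n p δ ML0 π
          = (∑ i : Fin (2 * n + 3), ∑ jj ∈ Finset.Iic i, p ((π jj : ℕ)))
            + ∑ i : Fin (2 * n + 3),
              (if (i : ℕ) ≤ n then (0 : ℤ) else (detSum n δ π - ML0)
                + ∑ jj ∈ Finset.univ.filter
                    (fun jj : Fin (2 * n + 3) => n + 2 ≤ (jj : ℕ) ∧ jj ≤ i),
                    δ ((π jj : ℕ))) := by
            rw [gObj, Finset.sum_add_distrib]
        _ = _ := by rw [hfirst, hsecond]; ring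
    -- split the full positional sum
    have hsplitU : (∑ a : Fin (2 * n + 3), ((Finset.Ici a).card : ℤ) * p ((π a : ℕ)))
        = (∑ a ∈ PH1, ((Finset.Ici a).card : ℤ) * p ((π a : ℕ)))
          + ((n : ℤ) + 2) * p (2 * n + 2)
          + ∑ a ∈ PH2, ((Finset.Ici a).card : ℤ) * p ((π a : ℕ)) := by
      rw [← Finset.sum_filter_add_sum_filter_not Finset.univ
        (fun a : Fin (2 * n + 3) => (a : ℕ) ≤ n)
        (fun a => ((Finset.Ici a).card : ℤ) * p ((π a : ℕ)))]
      rw [← hPH1def]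
      have hnotsplit : Finset.univ.filter (fun a : Fin (2 * n + 3) => ¬ (a : ℕ) ≤ n)
          = insert (fj (n + 1)) PH2 := by
        ext a
        simp only [Finset.mem_filter, Finset.mem_univ, true_and, Finset.mem_insert,
          hPH2def]
        constructor
        · intro h
          rcases Nat.lt_or_ge ((a : ℕ)) (n + 2) with h' | h'
          · left; apply Fin.ext; rw [fjv (n + 1) (by omega)]; omega
          · right; exact h'
        · rintro (rfl | h)
          · rw [fjv (n + 1) (by omega)]; omega
          · omega
      have hnmem : fj (n + 1) ∉ PH2 := by
        intro hmem
        rw [hPH2def, Finset.mem_filter] at hmem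
        have h2 := hmem.2
        rw [fjv (n + 1) (by omega)] at h2
        omega
      rw [hnotsplit, Finset.sum_insert hnmem, hc]
      have hcardc : ((Finset.Ici (fj (n + 1))).card : ℤ) = (n : ℤ) + 2 := by
        rw [Fin.card_Ici, fjv (n + 1) (by omega)]
        omega
      rw [hcardc]
      ring
    -- sorted halves via auxSorted
    have hW1a : ∑ a ∈ PH1, ((Finset.Ici a).card : ℤ) * p ((π a : ℕ))
        = ((n : ℤ) + 3) * (∑ a ∈ PH1, p ((π a : ℕ)))
          + ∑ a ∈ PH1, ((PH1.filter (fun b => a < b)).card : ℤ) * p ((π a : ℕ)) := by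
      rw [Finset.sum_congr rfl (fun a ha => by rw [wPH1 a ha, add_mul]),
        Finset.sum_add_distrib, ← Finset.mul_sum]
    have hSort1 := auxSorted PH1 (fun a => p ((π a : ℕ))) (by
      intro a ha b hb hab
      rw [hPH1def, Finset.mem_filter] at hb
      exact hs1 a b hab hb.2)
    have hW2a : ∑ a ∈ PH2, ((Finset.Ici a).card : ℤ) * (p ((π a : ℕ)) + δ ((π a : ℕ)))
        = (∑ a ∈ PH2, (p ((π a : ℕ)) + δ ((π a : ℕ))))
          + ∑ a ∈ PH2, ((PH2.filter (fun b => a < b)).card : ℤ)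
              * (p ((π a : ℕ)) + δ ((π a : ℕ))) := by
      rw [Finset.sum_congr rfl (fun a ha => by rw [wPH2 a ha, add_mul, one_mul]),
        Finset.sum_add_distrib]
    have hSort2 := auxSorted PH2 (fun a => p ((π a : ℕ)) + δ ((π a : ℕ))) (by
      intro a ha b hb hab
      rw [hPH2def, Finset.mem_filter] at ha
      exact hs2 a b ha.2 hab)
    beta_reduce at hSort1 hSort2
    have hcomb : (∑ a ∈ PH2, ((Finset.Ici a).card : ℤ) * p ((π a : ℕ)))
        + (∑ a ∈ PH2, ((Finset.Ici a).card : ℤ) * δ ((π a : ℕ)))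
        = ∑ a ∈ PH2, ((Finset.Ici a).card : ℤ) * (p ((π a : ℕ)) + δ ((π a : ℕ))) := by
      rw [← Finset.sum_add_distrib]
      apply Finset.sum_congr rfl
      intro a _
      ring
    -- image conversions
    have himgT1 : ∑ a ∈ PH1, p ((π a : ℕ)) = ∑ t ∈ PH1.image π, p (t : ℕ) := by
      rw [Finset.sum_image hinj]
    have himgTd : ∑ a ∈ PH1, δ ((π a : ℕ)) = ∑ t ∈ PH1.image π, δ (t : ℕ) := by
      rw [Finset.sum_image hinj]
    have himgT2 : ∑ a ∈ PH2, (p ((π a : ℕ)) + δ ((π a : ℕ)))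
        = ∑ t ∈ PH2.image π, (p (t : ℕ) + δ (t : ℕ)) := by
      rw [Finset.sum_image hinj2]
    have himgD1 : ∑ t ∈ PH1.image π, ∑ u ∈ PH1.image π, min (p (t : ℕ)) (p (u : ℕ))
        = ∑ a ∈ PH1, ∑ b ∈ PH1, min (p ((π a : ℕ))) (p ((π b : ℕ))) := by
      rw [Finset.sum_image hinj]
      exact Finset.sum_congr rfl fun a _ => Finset.sum_image hinj
    have himgD2 : ∑ t ∈ PH2.image π, ∑ u ∈ PH2.image π,
          min (p (t : ℕ) + δ (t : ℕ)) (p (u : ℕ) + δ (u : ℕ))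
        = ∑ a ∈ PH2, ∑ b ∈ PH2,
            min (p ((π a : ℕ)) + δ ((π a : ℕ))) (p ((π b : ℕ)) + δ ((π b : ℕ))) := by
      rw [Finset.sum_image hinj2]
      exact Finset.sum_congr rfl fun a _ => Finset.sum_image hinj2
    have hdet0 : detSum n δ π = ∑ a ∈ PH1, δ ((π a : ℕ)) := by rw [hPH1def]; rfl
    rw [← hcomb] at hW2a
    rw [e1, hdet0, hsplitU, hW1a, himgD1, himgD2, ← himgT1, ← himgTd, ← himgT2]
    linarith [hW2a, hSort1, hSort2]
  -- arithmetic about p, delta, X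
  have hlnj := hln j hj1 hjm
  have hrnj := hrn j hj1 hjm
  have hPLR : p (l j) - p (r j) = ∑ k ∈ Finset.Icc (r j + 1) (l j), x k := by
    rw [hp (l j) hlnj, hp (r j) hrnj]
    have h1 : ∀ k : ℕ, Finset.Icc 1 k = Finset.Ioc 0 k := by
      intro k; ext i; simp only [Finset.mem_Icc, Finset.mem_Ioc]; omega
    have h2 : Finset.Icc (r j + 1) (l j) = Finset.Ioc (r j) (l j) := by
      ext i; simp only [Finset.mem_Icc, Finset.mem_Ioc]; omega
    rw [h1, h1, h2]
    have h3 := Finset.sum_Ioc_consecutive x (Nat.zero_le (r j)) (le_of_lt hgt)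
    linarith
  have hX0 : (0 : ℤ) ≤ ∑ k ∈ Finset.Icc (r j + 1) (l j), x k := by
    apply Finset.sum_nonneg
    intro k hk
    rw [Finset.mem_Icc] at hk
    exact le_of_lt (hx k (by omega) (by omega))
  have hPRPL : p (r j) ≤ p (l j) := by linarith
  have part2 : δ (r j) - δ (l j) = 2 * ∑ k ∈ Finset.Icc (r j + 1) (l j), x k := by
    rw [hδ (r j) hrnj, hδ (l j) hlnj]; linarith
  have hdetconv : ∀ t : ℕ, detSum n δ (sched t) = ∑ e ∈ PH1.image (sched t), δ (e : ℕ) := by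
    intro t
    rw [show detSum n δ (sched t) = ∑ a ∈ PH1, δ ((sched t a : ℕ)) from by rw [hPH1def]; rfl,
      Finset.sum_image (fun a _ b _ h => (sched t).injective h)]
  have hTd : (∑ e ∈ PH1.image (sched j), δ (e : ℕ))
      = (∑ e ∈ PH1.image (sched (j - 1)), δ (e : ℕ)) + (δ (r j) - δ (l j)) := by
    rw [setRel j hj1 hjm,
      auxSumInsertErase _ _ _ (haveL j hj1 hjm) (haveE j hj1 hjm) (fun e => δ (e : ℕ))]
    rw [fjv (l j) (by omega), fjv (n + 1 + r j) (by omega), hδ' (r j) hrnj]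
    ring
  have part1 : detSum n δ (sched j) = detSum n δ (sched (j - 1)) + (δ (r j) - δ (l j)) := by
    rw [hdetconv j, hdetconv (j - 1), hTd]
  refine ⟨part1, part2, ?_⟩
  -- sortedness for all schedules including the initial one
  have hsort1 : ∀ t, t ≤ m → ∀ a b : Fin (2 * n + 3), a ≤ b → (b : ℕ) ≤ n →
      p ((sched t a : ℕ)) ≤ p ((sched t b : ℕ)) := by
    intro t ht a b hab hbn
    rcases Nat.eq_zero_or_pos t with rfl | h1
    · rw [Fin.le_def] at hab
      have han : (a : ℕ) ≤ n := le_trans hab hbn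
      rw [hsched0 a, hsched0 b, if_pos han, if_pos hbn]
      exact pmono _ _ hab hbn
    · exact hsortp t h1 ht a b hab hbn
  have hsort2 : ∀ t, t ≤ m → ∀ a b : Fin (2 * n + 3), n + 2 ≤ (a : ℕ) → a ≤ b →
      p ((sched t a : ℕ)) + δ ((sched t a : ℕ))
        ≤ p ((sched t b : ℕ)) + δ ((sched t b : ℕ)) := by
    intro t ht a b ha hab
    rcases Nat.eq_zero_or_pos t with rfl | h1
    · rw [Fin.le_def] at hab
      have hb3 := b.isLt
      have ha3 := a.isLt
      have hbn : n + 2 ≤ (b : ℕ) := le_trans ha hab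
      have hav : ((sched 0) a : ℕ) = n + 1 + (2 * n + 2 - (a : ℕ)) := by
        rw [hsched0 a, if_neg (by omega), if_neg (by omega)]; omega
      have hbv : ((sched 0) b : ℕ) = n + 1 + (2 * n + 2 - (b : ℕ)) := by
        rw [hsched0 b, if_neg (by omega), if_neg (by omega)]; omega
      rw [hav, hbv, hp' _ (by omega), hp' _ (by omega), hδ' _ (by omega), hδ' _ (by omega),
        hδ _ (by omega), hδ _ (by omega)]
      have := pmono (2 * n + 2 - (b : ℕ)) (2 * n + 2 - (a : ℕ)) (by omega) (by omega)
      linarith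
    · exact hsorts t h1 ht a b ha hab
  have hGprev := h2G (sched (j - 1)) (hcent' (j - 1) (by omega)) (hsort1 (j - 1) (by omega))
    (hsort2 (j - 1) (by omega))
  have hGcur := h2G (sched j) (hcent' j hjm) (hsort1 j hjm) (hsort2 j hjm)
  -- second-half set relations
  have hc2prev := compS2 (j - 1) (by omega)
  have hcS1 : ∀ t, t ≤ m → fj (2 * n + 2) ∉ PH1.image (sched t) := by
    intro t ht h
    rw [charS1 t ht, fjv (2 * n + 2) (by omega)] at h
    rcases h with ⟨h, -⟩ | ⟨i, hi1, hit, hei⟩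
    · omega
    · have := hrn i hi1 (by omega); omega
  have memE2 : fj (n + 1 + r j) ∈ PH2.image (sched (j - 1)) := by
    rw [hc2prev, Finset.mem_erase, Finset.mem_sdiff]
    exact ⟨fne _ _ (by omega) (by omega) (by omega),
      Finset.mem_univ _, haveE j hj1 hjm⟩
  have memL2 : fj (l j) ∉ PH2.image (sched (j - 1)) := by
    rw [hc2prev, Finset.mem_erase, Finset.mem_sdiff]
    rintro ⟨-, -, hno⟩
    exact hno (haveL j hj1 hjm)
  have setRel2 : PH2.image (sched j)
      = insert (fj (l j)) ((PH2.image (sched (j - 1))).erase (fj (n + 1 + r j))) := by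
    have h1 : fj (l j) ≠ fj (2 * n + 2) := fne _ _ (by omega) (by omega) (by omega)
    have h3 : fj (l j) ≠ fj (n + 1 + r j) := fne _ _ (by omega) (by omega) (by omega)
    rw [compS2 j hjm, hc2prev, setRel j hj1 hjm]
    ext e
    simp only [Finset.mem_erase, Finset.mem_sdiff, Finset.mem_univ, true_and,
      Finset.mem_insert]
    constructor
    · rintro ⟨hec, hno⟩
      push_neg at hno
      obtain ⟨hneF, himp⟩ := hno
      by_cases helF : e = fj (l j)
      · exact Or.inl helF
      · exact Or.inr ⟨hneF, hec, himp helF⟩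
    · rintro (rfl | ⟨hneF, hec, hnoS⟩)
      · refine ⟨h1, ?_⟩
        rintro (h | ⟨hne, -⟩)
        · exact h3 h
        · exact hne rfl
      · refine ⟨hec, ?_⟩
        rintro (h | ⟨-, hmem⟩)
        · exact hneF h
        · exact hnoS hmem
  -- base-value function
  set pbn : ℕ → ℤ := fun k => if k ≤ n then p k else p (k - (n + 1)) with hpbn
  have hpbLow : ∀ k, k ≤ n → pbn k = p k := by
    intro k hk; simp only [hpbn]; rw [if_pos hk]
  have hpbHigh : ∀ k, k ≤ n → pbn (n + 1 + k) = p k := by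
    intro k hk
    simp only [hpbn]
    rw [if_neg (by omega)]
    congr 1
    omega
  have hv1pb : ∀ t : Fin (2 * n + 3), t ∈ PH1.image (sched (j - 1)) →
      p (t : ℕ) = pbn (t : ℕ) := by
    intro t ht
    rw [charS1 (j - 1) (by omega)] at ht
    rcases ht with ⟨h, -⟩ | ⟨i, hi1, hit, hei⟩
    · rw [hpbLow _ h]
    · have hrin := hrn i hi1 (by omega)
      rw [hei, hp' (r i) hrin, hpbHigh (r i) hrin]
  have hv2pb : ∀ t : Fin (2 * n + 3), (t : ℕ) ≠ 2 * n + 2 →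
      p (t : ℕ) + δ (t : ℕ) = M - pbn (t : ℕ) := by
    intro t htne
    by_cases h : (t : ℕ) ≤ n
    · rw [hδ _ h, hpbLow _ h]; ring
    · have hlt := t.isLt
      have hk : (t : ℕ) = n + 1 + ((t : ℕ) - (n + 1)) := by omega
      have hkn : (t : ℕ) - (n + 1) ≤ n := by omega
      rw [hk, hp' _ hkn, hδ' _ hkn, hδ _ hkn, hpbHigh _ hkn]
      ring
  -- changes of the four set-sums
  have hT1 : (∑ t ∈ PH1.image (sched j), p (t : ℕ))
      = (∑ t ∈ PH1.image (sched (j - 1)), p (t : ℕ))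
        - (∑ k ∈ Finset.Icc (r j + 1) (l j), x k) := by
    rw [setRel j hj1 hjm,
      auxSumInsertErase _ _ _ (haveL j hj1 hjm) (haveE j hj1 hjm) (fun e => p (e : ℕ))]
    rw [fjv (l j) (by omega), fjv (n + 1 + r j) (by omega), hp' (r j) hrnj]
    linarith
  have hTd' : (∑ e ∈ PH1.image (sched j), δ (e : ℕ))
      = (∑ e ∈ PH1.image (sched (j - 1)), δ (e : ℕ))
        + 2 * (∑ k ∈ Finset.Icc (r j + 1) (l j), x k) := by
    rw [hTd, part2]
  have hT2 : (∑ t ∈ PH2.image (sched j), (p (t : ℕ) + δ (t : ℕ)))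
      = (∑ t ∈ PH2.image (sched (j - 1)), (p (t : ℕ) + δ (t : ℕ)))
        - (∑ k ∈ Finset.Icc (r j + 1) (l j), x k) := by
    rw [setRel2,
      auxSumInsertErase _ _ _ memE2 memL2 (fun e => p (e : ℕ) + δ (e : ℕ))]
    rw [fjv (l j) (by omega), fjv (n + 1 + r j) (by omega), hp' (r j) hrnj,
      hδ' (r j) hrnj, hδ (r j) hrnj, hδ (l j) hlnj]
    linarith
  have hm1 : l j % (2 * n + 3) = l j := Nat.mod_eq_of_lt (by omega)
  have hm2 : (n + 1 + r j) % (2 * n + 3) = n + 1 + r j := Nat.mod_eq_of_lt (by omega)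
  have hD1raw := auxDoubleMinChange (PH1.image (sched (j - 1))) (fj (l j))
    (fj (n + 1 + r j)) (haveL j hj1 hjm) (haveE j hj1 hjm) (fun e => p (e : ℕ))
  rw [← setRel j hj1 hjm] at hD1raw
  simp only [fjv (l j) (by omega), fjv (n + 1 + r j) (by omega), hm1, hm2,
    hp' (r j) hrnj] at hD1raw
  have hD1sum : (∑ t ∈ (PH1.image (sched (j - 1))).erase (fj (l j)),
        (min (p (t : ℕ)) (p (r j)) - min (p (t : ℕ)) (p (l j))))
      = (∑ t ∈ PH1.image (sched (j - 1)),
          (min (pbn (t : ℕ)) (p (r j)) - min (pbn (t : ℕ)) (p (l j))))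
        + (∑ k ∈ Finset.Icc (r j + 1) (l j), x k) := by
    have hcongr : ∀ t ∈ (PH1.image (sched (j - 1))).erase (fj (l j)),
        (min (p (t : ℕ)) (p (r j)) - min (p (t : ℕ)) (p (l j)))
          = (min (pbn (t : ℕ)) (p (r j)) - min (pbn (t : ℕ)) (p (l j))) := by
      intro t ht
      rw [hv1pb t (Finset.mem_of_mem_erase ht)]
    rw [Finset.sum_congr rfl hcongr,
      Finset.sum_erase_eq_sub (haveL j hj1 hjm)]
    rw [fjv (l j) (by omega), hpbLow (l j) hlnj, min_eq_right hPRPL, min_self]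
    linarith
  have hD2raw := auxDoubleMinChange (PH2.image (sched (j - 1))) (fj (n + 1 + r j))
    (fj (l j)) memE2 memL2 (fun e => p (e : ℕ) + δ (e : ℕ))
  rw [← setRel2] at hD2raw
  simp only [fjv (l j) (by omega), fjv (n + 1 + r j) (by omega), hm1, hm2,
    hp' (r j) hrnj, hδ' (r j) hrnj] at hD2raw
  have hcardS2 : (PH2.image (sched (j - 1))).card = n + 1 := by
    rw [Finset.card_image_of_injective _ (sched (j - 1)).injective]
    have h1 : PH2 = Finset.Ici (fj (n + 2)) := by
      ext a
      rw [hPH2def]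
      simp only [Finset.mem_filter, Finset.mem_univ, true_and, Finset.mem_Ici]
      rw [Fin.le_def, fjv (n + 2) (by omega)]
    rw [h1, Fin.card_Ici, fjv (n + 2) (by omega)]
    omega
  have hD2sum : (∑ t ∈ (PH2.image (sched (j - 1))).erase (fj (n + 1 + r j)),
        (min (p (t : ℕ) + δ (t : ℕ)) (p (l j) + δ (l j))
          - min (p (t : ℕ) + δ (t : ℕ)) (p (r j) + δ (r j))))
      = -((n : ℤ) * (∑ k ∈ Finset.Icc (r j + 1) (l j), x k))
        - (∑ t ∈ PH2.image (sched (j - 1)),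
            (min (pbn (t : ℕ)) (p (r j)) - min (pbn (t : ℕ)) (p (l j)))) := by
    have hcongr : ∀ t ∈ (PH2.image (sched (j - 1))).erase (fj (n + 1 + r j)),
        (min (p (t : ℕ) + δ (t : ℕ)) (p (l j) + δ (l j))
          - min (p (t : ℕ) + δ (t : ℕ)) (p (r j) + δ (r j)))
        = (p (r j) - p (l j))
          - (min (pbn (t : ℕ)) (p (r j)) - min (pbn (t : ℕ)) (p (l j))) := by
      intro t ht
      have hts := Finset.mem_of_mem_erase ht
      have htne : (t : ℕ) ≠ 2 * n + 2 := by
        intro h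
        have heq : t = fj (2 * n + 2) :=
          Fin.ext (by rw [fjv (2 * n + 2) (by omega)]; exact h)
        rw [hc2prev, heq] at hts
        exact (Finset.notMem_erase _ _) hts
      have h2 := hv2pb t htne
      have hL2 : p (l j) + δ (l j) = M - p (l j) := by rw [hδ (l j) hlnj]; ring
      have hR2 : p (r j) + δ (r j) = M - p (r j) := by rw [hδ (r j) hrnj]; ring
      rw [h2, hL2, hR2, auxMinBeta]
    rw [Finset.sum_congr rfl hcongr, Finset.sum_sub_distrib, Finset.sum_const,
      Finset.card_erase_of_mem memE2, hcardS2, nsmul_eq_mul,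
      Finset.sum_erase_eq_sub memE2]
    rw [fjv (n + 1 + r j) (by omega), hpbHigh (r j) hrnj, min_self,
      min_eq_left hPRPL]
    have hsub : p (r j) - p (l j) = -(∑ k ∈ Finset.Icc (r j + 1) (l j), x k) := by linarith
    rw [Nat.add_sub_cancel, hsub]
    ring
  -- the key comparison of F-sums
  have hS1F := SUM1 (j - 1) (by omega)
    (fun k => min (pbn k) (p (r j)) - min (pbn k) (p (l j)))
  have hterm : ∀ i ∈ Finset.Icc 1 (j - 1),
      (0 : ℤ) ≤ (min (pbn (n + 1 + r i)) (p (r j)) - min (pbn (n + 1 + r i)) (p (l j)))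
        - (min (pbn (l i)) (p (r j)) - min (pbn (l i)) (p (l j))) := by
    intro i hi
    rw [Finset.mem_Icc] at hi
    have hi1 := hi.1
    have him : i ≤ m := by omega
    have hrin := hrn i hi1 him
    have hri : p (r i) ≤ p (r j) :=
      pmono _ _ (le_of_lt (hrmono i j hi1 (by omega) hjm)) hrnj
    rw [hpbHigh (r i) hrin, min_eq_left hri, min_eq_left (le_trans hri hPRPL)]
    have h3 : min (pbn (l i)) (p (r j)) ≤ min (pbn (l i)) (p (l j)) :=
      min_le_min (le_refl _) hPRPL
    linarith
  have hS1ge : (∑ k ∈ Finset.range (n + 1),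
        (min (pbn k) (p (r j)) - min (pbn k) (p (l j))))
      ≤ ∑ t ∈ PH1.image (sched (j - 1)),
          (min (pbn (t : ℕ)) (p (r j)) - min (pbn (t : ℕ)) (p (l j))) := by
    rw [hS1F]
    have := Finset.sum_nonneg hterm
    linarith
  have huniv : (∑ t : Fin (2 * n + 3),
        (min (pbn (t : ℕ)) (p (r j)) - min (pbn (t : ℕ)) (p (l j))))
      = 2 * (∑ k ∈ Finset.range (n + 1),
            (min (pbn k) (p (r j)) - min (pbn k) (p (l j))))
        + (min (pbn (2 * n + 2)) (p (r j)) - min (pbn (2 * n + 2)) (p (l j))) := by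
    rw [Fin.sum_univ_eq_sum_range
      (fun k => min (pbn k) (p (r j)) - min (pbn k) (p (l j))) (2 * n + 3)]
    rw [Finset.sum_range_succ]
    congr 1
    have hsplit : (∑ k ∈ Finset.range (2 * n + 2),
          (min (pbn k) (p (r j)) - min (pbn k) (p (l j))))
        = (∑ k ∈ Finset.range (n + 1), (min (pbn k) (p (r j)) - min (pbn k) (p (l j))))
          + ∑ k ∈ Finset.Ico (n + 1) (2 * n + 2),
              (min (pbn k) (p (r j)) - min (pbn k) (p (l j))) := by
      rw [Finset.range_eq_Ico,
        ← Finset.sum_Ico_consecutive _ (Nat.zero_le (n + 1)) (by omega : n + 1 ≤ 2 * n + 2),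
        ← Finset.range_eq_Ico]
    rw [hsplit]
    have hIco : (∑ k ∈ Finset.Ico (n + 1) (2 * n + 2),
          (min (pbn k) (p (r j)) - min (pbn k) (p (l j))))
        = ∑ k ∈ Finset.range (n + 1),
            (min (pbn (n + 1 + k)) (p (r j)) - min (pbn (n + 1 + k)) (p (l j))) := by
      rw [Finset.sum_Ico_eq_sum_range]
      have h22 : 2 * n + 2 - (n + 1) = n + 1 := by omega
      rw [h22]
    rw [hIco]
    have hdup : ∀ k ∈ Finset.range (n + 1),
        (min (pbn (n + 1 + k)) (p (r j)) - min (pbn (n + 1 + k)) (p (l j)))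
          = (min (pbn k) (p (r j)) - min (pbn k) (p (l j))) := by
      intro k hk
      rw [Finset.mem_range] at hk
      rw [hpbHigh k (by omega), hpbLow k (by omega)]
    rw [Finset.sum_congr rfl hdup]
    ring
  have hS2F : (∑ t ∈ PH2.image (sched (j - 1)),
        (min (pbn (t : ℕ)) (p (r j)) - min (pbn (t : ℕ)) (p (l j))))
      = 2 * (∑ k ∈ Finset.range (n + 1),
            (min (pbn k) (p (r j)) - min (pbn k) (p (l j))))
        - ∑ t ∈ PH1.image (sched (j - 1)),
            (min (pbn (t : ℕ)) (p (r j)) - min (pbn (t : ℕ)) (p (l j))) := by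
    rw [hc2prev, Finset.sum_erase_eq_sub (Finset.mem_sdiff.mpr
        ⟨Finset.mem_univ _, hcS1 (j - 1) (by omega)⟩),
      Finset.sum_sdiff_eq_sub (Finset.subset_univ _), huniv, fjv (2 * n + 2) (by omega)]
    ring
  have hKey : (∑ t ∈ PH2.image (sched (j - 1)),
        (min (pbn (t : ℕ)) (p (r j)) - min (pbn (t : ℕ)) (p (l j))))
      ≤ ∑ t ∈ PH1.image (sched (j - 1)),
          (min (pbn (t : ℕ)) (p (r j)) - min (pbn (t : ℕ)) (p (l j))) := by
    rw [hS2F]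
    linarith
  -- final assembly
  rw [hT1, hTd', hT2] at hGcur
  rw [hD1sum] at hD1raw
  rw [hD2sum] at hD2raw
  rw [hD1raw, hD2raw] at hGcur
  have hδlj := hδ (l j) hlnj
  have hδrj := hδ (r j) hrnj
  linarith [hGprev, hGcur, hKey, hX0, hPLR, hδlj, hδrj]
end

section
/- Assume the jobs are indexed in SSF order p_1 + δ_1 ≤ p_2 + δ_2 ≤ … ≤ p_n + δ_n and Σ_{i=1}^{n} δ_i > ML0. Let k be the maximum index such that Σ_{i=1}^{k−1} δ_i ≤ ML0, and let π_A be the permutation that schedules jobs 1,…,k−1 first, re-sorted in nondecreasing order of processing time, followed by J_k, J_{k+1}, …, J_n. Then F(π_A) ≤ 2 · min_σ F(σ), where the minimum is over all permutations σ of {1,…,n}. -/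
/-- If `A` consists of the "smallest" elements (every element of `A` has `f`-value at most
that of any element of `B` outside `A`), `f` is nonnegative, and `|A| ≤ |B|`, then
`∑_A f ≤ ∑_B f`. -/
lemma auxSumLe {α : Type*} [DecidableEq α] (f : α → ℝ) (hf : ∀ a, 0 ≤ f a)
    (A B : Finset α) (hcard : A.card ≤ B.card)
    (h : ∀ a ∈ A, ∀ b ∈ B, b ∉ A → f a ≤ f b) :
    ∑ a ∈ A, f a ≤ ∑ b ∈ B, f b := by
  have hA : ∑ a ∈ A ∩ B, f a + ∑ a ∈ A \ B, f a = ∑ a ∈ A, f a :=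
    Finset.sum_inter_add_sum_sdiff A B f
  have hB : ∑ b ∈ B ∩ A, f b + ∑ b ∈ B \ A, f b = ∑ b ∈ B, f b :=
    Finset.sum_inter_add_sum_sdiff B A f
  have hIA : (A ∩ B).card + (A \ B).card = A.card := Finset.card_inter_add_card_sdiff A B
  have hIB : (B ∩ A).card + (B \ A).card = B.card := Finset.card_inter_add_card_sdiff B A
  have hIc : (A ∩ B).card = (B ∩ A).card := by rw [Finset.inter_comm]
  have hcards : (A \ B).card ≤ (B \ A).card := by omega
  have hkey : ∑ a ∈ A \ B, f a ≤ ∑ b ∈ B \ A, f b := by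
    rcases Finset.eq_empty_or_nonempty (A \ B) with hAB | hAB
    · rw [hAB, Finset.sum_empty]
      exact Finset.sum_nonneg fun b _ => hf b
    · have hBA : (B \ A).Nonempty := by
        rw [← Finset.card_pos] at hAB ⊢; omega
      obtain ⟨b0, hb0, hb0min⟩ := Finset.exists_min_image (B \ A) f hBA
      have hb0B : b0 ∈ B := (Finset.mem_sdiff.mp hb0).1
      have hb0A : b0 ∉ A := (Finset.mem_sdiff.mp hb0).2
      calc ∑ a ∈ A \ B, f a ≤ ∑ _a ∈ A \ B, f b0 := by
            refine Finset.sum_le_sum fun a ha => ?_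
            exact h a (Finset.mem_sdiff.mp ha).1 b0 hb0B hb0A
        _ = ((A \ B).card : ℝ) * f b0 := by
            rw [Finset.sum_const, nsmul_eq_mul]
        _ ≤ ((B \ A).card : ℝ) * f b0 := by
            apply mul_le_mul_of_nonneg_right _ (hf b0)
            exact_mod_cast hcards
        _ ≤ ∑ b ∈ B \ A, f b := by
            have := Finset.card_nsmul_le_sum (B \ A) f (f b0) hb0min
            rwa [nsmul_eq_mul] at this
  calc ∑ a ∈ A, f a = ∑ a ∈ A ∩ B, f a + ∑ a ∈ A \ B, f a := hA.symm
    _ ≤ ∑ b ∈ B ∩ A, f b + ∑ b ∈ B \ A, f b := by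
        rw [Finset.inter_comm A B]; exact add_le_add le_rfl hkey
    _ = ∑ b ∈ B, f b := hB

/-- the schedule `π_A` produced by algorithm `A₁` — jobs indexed in SSF
order, `k` the (0-based) separation index, jobs before `k` re-sorted in SPT order and
jobs from `k` on kept in SSF order — has total completion time at most twice the
minimum total completion time. -/
theorem stmt13 (n : ℕ) (p δ : Fin n → ℝ) (ML0 : ℝ)
    (hp : ∀ i, 0 ≤ p i) (hδ : ∀ i, 0 ≤ δ i) (hML0 : 0 ≤ ML0)
    (hssf : ∀ i j : Fin n, i ≤ j → p i + δ i ≤ p j + δ j)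
    (htot : ML0 < ∑ i, δ i)
    (k : Fin n)
    (hk : ∑ i ∈ Finset.Iio k, δ i ≤ ML0)
    (hkmax : ∀ k' : Fin n, (∑ i ∈ Finset.Iio k', δ i ≤ ML0) → k' ≤ k)
    (πA : Equiv.Perm (Fin n))
    (hfix : ∀ i : Fin n, k ≤ i → πA i = i)
    (hsort : ∀ i j : Fin n, i ≤ j → j < k → p (πA i) ≤ p (πA j))
    :
    ∀ σ : Equiv.Perm (Fin n), (∀ τ : Equiv.Perm (Fin n),
        totalCompl p δ ML0 σ ≤ totalCompl p δ ML0 τ) →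
      totalCompl p δ ML0 πA ≤ 2 * totalCompl p δ ML0 σ := by
  intro σ _
  classical
  -- nonnegativity of completion times
  have hCnn : ∀ (τ : Equiv.Perm (Fin n)) (i : Fin n), 0 ≤ complTime p δ ML0 τ i := by
    intro τ i
    exact add_nonneg (Finset.sum_nonneg fun j _ => hp _) (le_max_left _ _)
  -- πA maps Iio k to Iio k
  have hπlt : ∀ j : Fin n, j < k → πA j < k := by
    intro j hj
    by_contra hge
    push_neg at hge
    have h1 : πA (πA j) = πA j := hfix (πA j) hge
    have h2 : πA j = j := πA.injective h1
    rw [h2] at hge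
    exact absurd hj (not_lt.mpr hge)
  -- image of Iic i under πA for k ≤ i
  have himg : ∀ i : Fin n, k ≤ i → (Finset.Iic i).image πA = Finset.Iic i := by
    intro i hi
    apply Finset.eq_of_subset_of_card_le
    · intro m hm
      obtain ⟨j, hj, rfl⟩ := Finset.mem_image.mp hm
      rw [Finset.mem_Iic] at hj ⊢
      rcases lt_or_ge j k with hjk | hjk
      · exact le_trans (le_of_lt (hπlt j hjk)) hi
      · rw [hfix j hjk]; exact hj
    · rw [Finset.card_image_of_injective _ πA.injective]
  have hsum_image : ∀ (f : Fin n → ℝ) (τ : Equiv.Perm (Fin n)) (s : Finset (Fin n)),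
      ∑ m ∈ s.image τ, f m = ∑ j ∈ s, f (τ j) := by
    intro f τ s
    rw [Finset.sum_image (fun a _ b _ hab => τ.injective hab)]
  -- ML0 < ∑_{j ≤ k} δ j
  have hDk : ML0 < ∑ j ∈ Finset.Iic k, δ j := by
    by_cases hk1 : (k : ℕ) + 1 < n
    · set k' : Fin n := ⟨(k : ℕ) + 1, hk1⟩ with hk'
      have hIic : Finset.Iio k' = Finset.Iic k := by
        ext j
        simp only [Finset.mem_Iio, Finset.mem_Iic, Fin.lt_def, Fin.le_def]
        exact Nat.lt_succ_iff
      by_contra hle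
      push_neg at hle
      have hle' := hkmax k' (by rwa [hIic])
      rw [Fin.le_def] at hle'
      have hv : ((k' : Fin n) : ℕ) = (k : ℕ) + 1 := rfl
      omega
    · have huniv : Finset.Iic k = Finset.univ := by
        ext j
        simp only [Finset.mem_Iic, Finset.mem_univ, iff_true, Fin.le_def]
        have := j.isLt
        have := k.isLt
        omega
      rw [huniv]
      exact htot
  have hDi : ∀ i : Fin n, k ≤ i → ML0 < ∑ j ∈ Finset.Iic i, δ j := by
    intro i hi
    refine lt_of_lt_of_le hDk ?_
    exact Finset.sum_le_sum_of_subset_of_nonneg (Finset.Iic_subset_Iic.mpr hi)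
      (fun m _ _ => hδ m)
  -- Part 2 : termwise bound for i ≥ k
  have hpart2 : ∀ i : Fin n, k ≤ i →
      complTime p δ ML0 πA i ≤ complTime p δ ML0 σ i := by
    intro i hi
    have hsp : ∑ j ∈ Finset.Iic i, p (πA j) = ∑ m ∈ Finset.Iic i, p m := by
      rw [← hsum_image p πA (Finset.Iic i), himg i hi]
    have hsδ : ∑ j ∈ Finset.Iic i, δ (πA j) = ∑ m ∈ Finset.Iic i, δ m := by
      rw [← hsum_image δ πA (Finset.Iic i), himg i hi]
    have hD := hDi i hi
    have hkey : ∑ m ∈ Finset.Iic i, (p m + δ m) ≤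
        ∑ j ∈ Finset.Iic i, (p (σ j) + δ (σ j)) := by
      have := auxSumLe (fun m => p m + δ m)
        (fun m => add_nonneg (hp m) (hδ m))
        (Finset.Iic i) ((Finset.Iic i).image σ)
        (by rw [Finset.card_image_of_injective _ σ.injective])
        (by
          intro a ha b hb hbA
          rw [Finset.mem_Iic] at ha
          have hib : i < b := by
            by_contra hc
            exact hbA (Finset.mem_Iic.mpr (not_lt.mp hc))
          exact hssf a b (le_trans ha (le_of_lt hib)))
      rwa [hsum_image (fun m => p m + δ m) σ (Finset.Iic i)] at this
    rw [Finset.sum_add_distrib, Finset.sum_add_distrib] at hkey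
    unfold complTime
    rw [hsp, hsδ, max_eq_right (by linarith)]
    have hmax : (∑ j ∈ Finset.Iic i, δ (σ j)) - ML0 ≤
        max 0 ((∑ j ∈ Finset.Iic i, δ (σ j)) - ML0) := le_max_right _ _
    linarith
  -- the shift map
  have hkn : (k : ℕ) < n := k.isLt
  set φ : Fin n → Fin n := fun i =>
    if h : (i : ℕ) + (n - (k : ℕ)) < n then ⟨(i : ℕ) + (n - (k : ℕ)), h⟩ else i with hφdef
  have hφval : ∀ i : Fin n, i < k → ((φ i : Fin n) : ℕ) = (i : ℕ) + (n - (k : ℕ)) := by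
    intro i hi
    rw [Fin.lt_def] at hi
    have hlt : (i : ℕ) + (n - (k : ℕ)) < n := by omega
    simp [hφdef, hlt]
  -- Part 1 : for i < k, C_i(πA) ≤ C_{φ i}(σ)
  have hpart1 : ∀ i : Fin n, i < k →
      complTime p δ ML0 πA i ≤ complTime p δ ML0 σ (φ i) := by
    intro i hi
    set A : Finset (Fin n) := (Finset.Iic i).image πA with hA
    have hAsub : A ⊆ Finset.Iio k := by
      intro m hm
      obtain ⟨j, hj, rfl⟩ := Finset.mem_image.mp hm
      rw [Finset.mem_Iic] at hj
      exact Finset.mem_Iio.mpr (hπlt j (lt_of_le_of_lt hj hi))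
    -- δ-part of πA vanishes
    have hδ0 : ∑ j ∈ Finset.Iic i, δ (πA j) ≤ ML0 := by
      rw [← hsum_image δ πA (Finset.Iic i)]
      refine le_trans ?_ hk
      exact Finset.sum_le_sum_of_subset_of_nonneg hAsub (fun m _ _ => hδ m)
    have hCA : complTime p δ ML0 πA i = ∑ m ∈ A, p m := by
      unfold complTime
      rw [max_eq_left (by linarith), add_zero, hA, hsum_image p πA (Finset.Iic i)]
    set B : Finset (Fin n) := (Finset.Iic (φ i)).image σ with hB
    set B₂ : Finset (Fin n) := B ∩ Finset.Iio k with hB₂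
    have hcardA : A.card = (i : ℕ) + 1 := by
      rw [hA, Finset.card_image_of_injective _ πA.injective, Fin.card_Iic]
    have hcardB : B.card = (i : ℕ) + (n - (k : ℕ)) + 1 := by
      rw [hB, Finset.card_image_of_injective _ σ.injective, Fin.card_Iic, hφval i hi]
    have hcardB₂ : A.card ≤ B₂.card := by
      have h1 : B₂.card + (B \ Finset.Iio k).card = B.card :=
        Finset.card_inter_add_card_sdiff B (Finset.Iio k)
      have h2 : (B \ Finset.Iio k).card ≤ n - (k : ℕ) := by
        have hsub : B \ Finset.Iio k ⊆ (Finset.Iio k)ᶜ := by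
          intro m hm
          rw [Finset.mem_compl]
          exact (Finset.mem_sdiff.mp hm).2
        refine le_trans (Finset.card_le_card hsub) ?_
        rw [Finset.card_compl, Fin.card_Iio, Fintype.card_fin]
      omega
    -- smallest elements comparison
    have hABle : ∑ m ∈ A, p m ≤ ∑ m ∈ B₂, p m := by
      refine auxSumLe p hp A B₂ hcardB₂ ?_
      intro a ha b hb hbA
      obtain ⟨j, hj, rfl⟩ := Finset.mem_image.mp ha
      rw [Finset.mem_Iic] at hj
      have hbk : b < k := Finset.mem_Iio.mp (Finset.mem_inter.mp hb).2
      set j' : Fin n := πA.symm b with hj'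
      have hbj' : πA j' = b := πA.apply_symm_apply b
      have hj'k : j' < k := by
        by_contra hc
        push_neg at hc
        have : πA j' = j' := hfix j' hc
        rw [this] at hbj'
        rw [hbj'] at hc
        exact absurd hbk (not_lt.mpr hc)
      have hj'i : ¬ j' ≤ i := by
        intro hc
        exact hbA (hbj' ▸ Finset.mem_image_of_mem πA (Finset.mem_Iic.mpr hc))
      have hjj' : j ≤ j' := le_trans hj (le_of_lt (lt_of_not_ge hj'i))
      calc p (πA j) ≤ p (πA j') := hsort j j' hjj' hj'k
        _ = p b := by rw [hbj']
    have hB₂B : ∑ m ∈ B₂, p m ≤ ∑ m ∈ B, p m :=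
      Finset.sum_le_sum_of_subset_of_nonneg Finset.inter_subset_left
        (fun m _ _ => hp m)
    have hBσ : ∑ m ∈ B, p m = ∑ j ∈ Finset.Iic (φ i), p (σ j) :=
      hsum_image p σ (Finset.Iic (φ i))
    calc complTime p δ ML0 πA i = ∑ m ∈ A, p m := hCA
      _ ≤ ∑ m ∈ B, p m := le_trans hABle hB₂B
      _ = ∑ j ∈ Finset.Iic (φ i), p (σ j) := hBσ
      _ ≤ complTime p δ ML0 σ (φ i) := le_add_of_nonneg_right (le_max_left _ _)
  -- assemble
  have hφinj : Set.InjOn φ (Finset.Iio k : Set (Fin n)) := by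
    intro a ha b hb hab
    simp only [Finset.coe_Iio, Set.mem_Iio] at ha hb
    have h1 := hφval a ha
    have h2 := hφval b hb
    have : (a : ℕ) = (b : ℕ) := by
      have := congrArg (fun x : Fin n => (x : ℕ)) hab
      omega
    exact Fin.ext this
  have hsplit : ∀ τ : Equiv.Perm (Fin n), totalCompl p δ ML0 τ =
      ∑ i ∈ Finset.Iio k, complTime p δ ML0 τ i +
      ∑ i ∈ (Finset.Iio k)ᶜ, complTime p δ ML0 τ i := by
    intro τ
    unfold totalCompl
    rw [Finset.sum_add_sum_compl]
  have hS1 : ∑ i ∈ Finset.Iio k, complTime p δ ML0 πA i ≤ totalCompl p δ ML0 σ := by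
    calc ∑ i ∈ Finset.Iio k, complTime p δ ML0 πA i
        ≤ ∑ i ∈ Finset.Iio k, complTime p δ ML0 σ (φ i) :=
          Finset.sum_le_sum fun i hi => hpart1 i (Finset.mem_Iio.mp hi)
      _ = ∑ i' ∈ (Finset.Iio k).image φ, complTime p δ ML0 σ i' :=
          (Finset.sum_image fun a ha b hb hab =>
            hφinj (by simpa using ha) (by simpa using hb) hab).symm
      _ ≤ ∑ i' : Fin n, complTime p δ ML0 σ i' :=
          Finset.sum_le_sum_of_subset_of_nonneg (Finset.subset_univ _)
            (fun m _ _ => hCnn σ m)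
      _ = totalCompl p δ ML0 σ := rfl
  have hS2 : ∑ i ∈ (Finset.Iio k)ᶜ, complTime p δ ML0 πA i ≤ totalCompl p δ ML0 σ := by
    calc ∑ i ∈ (Finset.Iio k)ᶜ, complTime p δ ML0 πA i
        ≤ ∑ i ∈ (Finset.Iio k)ᶜ, complTime p δ ML0 σ i := by
          refine Finset.sum_le_sum fun i hi => ?_
          rw [Finset.mem_compl, Finset.mem_Iio, not_lt] at hi
          exact hpart2 i hi
      _ ≤ ∑ i : Fin n, complTime p δ ML0 σ i :=
          Finset.sum_le_sum_of_subset_of_nonneg (Finset.subset_univ _)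
            (fun m _ _ => hCnn σ m)
      _ = totalCompl p δ ML0 σ := rfl
  rw [hsplit πA]
  linarith
end

section
/- Assume the jobs are indexed in SSF order p_1 + δ_1 ≤ p_2 + δ_2 ≤ … ≤ p_n + δ_n and Σ_{i=1}^{n} δ_i > ML0. Let k be the maximum index such that Σ_{i=1}^{k−1} δ_i ≤ ML0, and let π_A be the permutation that schedules jobs 1,…,k−1 first, re-sorted in nondecreasing order of processing time, followed by J_k, J_{k+1}, …, J_n. Then for every permutation σ of {1,…,n} and each index i with k ≤ i ≤ n, the completion times satisfy C_i(π_A) ≤ C_i(σ); consequently Σ_{i=k}^{n} C_i(π_A) ≤ min_σ F(σ). -/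
lemma le_apply_of_strictMono {m n : ℕ} {g : Fin m → Fin n} (hg : StrictMono g)
    (j : Fin m) : (j : ℕ) ≤ (g j : ℕ) := by
  obtain ⟨v, hv⟩ := j
  induction v with
  | zero => exact Nat.zero_le _
  | succ v ih =>
    have hv' : v < m := Nat.lt_of_succ_lt hv
    have h1 : (g ⟨v, hv'⟩ : ℕ) < (g ⟨v + 1, hv⟩ : ℕ) := hg (by simp [Fin.lt_def])
    have h2 := ih hv'
    simp only [Fin.val_mk] at h2 ⊢
    omega

/-- Sum of a monotone function over an initial segment is minimal among
sets of the same cardinality. -/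
lemma initial_sum_min {n : ℕ} (f : Fin n → ℝ)
    (hmono : ∀ a b : Fin n, a ≤ b → f a ≤ f b) (i : Fin n) (S : Finset (Fin n))
    (hcard : S.card = (i : ℕ) + 1) :
    ∑ j ∈ Finset.Iic i, f j ≤ ∑ j ∈ S, f j := by
  have hIc : (Finset.Iic i).card = (i : ℕ) + 1 := Fin.card_Iic i
  set m := (i : ℕ) + 1 with hm
  let e1 := (Finset.Iic i).orderEmbOfFin hIc
  let e2 := S.orderEmbOfFin hcard
  have himg1 : Finset.image (⇑e1) Finset.univ = Finset.Iic i := by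
    apply Finset.coe_injective
    simp [e1]
  have himg2 : Finset.image (⇑e2) Finset.univ = S := by
    apply Finset.coe_injective
    simp [e2]
  have hsum1 : ∑ j ∈ Finset.Iic i, f j = ∑ j : Fin m, f (e1 j) := by
    rw [← himg1, Finset.sum_image (fun a _ b _ h => e1.injective h)]
  have hsum2 : ∑ j ∈ S, f j = ∑ j : Fin m, f (e2 j) := by
    rw [← himg2, Finset.sum_image (fun a _ b _ h => e2.injective h)]
  rw [hsum1, hsum2]
  apply Finset.sum_le_sum
  intro j _
  apply hmono
  have h1 : (e1 j : ℕ) = (j : ℕ) := by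
    have hg : StrictMono (fun j : Fin m => (⟨(j : ℕ), by omega⟩ : Fin n)) := by
      intro a b hab
      simp only [Fin.mk_lt_mk]
      exact hab
    have hmem : ∀ j : Fin m, (⟨(j : ℕ), by omega⟩ : Fin n) ∈ Finset.Iic i := by
      intro j
      simp only [Finset.mem_Iic, Fin.le_def, Fin.val_mk]
      omega
    have := Finset.orderEmbOfFin_unique hIc hmem hg
    have := congrFun this j
    simp only [e1, ← this]
  have h2 : (j : ℕ) ≤ (e2 j : ℕ) := le_apply_of_strictMono e2.strictMono j
  rw [Fin.le_def, h1]
  exact h2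

/-- for the schedule `π_A` produced by algorithm `A₁` (jobs indexed in
SSF order, `k` the (0-based) separation index, jobs before `k` re-sorted in SPT order),
for every schedule `σ` and every position `i ≥ k` we have `C_i(π_A) ≤ C_i(σ)`;
consequently `Σ_{i ≥ k} C_i(π_A) ≤ min_σ F(σ)`. -/
theorem stmt14 (n : ℕ) (p δ : Fin n → ℝ) (ML0 : ℝ)
    (hp : ∀ i, 0 ≤ p i) (hδ : ∀ i, 0 ≤ δ i) (hML0 : 0 ≤ ML0)
    (hssf : ∀ i j : Fin n, i ≤ j → p i + δ i ≤ p j + δ j)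
    (htot : ML0 < ∑ i, δ i)
    (k : Fin n)
    (hk : ∑ i ∈ Finset.Iio k, δ i ≤ ML0)
    (hkmax : ∀ k' : Fin n, (∑ i ∈ Finset.Iio k', δ i ≤ ML0) → k' ≤ k)
    (πA : Equiv.Perm (Fin n))
    (hfix : ∀ i : Fin n, k ≤ i → πA i = i)
    (hsort : ∀ i j : Fin n, i ≤ j → j < k → p (πA i) ≤ p (πA j))
    :
    (∀ (σ : Equiv.Perm (Fin n)) (i : Fin n), k ≤ i →
      complTime p δ ML0 πA i ≤ complTime p δ ML0 σ i) ∧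
    (∀ σ : Equiv.Perm (Fin n),
      ∑ i ∈ Finset.Ici k, complTime p δ ML0 πA i ≤ totalCompl p δ ML0 σ) := by
  classical
  -- πA maps Iio k into Iio k, hence preserves sums over Iic i for i ≥ k
  have hlt : ∀ j : Fin n, j < k → πA j < k := by
    intro j hj
    by_contra h
    push_neg at h
    have := hfix (πA j) h
    have := πA.injective this
    rw [this] at h
    exact absurd hj (not_lt.mpr h)
  have hltsymm : ∀ j : Fin n, j < k → πA.symm j < k := by
    intro j hj
    by_contra h
    push_neg at h
    have h1 : πA (πA.symm j) = πA.symm j := hfix _ h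
    rw [Equiv.apply_symm_apply] at h1
    rw [← h1] at h
    exact absurd hj (not_lt.mpr h)
  have hmapsum : ∀ (f : Fin n → ℝ) (i : Fin n), k ≤ i →
      ∑ j ∈ Finset.Iic i, f (πA j) = ∑ j ∈ Finset.Iic i, f j := by
    intro f i hi
    apply Finset.sum_nbij' (i := fun j => πA j) (j := fun j => πA.symm j)
    · intro a ha
      simp only [Finset.mem_Iic] at ha ⊢
      rcases lt_or_ge a k with h | h
      · exact le_trans (le_of_lt (hlt a h)) hi
      · rw [hfix a h]; exact ha
    · intro a ha
      simp only [Finset.mem_Iic] at ha ⊢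
      rcases lt_or_ge a k with h | h
      · exact le_trans (le_of_lt (hltsymm a h)) hi
      · have : πA a = a := hfix a h
        rw [← this, Equiv.symm_apply_apply]; exact ha
    · intro a _; exact Equiv.symm_apply_apply _ _
    · intro a _; exact Equiv.apply_symm_apply _ _
    · intro a _; rfl
  -- for i ≥ k, the accumulated deterioration exceeds ML0
  have hδsum : ∀ i : Fin n, k ≤ i → ML0 < ∑ j ∈ Finset.Iic i, δ j := by
    intro i hi
    by_contra h
    push_neg at h
    rcases lt_or_ge ((i : ℕ) + 1) n with hn | hn
    · set k' : Fin n := ⟨(i : ℕ) + 1, hn⟩ with hk'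
      have hIioIic : Finset.Iio k' = Finset.Iic i := by
        ext j
        simp only [Finset.mem_Iio, Finset.mem_Iic, Fin.lt_def, Fin.le_def, hk', Fin.val_mk]
        omega
      have hle := hkmax k' (by rw [hIioIic]; exact h)
      rw [Fin.le_def] at hle hi
      simp only [hk', Fin.val_mk] at hle
      omega
    · have huniv : Finset.Iic i = Finset.univ := by
        ext j
        simp only [Finset.mem_Iic, Finset.mem_univ, iff_true, Fin.le_def]
        have := j.isLt
        omega
      rw [huniv] at h
      exact absurd htot (not_lt.mpr h)
  have hpart1 : ∀ (σ : Equiv.Perm (Fin n)) (i : Fin n), k ≤ i →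
      complTime p δ ML0 πA i ≤ complTime p δ ML0 σ i := by
    intro σ i hi
    have hmonof : ∀ a b : Fin n, a ≤ b → p a + δ a ≤ p b + δ b := hssf
    have hA : complTime p δ ML0 πA i = (∑ j ∈ Finset.Iic i, (p j + δ j)) - ML0 := by
      unfold complTime
      rw [hmapsum p i hi, hmapsum δ i hi,
        max_eq_right (le_of_lt (sub_pos.mpr (hδsum i hi))), Finset.sum_add_distrib]
      ring
    have hS : complTime p δ ML0 σ i ≥ (∑ j ∈ Finset.Iic i, (p (σ j) + δ (σ j))) - ML0 := by
      unfold complTime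
      rw [Finset.sum_add_distrib]
      have := le_max_right (0 : ℝ) ((∑ j ∈ Finset.Iic i, δ (σ j)) - ML0)
      linarith
    rw [hA]
    refine le_trans (sub_le_sub_right ?_ ML0) hS
    have himg : ∑ j ∈ Finset.Iic i, (p (σ j) + δ (σ j))
        = ∑ j ∈ (Finset.Iic i).image σ, (p j + δ j) :=
      (Finset.sum_image (f := fun j => p j + δ j) (g := ⇑σ) (s := Finset.Iic i)
        (fun a _ b _ h => σ.injective h)).symm
    rw [himg]
    apply initial_sum_min _ hmonof i
    rw [Finset.card_image_of_injective _ σ.injective, Fin.card_Iic]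
  refine ⟨hpart1, fun σ => ?_⟩
  have h1 : ∑ i ∈ Finset.Ici k, complTime p δ ML0 πA i
      ≤ ∑ i ∈ Finset.Ici k, complTime p δ ML0 σ i := by
    apply Finset.sum_le_sum
    intro i hi
    exact hpart1 σ i (Finset.mem_Ici.mp hi)
  refine le_trans h1 ?_
  unfold totalCompl
  apply Finset.sum_le_sum_of_subset_of_nonneg (Finset.subset_univ _)
  intro i _ _
  unfold complTime
  have h2 : 0 ≤ ∑ j ∈ Finset.Iic i, p (σ j) := Finset.sum_nonneg fun j _ => hp _
  have h3 := le_max_left (0 : ℝ) ((∑ j ∈ Finset.Iic i, δ (σ j)) - ML0)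
  linarith
end

section
/- The approximation ratio 2 of algorithm A1 is tight: for every real (or integer) λ > 2, consider the two-job instance with J_1 = (p_1, δ_1) = (1, λ), J_2 = (p_2, δ_2) = (λ−1, 1), and ML0 = ML^max = λ. The algorithm's schedule, which processes J_2 first and then J_1, has total completion time F = 2λ, while the optimal schedule processes J_1 first and then J_2 and has total completion time F = λ + 2; hence the ratio 2λ/(λ+2) tends to 2 as λ → ∞. -/
lemma tc2 (p δ : Fin 2 → ℝ) (M : ℝ) (π : Equiv.Perm (Fin 2)) :
    totalCompl p δ M π = (p (π 0) + max 0 (δ (π 0) - M)) +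
      ((p (π 0) + p (π 1)) + max 0 (δ (π 0) + δ (π 1) - M)) := by
  have h0 : Finset.Iic (0:Fin 2) = {0} := rfl
  have h1 : Finset.Iic (1:Fin 2) = {0,1} := rfl
  simp [totalCompl, complTime, Fin.sum_univ_two, h0, h1, Finset.sum_insert, Finset.sum_singleton]

/-- tightness of the ratio 2 of algorithm `A₁`. For every `λ > 2`,
on the two-job instance `J_1 = (1, λ)`, `J_2 = (λ - 1, 1)` with `ML0 = λ`:
the algorithm's schedule (`J_2` first, then `J_1`, i.e. the swap permutation) has total
completion time `2λ`; the schedule processing `J_1` first then `J_2` (the identity) has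
total completion time `λ + 2` and is optimal; and the ratio `2λ/(λ+2)` tends to `2` as
`λ → ∞`. -/
theorem stmt16 :
    (∀ lam : ℝ, 2 < lam →
      totalCompl (n := 2) ![1, lam - 1] ![lam, 1] lam (Equiv.swap 0 1) = 2 * lam ∧
      totalCompl (n := 2) ![1, lam - 1] ![lam, 1] lam (Equiv.refl (Fin 2)) = lam + 2 ∧
      (∀ σ : Equiv.Perm (Fin 2),
        totalCompl (n := 2) ![1, lam - 1] ![lam, 1] lam (Equiv.refl (Fin 2)) ≤
          totalCompl (n := 2) ![1, lam - 1] ![lam, 1] lam σ)) ∧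
    Filter.Tendsto (fun lam : ℝ => 2 * lam / (lam + 2)) Filter.atTop (nhds 2) := by
  constructor
  · intro lam hl
    have hm1 : max (0:ℝ) (1 - lam) = 0 := max_eq_left (by linarith)
    have hm2 : max (0:ℝ) (lam + 1 - lam) = 1 := by
      rw [max_eq_right (by linarith)]; ring
    have hm3 : max (0:ℝ) (lam - lam) = 0 := by simp
    have hm4 : max (0:ℝ) (1 + lam - lam) = 1 := by
      rw [max_eq_right (by linarith)]; ring
    have hswap : totalCompl (n := 2) ![1, lam - 1] ![lam, 1] lam (Equiv.swap 0 1) = 2 * lam := by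
      rw [tc2]
      simp only [Equiv.swap_apply_left, Equiv.swap_apply_right, Matrix.cons_val_zero,
        Matrix.cons_val_one, Matrix.head_cons]
      rw [hm1, hm4]; ring
    have hid : totalCompl (n := 2) ![1, lam - 1] ![lam, 1] lam (Equiv.refl (Fin 2)) = lam + 2 := by
      rw [tc2]
      simp only [Equiv.refl_apply, Matrix.cons_val_zero, Matrix.cons_val_one, Matrix.head_cons]
      rw [hm3, hm2]; ring
    refine ⟨hswap, hid, ?_⟩
    intro σ
    have h01 : σ 0 = 0 ∨ σ 0 = 1 := by omega
    rcases h01 with h | h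
    · have h1 : σ 1 = 1 := by
        have := σ.injective.ne (show (1:Fin 2) ≠ 0 by decide)
        rw [h] at this; omega
      have : totalCompl (n := 2) ![1, lam - 1] ![lam, 1] lam σ = lam + 2 := by
        rw [tc2, h, h1]
        simp only [Matrix.cons_val_zero, Matrix.cons_val_one, Matrix.head_cons]
        rw [hm3, hm2]; ring
      rw [hid, this]
    · have h1 : σ 1 = 0 := by
        have := σ.injective.ne (show (1:Fin 2) ≠ 0 by decide)
        rw [h] at this; omega
      have : totalCompl (n := 2) ![1, lam - 1] ![lam, 1] lam σ = 2 * lam := by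
        rw [tc2, h, h1]
        simp only [Matrix.cons_val_zero, Matrix.cons_val_one, Matrix.head_cons]
        rw [hm1, hm4]; ring
      rw [hid, this]; linarith
  · have h1 : Filter.Tendsto (fun lam : ℝ => 2 - 4 / (lam + 2)) Filter.atTop (nhds 2) := by
      have : Filter.Tendsto (fun lam : ℝ => 4 / (lam + 2)) Filter.atTop (nhds 0) := by
        apply Filter.Tendsto.div_atTop tendsto_const_nhds
        exact Filter.tendsto_atTop_add_const_right _ 2 Filter.tendsto_id
      simpa using tendsto_const_nhds.sub this
    apply h1.congr'
    filter_upwards [Filter.eventually_gt_atTop (0:ℝ)] with lam hlam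
    have : lam + 2 ≠ 0 := by linarith
    field_simp
    ring
end
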